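/- arXiv:2306.15250 — 3 statements merged into one kernel-verified Lean document; each statement's English description precedes it below -/
import Mathlib

section
/- Let m ∈ ℤ_{≥0} and let V be an F_{[m]}-module on which z acts as a scalar λ ∈ ℂ*. Then V is completely reducible (a direct sum of simple F_{[m]}-modules). -/
noncomputable section

/-- A module over the finite-dimensional Fermion algebra `F_{[m]} = ⊕_{i=-m}^m ℂψ_i ⊕ ℂz`:
a `ℤ/2`-graded complex vector space with operators `ψ i` (odd, `|i| ≤ m`) and `z` (even,
central) satisfying `[ψ i, ψ j] = δ_{i,-j} z` (super-bracket).  Operators `ψ i` with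
`|i| > m` are, by convention, zero. -/
structure FmMod (m : ℕ) : Type 1 where
  carrier : Type
  [isAddCommGroup : AddCommGroup carrier]
  [isModule : Module ℂ carrier]
  ψ : ℤ → carrier →ₗ[ℂ] carrier
  z : carrier →ₗ[ℂ] carrier
  even : Submodule ℂ carrier
  odd : Submodule ℂ carrier
  isCompl_even_odd : IsCompl even odd
  ψ_maps_even : ∀ (i : ℤ), ∀ v ∈ even, ψ i v ∈ odd
  ψ_maps_odd : ∀ (i : ℤ), ∀ v ∈ odd, ψ i v ∈ even
  z_maps_even : ∀ v ∈ even, z v ∈ even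
  z_maps_odd : ∀ v ∈ odd, z v ∈ odd
  ψ_out_of_range : ∀ i : ℤ, m < i.natAbs → ψ i = 0
  anticomm : ∀ i j : ℤ, i.natAbs ≤ m → j.natAbs ≤ m →
    ψ i ∘ₗ ψ j + ψ j ∘ₗ ψ i = if i + j = 0 then z else 0
  z_comm_ψ : ∀ i : ℤ, z ∘ₗ ψ i = ψ i ∘ₗ z

attribute [instance] FmMod.isAddCommGroup FmMod.isModule

/-- A submodule invariant under the action of `F_{[m]}`. -/
def FmMod.Invariant {m : ℕ} (ρ : FmMod m) (W : Submodule ℂ ρ.carrier) : Prop :=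
  (∀ (i : ℤ), ∀ v ∈ W, ρ.ψ i v ∈ W) ∧ (∀ v ∈ W, ρ.z v ∈ W)

/-- A `ℤ/2`-graded submodule. -/
def FmMod.Graded {m : ℕ} (ρ : FmMod m) (W : Submodule ℂ ρ.carrier) : Prop :=
  W = (W ⊓ ρ.even) ⊔ (W ⊓ ρ.odd)

/-- A simple `F_{[m]}`-module: nonzero, and the only graded invariant submodules are
`⊥` and `⊤`. -/
def FmMod.IsSimple {m : ℕ} (ρ : FmMod m) : Prop :=
  (∃ v : ρ.carrier, v ≠ 0) ∧
    ∀ W : Submodule ℂ ρ.carrier, ρ.Invariant W → ρ.Graded W → W = ⊥ ∨ W = ⊤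

/-- An isomorphism of `F_{[m]}`-modules. -/
structure FmIso {m : ℕ} (ρ σ : FmMod m) where
  e : ρ.carrier ≃ₗ[ℂ] σ.carrier
  map_even : ∀ v ∈ ρ.even, e v ∈ σ.even
  map_odd : ∀ v ∈ ρ.odd, e v ∈ σ.odd
  map_ψ : ∀ (i : ℤ) (v : ρ.carrier), e (ρ.ψ i v) = σ.ψ i (e v)
  map_z : ∀ v : ρ.carrier, e (ρ.z v) = σ.z (e v)

/-- A simple graded `F_{[m]}`-invariant submodule. -/
def FmMod.IsSimpleSubmodule {m : ℕ} (ρ : FmMod m) (W : Submodule ℂ ρ.carrier) : Prop :=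
  ρ.Invariant W ∧ ρ.Graded W ∧ W ≠ ⊥ ∧
    ∀ U ≤ W, ρ.Invariant U → ρ.Graded U → U = ⊥ ∨ U = W

/-- Complete reducibility: the module is a direct sum of simple submodules. -/
def FmMod.IsCompletelyReducible {m : ℕ} (ρ : FmMod m) : Prop :=
  ∃ (ι : Type) (W : ι → Submodule ℂ ρ.carrier),
    (∀ i, ρ.IsSimpleSubmodule (W i)) ∧ iSupIndep W ∧ (⨆ i, W i) = ⊤



noncomputable section MaschkeAux

open Module
open scoped symmDiff

variable {V : Type} [AddCommGroup V] [Module ℂ V] {n : ℕ}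

namespace FermAux

variable (e : Fin n → Module.End ℂ V)

/-- `F S j` is `e j` if `j ∈ S` else `1`. -/
def F (S : Finset (Fin n)) : Fin n → Module.End ℂ V := fun j => if j ∈ S then e j else 1

/-- ordered product of the generators in `S`. -/
def u (S : Finset (Fin n)) : Module.End ℂ V := ((List.finRange n).map (F e S)).prod

lemma prodF_congr (l : List (Fin n)) (S S' : Finset (Fin n))
    (h : ∀ j ∈ l, (j ∈ S ↔ j ∈ S')) :
    (l.map (F e S)).prod = (l.map (F e S')).prod := by
  induction l with
  | nil => rfl
  | cons a t ih =>
    simp only [List.map_cons, List.prod_cons]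
    rw [ih (fun j hj => h j (List.mem_cons_of_mem _ hj))]
    congr 1
    have := h a (List.mem_cons_self)
    unfold F
    by_cases ha : a ∈ S
    · rw [if_pos ha, if_pos (this.mp ha)]
    · rw [if_neg ha, if_neg (fun hc => ha (this.mpr hc))]

lemma u_empty : u e (∅ : Finset (Fin n)) = 1 := by
  unfold u
  refine List.prod_eq_one (fun x hx => ?_)
  simp only [List.mem_map] at hx
  obtain ⟨j, -, rfl⟩ := hx
  simp [F]

section rel

variable (he2 : ∀ k, e k * e k = 1)
    (hanti : ∀ k l, k ≠ l → e k * e l = -(e l * e k))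

include he2 hanti

set_option linter.unusedSectionVars false

/-- swap lemma -/
lemma swap_list (S : Finset (Fin n)) (k : Fin n) (l : List (Fin n)) :
    ∃ q : ℂ, q * q = 1 ∧ e k * (l.map (F e S)).prod = q • ((l.map (F e S)).prod * e k) := by
  induction l with
  | nil => exact ⟨1, one_mul 1, by simp⟩
  | cons a t ih =>
    obtain ⟨q, hq, hqe⟩ := ih
    simp only [List.map_cons, List.prod_cons]
    by_cases ha : a ∈ S
    · by_cases hak : a = k
      · subst hak
        refine ⟨q, hq, ?_⟩
        rw [show F e S a = e a from if_pos ha]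
        calc e a * (e a * (t.map (F e S)).prod)
            = e a * (q • ((t.map (F e S)).prod * e a)) := by rw [← hqe]
          _ = q • ((e a * (t.map (F e S)).prod) * e a) := by
              rw [mul_smul_comm, mul_assoc]
      · refine ⟨-q, by rw [neg_mul_neg, hq], ?_⟩
        rw [show F e S a = e a from if_pos ha]
        calc e k * (e a * (t.map (F e S)).prod)
            = (e k * e a) * (t.map (F e S)).prod := by rw [mul_assoc]
          _ = (-(e a * e k)) * (t.map (F e S)).prod := by
              rw [hanti k a (fun h => hak h.symm)]
          _ = -(e a * (e k * (t.map (F e S)).prod)) := by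
              rw [neg_mul, mul_assoc]
          _ = -(e a * (q • ((t.map (F e S)).prod * e k))) := by rw [hqe]
          _ = (-q) • (e a * (t.map (F e S)).prod * e k) := by
              rw [mul_smul_comm, neg_smul, mul_assoc]
    · refine ⟨q, hq, ?_⟩
      rw [show F e S a = 1 from if_neg ha]
      simpa using hqe

/-- moving `e k` into an ordered product toggles membership of `k`, up to a
sign. -/
lemma mul_list (S : Finset (Fin n)) (k : Fin n) (l : List (Fin n)) (hnd : l.Nodup)
    (hkl : k ∈ l) :
    ∃ c : ℂ, c * c = 1 ∧
      e k * (l.map (F e S)).prod = c • (l.map (F e (S ∆ {k}))).prod := by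
  induction l with
  | nil => simp at hkl
  | cons a t ih =>
    have hndt : t.Nodup := (List.nodup_cons.mp hnd).2
    simp only [List.map_cons, List.prod_cons]
    by_cases hak : a = k
    · subst hak
      have hat : a ∉ t := (List.nodup_cons.mp hnd).1
      have hcongr : (t.map (F e S)).prod = (t.map (F e (S ∆ {a}))).prod := by
        refine prodF_congr e t _ _ (fun j hj => ?_)
        have : j ≠ a := fun h => hat (h ▸ hj)
        simp only [Finset.mem_symmDiff, Finset.mem_singleton]
        tauto
      by_cases haS : a ∈ S
      · refine ⟨1, one_mul 1, ?_⟩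
        rw [show F e S a = e a from if_pos haS,
          show F e (S ∆ {a}) a = 1 from if_neg (by simp [Finset.mem_symmDiff, haS]),
          ← mul_assoc, he2, one_mul, one_smul, one_mul, hcongr]
      · refine ⟨1, one_mul 1, ?_⟩
        rw [show F e S a = 1 from if_neg haS,
          show F e (S ∆ {a}) a = e a from if_pos (by simp [Finset.mem_symmDiff, haS]),
          one_mul, one_smul, hcongr]
    · have hkt : k ∈ t := by
        rcases List.mem_cons.mp hkl with h | h
        · exact absurd h.symm hak
        · exact h
      obtain ⟨c, hc, hce⟩ := ih hndt hkt
      have hFa : F e S a = F e (S ∆ {k}) a := by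
        have : (a ∈ S) ↔ (a ∈ S ∆ {k}) := by
          simp only [Finset.mem_symmDiff, Finset.mem_singleton]
          tauto
        unfold F
        exact if_congr this rfl rfl
      by_cases haS : a ∈ S
      · refine ⟨-c, by rw [neg_mul_neg, hc], ?_⟩
        rw [show F e S a = e a from if_pos haS] at hFa ⊢
        calc e k * (e a * (t.map (F e S)).prod)
            = (e k * e a) * (t.map (F e S)).prod := by rw [mul_assoc]
          _ = -(e a * (e k * (t.map (F e S)).prod)) := by
              rw [hanti k a (fun h => hak h.symm), neg_mul, mul_assoc]
          _ = -(e a * (c • (t.map (F e (S ∆ {k}))).prod)) := by rw [hce]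
          _ = (-c) • (F e (S ∆ {k}) a * (t.map (F e (S ∆ {k}))).prod) := by
              rw [← hFa, mul_smul_comm, neg_smul]
      · refine ⟨c, hc, ?_⟩
        rw [show F e S a = 1 from if_neg haS] at hFa ⊢
        rw [one_mul, ← hFa, one_mul, hce]

lemma mul_u (S : Finset (Fin n)) (k : Fin n) :
    ∃ c : ℂ, c * c = 1 ∧ e k * u e S = c • u e (S ∆ {k}) :=
  mul_list e he2 hanti S k _ (List.nodup_finRange n) (List.mem_finRange k)

lemma swap_u (S : Finset (Fin n)) (k : Fin n) :
    ∃ q : ℂ, q * q = 1 ∧ e k * u e S = q • (u e S * e k) :=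
  swap_list e he2 hanti S k _

lemma u_sq (S : Finset (Fin n)) : ∃ d : ℂ, d * d = 1 ∧ u e S * u e S = d • 1 := by
  induction S using Finset.induction_on with
  | empty => exact ⟨1, one_mul 1, by rw [u_empty]; simp⟩
  | @insert a S haS ih =>
    obtain ⟨d, hd, hdd⟩ := ih
    obtain ⟨c, hc, hce⟩ := mul_u e he2 hanti S a
    obtain ⟨q, hq, hqe⟩ := swap_u e he2 hanti S a
    have hc0 : c ≠ 0 := fun h => by simp [h] at hc
    have hq0 : q ≠ 0 := fun h => by simp [h] at hq
    have hSins : S ∆ {a} = insert a S := by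
      ext j
      simp only [Finset.mem_symmDiff, Finset.mem_singleton, Finset.mem_insert]
      by_cases hja : j = a
      · subst hja; simp [haS]
      · tauto
    rw [hSins] at hce
    have husa : u e S * e a = q⁻¹ • (e a * u e S) := by
      rw [hqe, smul_smul, inv_mul_cancel₀ hq0, one_smul]
    have huins : u e (insert a S) = c⁻¹ • (e a * u e S) := by
      rw [hce, smul_smul, inv_mul_cancel₀ hc0, one_smul]
    refine ⟨q * d, by
      have : q * d * (q * d) = (q * q) * (d * d) := by ring
      rw [this, hq, hd, one_mul], ?_⟩
    have hmid : (e a * u e S) * (e a * u e S) = (q⁻¹ * d) • 1 := by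
      calc (e a * u e S) * (e a * u e S)
          = e a * ((u e S * e a) * u e S) := by rw [mul_assoc, mul_assoc]
        _ = e a * ((q⁻¹ • (e a * u e S)) * u e S) := by rw [husa]
        _ = q⁻¹ • (e a * (e a * (u e S * u e S))) := by
            rw [smul_mul_assoc, mul_smul_comm, mul_assoc]
        _ = q⁻¹ • ((e a * e a) * (u e S * u e S)) := by rw [mul_assoc]
        _ = q⁻¹ • (u e S * u e S) := by rw [he2, one_mul]
        _ = (q⁻¹ * d) • 1 := by rw [hdd, smul_smul]
    rw [huins, smul_mul_assoc, mul_smul_comm, smul_smul, hmid, smul_smul]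
    congr 1
    have hcinv : c⁻¹ = c := inv_eq_of_mul_eq_one_right hc
    have hqinv : q⁻¹ = q := inv_eq_of_mul_eq_one_right hq
    rw [hcinv, hqinv]
    calc c * c * (q * d) = (c * c) * (q * d) := by ring
      _ = q * d := by rw [hc, one_mul]

end rel

end FermAux

end MaschkeAux

noncomputable section MaschkeAux2

open Module
open scoped symmDiff

namespace FermAux

variable {V : Type} [AddCommGroup V] [Module ℂ V] {n : ℕ}
variable (e : Fin n → Module.End ℂ V)

set_option linter.unusedSectionVars false

lemma prod_mem (S : Finset (Fin n)) (W : Submodule ℂ V)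
    (hW : ∀ k, ∀ v ∈ W, e k v ∈ W) (l : List (Fin n)) :
    ∀ v ∈ W, ((l.map (F e S)).prod) v ∈ W := by
  induction l with
  | nil => intro v hv; simpa using hv
  | cons a t ih =>
    intro v hv
    simp only [List.map_cons, List.prod_cons]
    rw [Module.End.mul_apply]
    by_cases ha : a ∈ S
    · rw [show F e S a = e a from if_pos ha]
      exact hW a _ (ih v hv)
    · rw [show F e S a = 1 from if_neg ha]
      simpa using ih v hv

lemma u_mem (S : Finset (Fin n)) (W : Submodule ℂ V)
    (hW : ∀ k, ∀ v ∈ W, e k v ∈ W) (v : V) (hv : v ∈ W) : u e S v ∈ W :=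
  prod_mem e S W hW _ v hv

lemma smul_cancel [Nontrivial V] {x y : ℂ} {f : Module.End ℂ V} (hf : f ≠ 0)
    (h : x • f = y • f) : x = y := by
  by_contra hxy
  apply hf
  have h2 : (x - y) • f = 0 := by rw [sub_smul, h, sub_self]
  have hxy' : x - y ≠ 0 := sub_ne_zero.mpr hxy
  calc f = (x - y)⁻¹ • ((x - y) • f) := by
        rw [smul_smul, inv_mul_cancel₀ hxy', one_smul]
    _ = 0 := by rw [h2, smul_zero]

lemma one_ne_zero_end [Nontrivial V] : (1 : Module.End ℂ V) ≠ 0 := by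
  obtain ⟨v, hv⟩ := exists_ne (0 : V)
  intro h
  apply hv
  calc v = (1 : Module.End ℂ V) v := rfl
    _ = (0 : Module.End ℂ V) v := by rw [h]
    _ = 0 := rfl

variable (he2 : ∀ k, e k * e k = 1)
    (hanti : ∀ k l, k ≠ l → e k * e l = -(e l * e k))

include he2 hanti in
lemma u_ne_zero [Nontrivial V] (S : Finset (Fin n)) : u e S ≠ 0 := by
  obtain ⟨d, hd, hdd⟩ := u_sq e he2 hanti S
  intro h
  rw [h, zero_mul] at hdd
  have h0 : (0:ℂ) • (1 : Module.End ℂ V) = d • 1 := by rw [zero_smul, hdd]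
  have := smul_cancel one_ne_zero_end h0
  rw [← this] at hd
  simpa using hd

set_option maxHeartbeats 2000000 in
include he2 hanti in
theorem exists_equivariant_proj [Nontrivial V] (W : Submodule ℂ V)
    (hW : ∀ k, ∀ v ∈ W, e k v ∈ W) :
    ∃ T : Module.End ℂ V, (∀ k, e k * T = T * e k) ∧ (∀ v, T v ∈ W) ∧ ∀ w ∈ W, T w = w := by
  obtain ⟨C, hC⟩ := Submodule.exists_isCompl W
  set π : Module.End ℂ V := W.subtype ∘ₗ W.projectionOnto C hC with hπdef
  have hπW : ∀ v, π v ∈ W := fun v => SetLike.coe_mem _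
  have hπid : ∀ w ∈ W, π w = w := by
    intro w hw
    show W.subtype (W.projectionOnto C hC w) = w
    rw [show (w : V) = ((⟨w, hw⟩ : W) : V) from rfl,
      Submodule.projectionOnto_apply_left hC ⟨w, hw⟩]
    rfl
  choose c hc2 hce using mul_u e he2 hanti
  choose q hq2 hqe using swap_u e he2 hanti
  choose d hd2 hdd using u_sq e he2 hanti
  have hone : (1 : Module.End ℂ V) ≠ 0 := one_ne_zero_end
  have hu0 : ∀ S, u e S ≠ 0 := u_ne_zero e he2 hanti
  have hd0 : ∀ S, d S ≠ 0 := fun S h => by simpa [h] using hd2 S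
  set g : Finset (Fin n) → Module.End ℂ V :=
    fun S => (d S)⁻¹ • (u e S * π * u e S) with hgdef
  have husk : ∀ (S : Finset (Fin n)) (k : Fin n),
      u e S * e k = q S k • (e k * u e S) := by
    intro S k
    calc u e S * e k = (q S k * q S k) • (u e S * e k) := by rw [hq2 S k, one_smul]
      _ = q S k • (q S k • (u e S * e k)) := by rw [smul_smul]
      _ = q S k • (e k * u e S) := by rw [← hqe S k]
  have hgcomm : ∀ (k : Fin n) (S : Finset (Fin n)), e k * g S = g (S ∆ {k}) * e k := by
    intro k S
    set S' := S ∆ {k} with hS'def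
    have hSS : S' ∆ {k} = S := symmDiff_symmDiff_cancel_right {k} S
    have hce1 : e k * u e S = c S k • u e S' := hce S k
    have hce2 : e k * u e S' = c S' k • u e S := by rw [hce S' k, hSS]
    have haa : c S k * c S' k = 1 := by
      have h1 : (1:ℂ) • u e S = (c S k * c S' k) • u e S := by
        rw [one_smul]
        calc u e S = (e k * e k) * u e S := by rw [he2, one_mul]
          _ = e k * (e k * u e S) := by rw [mul_assoc]
          _ = e k * (c S k • u e S') := by rw [hce1]
          _ = c S k • (e k * u e S') := by rw [mul_smul_comm]
          _ = c S k • (c S' k • u e S) := by rw [hce2]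
          _ = (c S k * c S' k) • u e S := by rw [smul_smul]
      exact (smul_cancel (hu0 S) h1).symm
    have hdd' : d S' = q S k * d S := by
      have h1 : (e k * u e S) * (e k * u e S) = d S' • 1 := by
        calc (e k * u e S) * (e k * u e S)
            = (c S k • u e S') * (c S k • u e S') := by rw [hce1]
          _ = c S k • (u e S' * (c S k • u e S')) := by rw [smul_mul_assoc]
          _ = c S k • (c S k • (u e S' * u e S')) := by rw [mul_smul_comm]
          _ = (c S k * c S k) • (u e S' * u e S') := by rw [smul_smul]
          _ = d S' • 1 := by rw [hc2 S k, one_smul, hdd S']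
      have h2 : (e k * u e S) * (e k * u e S) = (q S k * d S) • 1 := by
        calc (e k * u e S) * (e k * u e S)
            = e k * ((u e S * e k) * u e S) := by rw [mul_assoc, mul_assoc]
          _ = e k * ((q S k • (e k * u e S)) * u e S) := by rw [husk S k]
          _ = q S k • (e k * (e k * (u e S * u e S))) := by
              rw [smul_mul_assoc, mul_smul_comm, mul_assoc]
          _ = q S k • ((e k * e k) * (u e S * u e S)) := by rw [mul_assoc]
          _ = q S k • (u e S * u e S) := by rw [he2, one_mul]
          _ = (q S k * d S) • 1 := by rw [hdd S, smul_smul]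
      exact smul_cancel hone (h1.symm.trans h2)
    have hqq' : q S k * q S' k = 1 := by
      have h1 : (e k * u e S) * e k = (c S k * q S' k * c S' k) • u e S := by
        calc (e k * u e S) * e k = (c S k • u e S') * e k := by rw [hce1]
          _ = c S k • (u e S' * e k) := by rw [smul_mul_assoc]
          _ = c S k • (q S' k • (e k * u e S')) := by rw [husk S' k]
          _ = c S k • (q S' k • (c S' k • u e S)) := by rw [hce2]
          _ = (c S k * q S' k * c S' k) • u e S := by rw [smul_smul, smul_smul, mul_assoc]
      have h2 : (e k * u e S) * e k = q S k • u e S := by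
        calc (e k * u e S) * e k = (q S k • (u e S * e k)) * e k := by rw [hqe S k]
          _ = q S k • (u e S * (e k * e k)) := by rw [smul_mul_assoc, mul_assoc]
          _ = q S k • u e S := by rw [he2, mul_one]
      have h3 : c S k * q S' k * c S' k = q S k := smul_cancel (hu0 S) (h1.symm.trans h2)
      calc q S k * q S' k = (c S k * q S' k * c S' k) * q S' k := by rw [h3]
        _ = (c S k * c S' k) * (q S' k * q S' k) := by ring
        _ = 1 := by rw [haa, hq2 S' k, one_mul]
    have hSC : (d S)⁻¹ * c S k = (d S')⁻¹ * (q S' k * c S' k) := by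
      have hdinvS : (d S)⁻¹ = d S := inv_eq_of_mul_eq_one_right (hd2 S)
      have hdinvS' : (d S')⁻¹ = d S' := inv_eq_of_mul_eq_one_right (hd2 S')
      have hcc : c S' k = c S k := by
        calc c S' k = (c S k * c S k) * c S' k := by rw [hc2 S k, one_mul]
          _ = (c S k * c S' k) * c S k := by ring
          _ = c S k := by rw [haa, one_mul]
      have hqq : q S' k = q S k := by
        calc q S' k = (q S k * q S k) * q S' k := by rw [hq2 S k, one_mul]
          _ = (q S k * q S' k) * q S k := by ring
          _ = q S k := by rw [hqq', one_mul]
      rw [hdinvS, hdinvS', hcc, hqq, hdd']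
      calc d S * c S k = (q S k * q S k) * (d S * c S k) := by rw [hq2 S k, one_mul]
        _ = (q S k * d S) * (q S k * c S k) := by ring
    have hL : e k * g S = ((d S)⁻¹ * c S k) • (u e S' * π * u e S) := by
      rw [hgdef]
      calc e k * ((d S)⁻¹ • (u e S * π * u e S))
          = (d S)⁻¹ • (e k * (u e S * π * u e S)) := by rw [mul_smul_comm]
        _ = (d S)⁻¹ • (((e k * u e S) * π) * u e S) := by rw [← mul_assoc, ← mul_assoc]
        _ = (d S)⁻¹ • (((c S k • u e S') * π) * u e S) := by rw [hce1]
        _ = (d S)⁻¹ • (c S k • (u e S' * π * u e S)) := by rw [smul_mul_assoc, smul_mul_assoc]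
        _ = ((d S)⁻¹ * c S k) • (u e S' * π * u e S) := by rw [smul_smul]
    have hR : g S' * e k = ((d S')⁻¹ * (q S' k * c S' k)) • (u e S' * π * u e S) := by
      rw [hgdef]
      calc ((d S')⁻¹ • (u e S' * π * u e S')) * e k
          = (d S')⁻¹ • ((u e S' * π * u e S') * e k) := by rw [smul_mul_assoc]
        _ = (d S')⁻¹ • ((u e S' * π) * (u e S' * e k)) := by rw [mul_assoc]
        _ = (d S')⁻¹ • ((u e S' * π) * (q S' k • (e k * u e S'))) := by rw [husk S' k]
        _ = (d S')⁻¹ • ((u e S' * π) * (q S' k • (c S' k • u e S))) := by rw [hce2]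
        _ = (d S')⁻¹ • ((u e S' * π) * ((q S' k * c S' k) • u e S)) := by rw [smul_smul]
        _ = (d S')⁻¹ • ((q S' k * c S' k) • ((u e S' * π) * u e S)) := by rw [mul_smul_comm]
        _ = ((d S')⁻¹ * (q S' k * c S' k)) • (u e S' * π * u e S) := by rw [smul_smul]
    rw [hL, hR, hSC]
  refine ⟨((2:ℂ)^n)⁻¹ • ∑ S : Finset (Fin n), g S, ?_, ?_, ?_⟩
  · intro k
    rw [mul_smul_comm, smul_mul_assoc]
    congr 1
    rw [Finset.mul_sum, Finset.sum_mul]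
    have hinv : Function.Involutive (fun S : Finset (Fin n) => S ∆ {k}) :=
      fun S => symmDiff_symmDiff_cancel_right {k} S
    calc ∑ S : Finset (Fin n), e k * g S
        = ∑ S : Finset (Fin n), g (S ∆ {k}) * e k :=
          Finset.sum_congr rfl (fun S _ => hgcomm k S)
      _ = ∑ S : Finset (Fin n), g S * e k := Equiv.sum_comp (Function.Involutive.toPerm _ hinv) (fun S => g S * e k)
  · intro v
    rw [LinearMap.smul_apply]
    refine Submodule.smul_mem _ _ ?_
    rw [LinearMap.sum_apply]
    refine Submodule.sum_mem _ (fun S _ => ?_)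
    show ((d S)⁻¹ • (u e S * π * u e S)) v ∈ W
    rw [LinearMap.smul_apply]
    refine Submodule.smul_mem _ _ ?_
    show (u e S) (π (u e S v)) ∈ W
    exact u_mem e S W hW _ (hπW _)
  · intro w hw
    have hterm : ∀ S : Finset (Fin n), g S w = w := by
      intro S
      show ((d S)⁻¹ • (u e S * π * u e S)) w = w
      rw [LinearMap.smul_apply]
      have h1 : (u e S * π * u e S) w = (u e S) (π (u e S w)) := rfl
      rw [h1, hπid _ (u_mem e S W hW _ hw)]
      have h2 : (u e S) (u e S w) = (u e S * u e S) w := rfl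
      rw [h2, hdd S]
      show (d S)⁻¹ • (d S • w) = w
      rw [smul_smul, inv_mul_cancel₀ (hd0 S), one_smul]
    rw [LinearMap.smul_apply, LinearMap.sum_apply]
    rw [Finset.sum_congr rfl (fun S _ => hterm S), Finset.sum_const]
    have hcard : (Finset.univ : Finset (Finset (Fin n))).card = 2^n := by
      rw [Finset.card_univ, Fintype.card_finset, Fintype.card_fin]
    rw [hcard, ← Nat.cast_smul_eq_nsmul ℂ, smul_smul]
    push_cast
    rw [inv_mul_cancel₀ (pow_ne_zero _ (two_ne_zero)), one_smul]

end FermAux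

end MaschkeAux2


namespace FermProof

open Module

set_option linter.unusedSectionVars false

variable {m : ℕ} (ρ : FmMod m) (lam : ℂ)

lemma exists_decomp (v : ρ.carrier) : ∃ a ∈ ρ.even, ∃ b ∈ ρ.odd, v = a + b := by
  have : v ∈ ρ.even ⊔ ρ.odd := by rw [ρ.isCompl_even_odd.sup_eq_top]; trivial
  obtain ⟨a, ha, b, hb, h⟩ := Submodule.mem_sup.mp this
  exact ⟨a, ha, b, hb, h.symm⟩

/-- The parity involution. -/
def sgm : Module.End ℂ ρ.carrier :=
  (2 : ℂ) • (ρ.even.subtype ∘ₗ ρ.even.projectionOnto ρ.odd ρ.isCompl_even_odd) - 1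

lemma sgm_even {v : ρ.carrier} (hv : v ∈ ρ.even) : sgm ρ v = v := by
  unfold sgm
  rw [LinearMap.sub_apply, LinearMap.smul_apply, LinearMap.comp_apply]
  rw [show (v : ρ.carrier) = ((⟨v, hv⟩ : ρ.even) : ρ.carrier) from rfl,
    Submodule.projectionOnto_apply_left ρ.isCompl_even_odd ⟨v, hv⟩]
  show (2:ℂ) • v - v = v
  rw [two_smul]
  abel

lemma sgm_odd {v : ρ.carrier} (hv : v ∈ ρ.odd) : sgm ρ v = -v := by
  unfold sgm
  rw [LinearMap.sub_apply, LinearMap.smul_apply, LinearMap.comp_apply,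
    (Submodule.projectionOnto_apply_eq_zero_iff ρ.isCompl_even_odd).mpr hv]
  show (2:ℂ) • (ρ.even.subtype 0) - v = -v
  rw [map_zero, smul_zero]
  abel

lemma end_ext {f g : Module.End ℂ ρ.carrier}
    (he : ∀ v ∈ ρ.even, f v = g v) (ho : ∀ v ∈ ρ.odd, f v = g v) : f = g := by
  ext v
  obtain ⟨a, ha, b, hb, rfl⟩ := exists_decomp ρ v
  rw [map_add, map_add, he a ha, ho b hb]

lemma sgm_sq : sgm ρ * sgm ρ = 1 := by
  refine end_ext ρ (fun v hv => ?_) (fun v hv => ?_)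
  · rw [Module.End.mul_apply, sgm_even ρ hv, sgm_even ρ hv, Module.End.one_apply]
  · rw [Module.End.mul_apply, sgm_odd ρ hv, map_neg, sgm_odd ρ hv, neg_neg,
      Module.End.one_apply]

lemma sgm_psi (i : ℤ) : sgm ρ * ρ.ψ i = -(ρ.ψ i * sgm ρ) := by
  refine end_ext ρ (fun v hv => ?_) (fun v hv => ?_)
  · rw [Module.End.mul_apply, sgm_odd ρ (ρ.ψ_maps_even i v hv), LinearMap.neg_apply,
      Module.End.mul_apply, sgm_even ρ hv]
  · rw [Module.End.mul_apply, sgm_even ρ (ρ.ψ_maps_odd i v hv), LinearMap.neg_apply,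
      Module.End.mul_apply, sgm_odd ρ hv, map_neg, neg_neg]

variable (hlam : lam ≠ 0) (hz : ρ.z = lam • LinearMap.id)

include hz in
lemma psi_rel (i j : ℤ) (hi : i.natAbs ≤ m) (hj : j.natAbs ≤ m) :
    ρ.ψ i * ρ.ψ j + ρ.ψ j * ρ.ψ i = (if i + j = 0 then lam else 0) • 1 := by
  have h := ρ.anticomm i j hi hj
  rw [hz] at h
  split_ifs at h ⊢ with hc
  · exact h
  · simpa [Module.End.mul_eq_comp] using h

lemma expand4 (A B C D : Module.End ℂ ρ.carrier) (s t : ℂ) :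
    (A + s • B) * (C + t • D) + (C + t • D) * (A + s • B)
      = (A * C + C * A) + t • (A * D + D * A) + s • (B * C + C * B)
        + (s * t) • (B * D + D * B) := by
  simp only [mul_add, add_mul, smul_mul_assoc, mul_smul_comm, smul_add, smul_smul,
    mul_comm t s]
  abel

/-- `X p s = ψ p + s ψ₋ₚ`. -/
def X (p : ℤ) (s : ℂ) : Module.End ℂ ρ.carrier := ρ.ψ p + s • ρ.ψ (-p)

include hz in
lemma X_rel (p q : ℤ) (s t : ℂ) (hp : p.natAbs ≤ m) (hq : q.natAbs ≤ m) :
    X ρ p s * X ρ q t + X ρ q t * X ρ p s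
      = ((if p + q = 0 then lam else 0) + t * (if p + -q = 0 then lam else 0)
          + s * (if -p + q = 0 then lam else 0)
          + (s * t) * (if -p + -q = 0 then lam else 0)) • 1 := by
  have hp' : (-p).natAbs ≤ m := by rwa [Int.natAbs_neg]
  have hq' : (-q).natAbs ≤ m := by rwa [Int.natAbs_neg]
  unfold X
  rw [expand4, psi_rel ρ lam hz p q hp hq, psi_rel ρ lam hz p (-q) hp hq',
    psi_rel ρ lam hz (-p) q hp' hq, psi_rel ρ lam hz (-p) (-q) hp' hq',
    smul_smul, smul_smul, smul_smul, ← add_smul, ← add_smul, ← add_smul]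


/-- a square root on `ℂ`. -/
def csqrt (x : ℂ) : ℂ := Classical.choose (IsAlgClosed.exists_pow_nat_eq x two_pos)

lemma csqrt_sq (x : ℂ) : csqrt x ^ 2 = x :=
  Classical.choose_spec (IsAlgClosed.exists_pow_nat_eq x two_pos)

def idx (m : ℕ) (j : Fin (2*m+1)) : ℤ := if (j:ℕ) ≤ m then ((j:ℕ) : ℤ) else ((j:ℕ) : ℤ) - m

def sg (m : ℕ) (j : Fin (2*m+1)) : ℂ := if (j:ℕ) ≤ m then 1 else -1

def nrm (lam : ℂ) (m : ℕ) (j : Fin (2*m+1)) : ℂ :=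
  csqrt (if idx m j = 0 then 2*lam else sg m j * lam)

lemma idx_nonneg (j : Fin (2*m+1)) : 0 ≤ idx m j := by
  unfold idx
  split_ifs with h
  · positivity
  · push_neg at h
    omega

lemma idx_le (j : Fin (2*m+1)) : (idx m j).natAbs ≤ m := by
  have hj := j.isLt
  unfold idx
  split_ifs with h
  · omega
  · push_neg at h
    omega

lemma sg_sq (j : Fin (2*m+1)) : sg m j * sg m j = 1 := by
  unfold sg; split_ifs <;> norm_num

lemma sg_idx_zero (j : Fin (2*m+1)) (h : idx m j = 0) : sg m j = 1 := by
  unfold idx at h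
  unfold sg
  split_ifs at h ⊢ with hc
  · rfl
  · push_neg at hc
    omega

include hlam in
lemma nrm_sq (j : Fin (2*m+1)) :
    nrm lam m j * nrm lam m j = (if idx m j = 0 then 2*lam else sg m j * lam) := by
  rw [← pow_two]
  exact csqrt_sq _

include hlam in
lemma nrm_ne_zero (j : Fin (2*m+1)) : nrm lam m j ≠ 0 := by
  intro h
  have h2 := nrm_sq lam hlam (m := m) j
  rw [h, mul_zero] at h2
  have hsg := sg_sq (m := m) j
  split_ifs at h2 with hc
  · exact hlam (by
      field_simp at h2
      exact (mul_eq_zero.mp h2.symm).resolve_left two_ne_zero)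
  · have : sg m j ≠ 0 := fun h0 => by simp [h0] at hsg
    exact hlam (by
      rcases mul_eq_zero.mp h2.symm with h' | h'
      · exact absurd h' this
      · exact h')

lemma idx_mk_le (p : ℕ) (h : p < 2*m+1) (hp : p ≤ m) :
    idx m ⟨p, h⟩ = (p : ℤ) := by
  unfold idx
  exact if_pos hp

lemma sg_mk_le (p : ℕ) (h : p < 2*m+1) (hp : p ≤ m) :
    sg m ⟨p, h⟩ = 1 := by
  unfold sg
  exact if_pos hp

lemma idx_mk_gt (p : ℕ) (h : p < 2*m+1) (hp : ¬ p ≤ m) :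
    idx m ⟨p, h⟩ = (p : ℤ) - m := by
  unfold idx
  exact if_neg hp

lemma sg_mk_gt (p : ℕ) (h : p < 2*m+1) (hp : ¬ p ≤ m) :
    sg m ⟨p, h⟩ = -1 := by
  unfold sg
  exact if_neg hp

lemma idx_clash {j j' : Fin (2*m+1)} (hne : j ≠ j') (he : idx m j = idx m j') :
    idx m j ≠ 0 ∧ sg m j + sg m j' = 0 := by
  have hj := j.isLt
  have hj' := j'.isLt
  have hne' : (j:ℕ) ≠ (j':ℕ) := fun h => hne (Fin.ext h)
  unfold idx at he ⊢
  unfold sg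
  by_cases h1 : (j:ℕ) ≤ m <;> by_cases h2 : (j':ℕ) ≤ m <;>
    simp only [h1, h2, if_true, if_false, if_pos, if_neg] at he ⊢
  · omega
  · constructor
    · omega
    · norm_num
  · constructor
    · omega
    · norm_num
  · omega

/-- the normalized generators built from the `ψ`'s. -/
def G (j : Fin (2*m+1)) : Module.End ℂ ρ.carrier :=
  (nrm lam m j)⁻¹ • X ρ (idx m j) (sg m j)

include hlam hz in
lemma X_sq (p : ℤ) (s : ℂ) (hp : p.natAbs ≤ m) (hs : s * s = 1)
    (hps : p = 0 → s = 1) :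
    X ρ p s * X ρ p s = (if p = 0 then 2*lam else s*lam) • 1 := by
  have h := X_rel ρ lam hz p p s s hp hp
  have h2 : X ρ p s * X ρ p s + X ρ p s * X ρ p s = (2:ℂ) • (X ρ p s * X ρ p s) := by
    rw [two_smul]
  rw [h2] at h
  have : X ρ p s * X ρ p s = (2:ℂ)⁻¹ • (((if p + p = 0 then lam else 0)
      + s * (if p + -p = 0 then lam else 0) + s * (if -p + p = 0 then lam else 0)
      + s * s * (if -p + -p = 0 then lam else 0)) • 1) := by
    rw [← h, smul_smul]
    norm_num
  rw [this, smul_smul]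
  congr 1
  have e1 : (p + p = 0) ↔ (p = 0) := by omega
  have e2 : (p + -p = 0) := by omega
  have e3 : (-p + p = 0) := by omega
  have e4 : (-p + -p = 0) ↔ (p = 0) := by omega
  rw [if_pos e2, if_pos e3]
  by_cases hp0 : p = 0
  · rw [if_pos (e1.mpr hp0), if_pos ((e4).mpr hp0), if_pos hp0, hps hp0]
    ring
  · rw [if_neg (fun hc => hp0 (e1.mp hc)), if_neg (fun hc => hp0 (e4.mp hc)), if_neg hp0]
    rw [hs]
    ring

include hlam hz in
lemma G_sq (j : Fin (2*m+1)) : G ρ lam j * G ρ lam j = 1 := by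
  unfold G
  rw [smul_mul_assoc, mul_smul_comm, smul_smul,
    X_sq ρ lam hlam hz (idx m j) (sg m j) (idx_le j) (sg_sq j) (sg_idx_zero j),
    smul_smul]
  have hn := nrm_sq lam hlam (m := m) j
  have hn0 := nrm_ne_zero lam hlam (m := m) j
  rw [show (nrm lam m j)⁻¹ * (nrm lam m j)⁻¹ * (if idx m j = 0 then 2*lam else sg m j * lam)
      = (nrm lam m j * nrm lam m j)⁻¹ * (if idx m j = 0 then 2*lam else sg m j * lam) by
    rw [mul_inv]]
  rw [hn, inv_mul_cancel₀, one_smul]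
  rw [← hn]
  exact mul_ne_zero hn0 hn0

include hlam hz in
lemma G_anti (j j' : Fin (2*m+1)) (hne : j ≠ j') :
    G ρ lam j * G ρ lam j' = -(G ρ lam j' * G ρ lam j) := by
  have key : X ρ (idx m j) (sg m j) * X ρ (idx m j') (sg m j')
      + X ρ (idx m j') (sg m j') * X ρ (idx m j) (sg m j) = 0 := by
    rw [X_rel ρ lam hz _ _ _ _ (idx_le j) (idx_le j')]
    have hpj := idx_nonneg (m := m) j
    have hpj' := idx_nonneg (m := m) j'
    by_cases he : idx m j = idx m j'
    · obtain ⟨hnz, hsg⟩ := idx_clash hne he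
      have c1 : ¬(idx m j + idx m j' = 0) := by omega
      have c2 : idx m j + -(idx m j') = 0 := by omega
      have c3 : -(idx m j) + idx m j' = 0 := by omega
      have c4 : ¬(-(idx m j) + -(idx m j') = 0) := by omega
      rw [if_neg c1, if_pos c2, if_pos c3, if_neg c4]
      rw [show (0:ℂ) + sg m j' * lam + sg m j * lam + sg m j * sg m j' * 0
          = (sg m j + sg m j') * lam by ring, hsg]
      simp
    · have c1 : ¬(idx m j + idx m j' = 0) := by omega
      have c2 : ¬(idx m j + -(idx m j') = 0) := by omega
      have c3 : ¬(-(idx m j) + idx m j' = 0) := by omega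
      have c4 : ¬(-(idx m j) + -(idx m j') = 0) := by omega
      rw [if_neg c1, if_neg c2, if_neg c3, if_neg c4]
      simp
  have key2 : G ρ lam j * G ρ lam j' + G ρ lam j' * G ρ lam j = 0 := by
    unfold G
    rw [smul_mul_assoc, mul_smul_comm, smul_smul, smul_mul_assoc, mul_smul_comm, smul_smul,
      mul_comm ((nrm lam m j')⁻¹) ((nrm lam m j)⁻¹), ← smul_add, key, smul_zero]
  exact eq_neg_of_add_eq_zero_left key2


lemma sgm_G (j : Fin (2*m+1)) : sgm ρ * G ρ lam j = -(G ρ lam j * sgm ρ) := by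
  unfold G X
  calc sgm ρ * ((nrm lam m j)⁻¹ • (ρ.ψ (idx m j) + sg m j • ρ.ψ (-(idx m j))))
      = (nrm lam m j)⁻¹ • (sgm ρ * ρ.ψ (idx m j)
          + sg m j • (sgm ρ * ρ.ψ (-(idx m j)))) := by
        rw [mul_smul_comm, mul_add, mul_smul_comm]
    _ = (nrm lam m j)⁻¹ • (-(ρ.ψ (idx m j) * sgm ρ)
          + sg m j • (-(ρ.ψ (-(idx m j)) * sgm ρ))) := by
        rw [sgm_psi, sgm_psi]
    _ = -((nrm lam m j)⁻¹ • ((ρ.ψ (idx m j) + sg m j • ρ.ψ (-(idx m j))) * sgm ρ)) := by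
        simp only [add_mul, smul_mul_assoc, smul_neg, smul_add, neg_add]

/-- all the generators: the parity involution together with the `G j`. -/
def gens : Fin (2*m+2) → Module.End ℂ ρ.carrier := Fin.cases (sgm ρ) (G ρ lam)

lemma gens_zero : gens ρ lam 0 = sgm ρ := rfl

lemma gens_succ (j : Fin (2*m+1)) : gens ρ lam j.succ = G ρ lam j := by
  unfold gens
  exact Fin.cases_succ j

include hlam hz in
lemma gens_sq : ∀ k, gens ρ lam k * gens ρ lam k = 1 := by
  refine Fin.cases ?_ ?_
  · rw [gens_zero]; exact sgm_sq ρ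
  · intro j
    rw [gens_succ]
    exact G_sq ρ lam hlam hz j

include hlam hz in
lemma gens_anti : ∀ k l, k ≠ l → gens ρ lam k * gens ρ lam l = -(gens ρ lam l * gens ρ lam k) := by
  refine Fin.cases ?_ ?_
  · refine Fin.cases ?_ ?_
    · intro h; exact absurd rfl h
    · intro j _
      rw [gens_zero, gens_succ]
      exact sgm_G ρ lam j
  · intro j
    refine Fin.cases ?_ ?_
    · intro _
      rw [gens_zero, gens_succ, sgm_G ρ lam j, neg_neg]
    · intro j' hne
      rw [gens_succ, gens_succ]
      exact G_anti ρ lam hlam hz j j' (fun h => hne (h ▸ rfl))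

lemma sgm_mem_of_graded {W : Submodule ℂ ρ.carrier} (hGr : ρ.Graded W)
    {v : ρ.carrier} (hv : v ∈ W) : sgm ρ v ∈ W := by
  rw [hGr] at hv
  obtain ⟨a, ha, b, hb, rfl⟩ := Submodule.mem_sup.mp hv
  rw [map_add, sgm_even ρ ha.2, sgm_odd ρ hb.2]
  exact Submodule.add_mem _ (hGr ▸ Submodule.mem_sup_left ha)
    (Submodule.neg_mem _ (hGr ▸ Submodule.mem_sup_right hb))

lemma closed_gens_of_invariant {W : Submodule ℂ ρ.carrier} (hInv : ρ.Invariant W)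
    (hGr : ρ.Graded W) : ∀ k, ∀ v ∈ W, gens ρ lam k v ∈ W := by
  refine Fin.cases ?_ ?_
  · intro v hv
    rw [gens_zero]
    exact sgm_mem_of_graded ρ hGr hv
  · intro j v hv
    rw [gens_succ]
    unfold G X
    rw [LinearMap.smul_apply, LinearMap.add_apply, LinearMap.smul_apply]
    exact Submodule.smul_mem _ _ (Submodule.add_mem _ (hInv.1 _ v hv)
      (Submodule.smul_mem _ _ (hInv.1 _ v hv)))

include hlam hz in
lemma invariant_of_closed_gens {W : Submodule ℂ ρ.carrier}
    (h : ∀ k, ∀ v ∈ W, gens ρ lam k v ∈ W) : ρ.Invariant W ∧ ρ.Graded W := by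
  have hσ : ∀ v ∈ W, sgm ρ v ∈ W := by
    intro v hv
    have := h 0 v hv
    rwa [gens_zero] at this
  have hG : ∀ j, ∀ v ∈ W, G ρ lam j v ∈ W := by
    intro j v hv
    have := h j.succ v hv
    rwa [gens_succ] at this
  have hGr : ρ.Graded W := by
    refine le_antisymm ?_ (sup_le inf_le_left inf_le_left)
    intro v hv
    obtain ⟨a, ha, b, hb, rfl⟩ := exists_decomp ρ v
    have hσv : sgm ρ (a + b) = a - b := by
      rw [map_add, sgm_even ρ ha, sgm_odd ρ hb, sub_eq_add_neg]
    have haW : a ∈ W := by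
      have h1 : ((2:ℂ)⁻¹) • ((a + b) + sgm ρ (a + b)) = a := by
        rw [hσv]
        rw [show (a + b) + (a - b) = (2:ℂ) • a by rw [two_smul]; abel]
        rw [smul_smul]
        norm_num
      rw [← h1]
      exact Submodule.smul_mem _ _ (Submodule.add_mem _ hv (hσ _ hv))
    have hbW : b ∈ W := by
      have h1 : ((2:ℂ)⁻¹) • ((a + b) - sgm ρ (a + b)) = b := by
        rw [hσv]
        rw [show (a + b) - (a - b) = (2:ℂ) • b by rw [two_smul]; abel]
        rw [smul_smul]
        norm_num
      rw [← h1]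
      exact Submodule.smul_mem _ _ (Submodule.sub_mem _ hv (hσ _ hv))
    exact Submodule.mem_sup.mpr ⟨a, ⟨haW, ha⟩, b, ⟨hbW, hb⟩, rfl⟩
  refine ⟨⟨?_, ?_⟩, hGr⟩
  · intro i v hv
    by_cases hi : m < i.natAbs
    · rw [ρ.ψ_out_of_range i hi]
      simpa using Submodule.zero_mem W
    · push_neg at hi
      set p : ℕ := i.natAbs with hpdef
      by_cases hp0 : p = 0
      · have hi0 : i = 0 := by omega
        subst hi0
        set j₀ : Fin (2*m+1) := ⟨0, by omega⟩ with hj₀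
        have hidx : idx m j₀ = 0 := by
          rw [hj₀, idx_mk_le 0 (by omega) (by omega)]
          simp
        have hsg : sg m j₀ = 1 := sg_idx_zero j₀ hidx
        have hgv : nrm lam m j₀ • G ρ lam j₀ v = ρ.ψ 0 v + ρ.ψ 0 v := by
          unfold G X
          rw [hidx, hsg, neg_zero, one_smul, LinearMap.smul_apply, smul_smul,
            mul_inv_cancel₀ (nrm_ne_zero lam hlam j₀), one_smul, LinearMap.add_apply]
        have hψ : ρ.ψ 0 v = (2:ℂ)⁻¹ • (nrm lam m j₀ • G ρ lam j₀ v) := by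
          rw [hgv, show ρ.ψ 0 v + ρ.ψ 0 v = (2:ℂ) • ρ.ψ 0 v by rw [two_smul], smul_smul]
          norm_num
        rw [hψ]
        exact Submodule.smul_mem _ _ (Submodule.smul_mem _ _ (hG j₀ v hv))
      · have hp1 : 1 ≤ p := by omega
        set j₁ : Fin (2*m+1) := ⟨p, by omega⟩ with hj₁
        set j₂ : Fin (2*m+1) := ⟨m + p, by omega⟩ with hj₂
        have hidx1 : idx m j₁ = (p:ℤ) := by
          rw [hj₁, idx_mk_le p (by omega) (by omega)]
        have hsg1 : sg m j₁ = 1 := by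
          rw [hj₁, sg_mk_le p (by omega) (by omega)]
        have hidx2 : idx m j₂ = (p:ℤ) := by
          rw [hj₂, idx_mk_gt (m+p) (by omega) (by omega)]
          push_cast
          ring
        have hsg2 : sg m j₂ = -1 := by
          rw [hj₂, sg_mk_gt (m+p) (by omega) (by omega)]
        have hg1 : nrm lam m j₁ • G ρ lam j₁ v = ρ.ψ (p:ℤ) v + ρ.ψ (-(p:ℤ)) v := by
          unfold G X
          rw [hidx1, hsg1, one_smul, LinearMap.smul_apply, smul_smul,
            mul_inv_cancel₀ (nrm_ne_zero lam hlam j₁), one_smul, LinearMap.add_apply]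
        have hg2 : nrm lam m j₂ • G ρ lam j₂ v = ρ.ψ (p:ℤ) v - ρ.ψ (-(p:ℤ)) v := by
          unfold G X
          rw [hidx2, hsg2, LinearMap.smul_apply, smul_smul,
            mul_inv_cancel₀ (nrm_ne_zero lam hlam j₂), one_smul, LinearMap.add_apply,
            LinearMap.smul_apply, neg_one_smul, sub_eq_add_neg]
        have hWp : ρ.ψ (p:ℤ) v ∈ W := by
          have h1 : ρ.ψ (p:ℤ) v = (2:ℂ)⁻¹ • (nrm lam m j₁ • G ρ lam j₁ v
              + nrm lam m j₂ • G ρ lam j₂ v) := by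
            rw [hg1, hg2,
              show ρ.ψ (p:ℤ) v + ρ.ψ (-(p:ℤ)) v + (ρ.ψ (p:ℤ) v - ρ.ψ (-(p:ℤ)) v)
                = (2:ℂ) • ρ.ψ (p:ℤ) v by rw [two_smul]; abel, smul_smul]
            norm_num
          rw [h1]
          exact Submodule.smul_mem _ _ (Submodule.add_mem _
            (Submodule.smul_mem _ _ (hG j₁ v hv)) (Submodule.smul_mem _ _ (hG j₂ v hv)))
        have hWm : ρ.ψ (-(p:ℤ)) v ∈ W := by
          have h1 : ρ.ψ (-(p:ℤ)) v = (2:ℂ)⁻¹ • (nrm lam m j₁ • G ρ lam j₁ v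
              - nrm lam m j₂ • G ρ lam j₂ v) := by
            rw [hg1, hg2,
              show ρ.ψ (p:ℤ) v + ρ.ψ (-(p:ℤ)) v - (ρ.ψ (p:ℤ) v - ρ.ψ (-(p:ℤ)) v)
                = (2:ℂ) • ρ.ψ (-(p:ℤ)) v by rw [two_smul]; abel, smul_smul]
            norm_num
          rw [h1]
          exact Submodule.smul_mem _ _ (Submodule.sub_mem _
            (Submodule.smul_mem _ _ (hG j₁ v hv)) (Submodule.smul_mem _ _ (hG j₂ v hv)))
        rcases Int.natAbs_eq i with hcase | hcase
        · rw [show i = (p:ℤ) from hcase]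
          exact hWp
        · rw [show i = -(p:ℤ) from hcase]
          exact hWm
  · intro v hv
    rw [hz]
    exact Submodule.smul_mem _ _ hv


include hlam hz in
lemma exists_gens_compl [Nontrivial ρ.carrier] (W : Submodule ℂ ρ.carrier)
    (hcl : ∀ k, ∀ v ∈ W, gens ρ lam k v ∈ W)
    (habs : Nontrivial ρ.carrier → ∀ (e : Fin (2*m+2) → Module.End ℂ ρ.carrier),
      (∀ k, e k * e k = 1) → (∀ k l, k ≠ l → e k * e l = -(e l * e k)) →
      ∀ (W : Submodule ℂ ρ.carrier), (∀ k, ∀ v ∈ W, e k v ∈ W) →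
      ∃ T : Module.End ℂ ρ.carrier,
        (∀ k, e k * T = T * e k) ∧ (∀ v, T v ∈ W) ∧ ∀ w ∈ W, T w = w) :
    ∃ K : Submodule ℂ ρ.carrier, (∀ k, ∀ v ∈ K, gens ρ lam k v ∈ K) ∧ IsCompl W K := by
  obtain ⟨T, hTc, hTW, hTid⟩ := habs inferInstance (gens ρ lam)
    (gens_sq ρ lam hlam hz) (gens_anti ρ lam hlam hz) W hcl
  refine ⟨LinearMap.ker T, ?_, ?_, ?_⟩
  · intro k v hv
    rw [LinearMap.mem_ker] at hv ⊢
    have h1 : T (gens ρ lam k v) = (T * gens ρ lam k) v := rfl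
    rw [h1, ← hTc k]
    show gens ρ lam k (T v) = 0
    rw [hv, map_zero]
  · rw [Submodule.disjoint_def]
    intro x hxW hxK
    rw [LinearMap.mem_ker] at hxK
    rw [← hTid x hxW, hxK]
  · rw [codisjoint_iff, eq_top_iff]
    intro v _
    have h1 : v - T v ∈ LinearMap.ker T := by
      rw [LinearMap.mem_ker, map_sub, hTid _ (hTW v), sub_self]
    have h2 : v = T v + (v - T v) := by abel
    rw [h2]
    exact Submodule.add_mem _ (Submodule.mem_sup_left (hTW v)) (Submodule.mem_sup_right h1)

/-- The algebra generated by the `gens`. -/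
def AA : Subalgebra ℂ (Module.End ℂ ρ.carrier) := Algebra.adjoin ℂ (Set.range (gens ρ lam))

def moduleAA : Module (AA ρ lam) ρ.carrier := Module.compHom ρ.carrier (AA ρ lam).val.toRingHom

attribute [local instance] moduleAA

lemma smul_AA (a : AA ρ lam) (v : ρ.carrier) : a • v = (a : Module.End ℂ ρ.carrier) v := rfl

lemma adjoin_stable {W : Submodule ℂ ρ.carrier} (hcl : ∀ k, ∀ v ∈ W, gens ρ lam k v ∈ W) :
    ∀ x ∈ Algebra.adjoin ℂ (Set.range (gens ρ lam)), ∀ v ∈ W, x v ∈ W := by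
  intro x hx
  induction hx using Algebra.adjoin_induction with
  | mem y hy =>
      obtain ⟨k, rfl⟩ := hy
      exact hcl k
  | algebraMap r =>
      intro v hv
      rw [Module.algebraMap_end_apply]
      exact Submodule.smul_mem _ _ hv
  | add x y hx hy ihx ihy =>
      intro v hv
      rw [LinearMap.add_apply]
      exact Submodule.add_mem _ (ihx v hv) (ihy v hv)
  | mul x y hx hy ihx ihy =>
      intro v hv
      rw [Module.End.mul_apply]
      exact ihx _ (ihy v hv)

def toA (W : Submodule ℂ ρ.carrier) (hcl : ∀ k, ∀ v ∈ W, gens ρ lam k v ∈ W) :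
    Submodule (AA ρ lam) ρ.carrier where
  carrier := W
  add_mem' := fun ha hb => W.add_mem ha hb
  zero_mem' := W.zero_mem
  smul_mem' := fun a {v} hv => by
    show (a : Module.End ℂ ρ.carrier) v ∈ W
    exact adjoin_stable ρ lam hcl a.1 a.2 v hv

def fromA (W' : Submodule (AA ρ lam) ρ.carrier) : Submodule ℂ ρ.carrier where
  carrier := W'
  add_mem' := fun ha hb => W'.add_mem ha hb
  zero_mem' := W'.zero_mem
  smul_mem' := fun c {v} hv => by
    have h1 : c • v = ((algebraMap ℂ (AA ρ lam)) c) • v := by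
      rw [smul_AA]
      have h2 : ((algebraMap ℂ (AA ρ lam) c : AA ρ lam) : Module.End ℂ ρ.carrier)
          = algebraMap ℂ (Module.End ℂ ρ.carrier) c := rfl
      rw [h2, Module.algebraMap_end_apply]
    rw [h1]
    exact W'.smul_mem _ hv

lemma mem_fromA {W' : Submodule (AA ρ lam) ρ.carrier} {x : ρ.carrier} :
    x ∈ fromA ρ lam W' ↔ x ∈ W' := Iff.rfl

lemma mem_toA {W : Submodule ℂ ρ.carrier} {hcl} {x : ρ.carrier} :
    x ∈ toA ρ lam W hcl ↔ x ∈ W := Iff.rfl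

lemma fromA_closed (W' : Submodule (AA ρ lam) ρ.carrier) :
    ∀ k, ∀ v ∈ fromA ρ lam W', gens ρ lam k v ∈ fromA ρ lam W' := by
  intro k v hv
  have hk : gens ρ lam k ∈ AA ρ lam := Algebra.subset_adjoin ⟨k, rfl⟩
  have h1 := W'.smul_mem ⟨gens ρ lam k, hk⟩ hv
  exact h1

end FermProof

namespace FermProof

attribute [local instance] moduleAA

theorem main (m : ℕ) (ρ : FmMod m) (lam : ℂ) (hlam : lam ≠ 0)
    (hz : ρ.z = lam • LinearMap.id)
    (habs : Nontrivial ρ.carrier → ∀ (e : Fin (2*m+2) → Module.End ℂ ρ.carrier),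
      (∀ k, e k * e k = 1) → (∀ k l, k ≠ l → e k * e l = -(e l * e k)) →
      ∀ (W : Submodule ℂ ρ.carrier), (∀ k, ∀ v ∈ W, e k v ∈ W) →
      ∃ T : Module.End ℂ ρ.carrier,
        (∀ k, e k * T = T * e k) ∧ (∀ v, T v ∈ W) ∧ ∀ w ∈ W, T w = w) :
    ρ.IsCompletelyReducible := by
  rcases subsingleton_or_nontrivial ρ.carrier with hss | hnt
  · refine ⟨Empty, fun i => i.elim, fun i => i.elim, fun i => i.elim, ?_⟩
    rw [eq_top_iff]
    intro x _
    rw [show x = 0 from Subsingleton.elim x 0]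
    exact Submodule.zero_mem _
  · haveI : ComplementedLattice (Submodule (AA ρ lam) ρ.carrier) := by
      constructor
      intro W'
      obtain ⟨K, hKcl, hcompl⟩ := exists_gens_compl ρ lam hlam hz (fromA ρ lam W')
        (fromA_closed ρ lam W') habs
      refine ⟨toA ρ lam K hKcl, ?_, ?_⟩
      · rw [Submodule.disjoint_def]
        intro x hxW hxK
        exact (Submodule.disjoint_def.mp hcompl.disjoint) x hxW hxK
      · rw [codisjoint_iff, eq_top_iff]
        intro v _
        have hv : v ∈ fromA ρ lam W' ⊔ K := by rw [hcompl.sup_eq_top]; trivial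
        obtain ⟨a, ha, b, hb, rfl⟩ := Submodule.mem_sup.mp hv
        exact Submodule.add_mem _ (Submodule.mem_sup_left ha) (Submodule.mem_sup_right hb)
    obtain ⟨s, hs_ind, hs_top, hs_atoms⟩ :=
      exists_sSupIndep_of_sSup_atoms_eq_top
        (sSup_atoms_eq_top (α := Submodule (AA ρ lam) ρ.carrier))
    have hind : iSupIndep (fun i : s => (i : Submodule (AA ρ lam) ρ.carrier)) :=
      (sSupIndep_iff s).mp hs_ind
    refine ⟨s, fun i => fromA ρ lam i.1, ?_, ?_, ?_⟩
    · intro i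
      have hatom := hs_atoms i.2
      have hcl := fromA_closed ρ lam i.1
      obtain ⟨hInv, hGr⟩ := invariant_of_closed_gens ρ lam hlam hz hcl
      refine ⟨hInv, hGr, ?_, ?_⟩
      · intro hbot
        have hbot' : fromA ρ lam (i : Submodule (AA ρ lam) ρ.carrier) = ⊥ := hbot
        apply hatom.1
        rw [eq_bot_iff]
        intro x hx
        have h1 : x ∈ fromA ρ lam i.1 := hx
        rw [hbot'] at h1
        exact (Submodule.mem_bot ℂ).mp h1
      · intro U hU hUinv hUgr
        have hU' : U ≤ fromA ρ lam (i : Submodule (AA ρ lam) ρ.carrier) := hU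
        have hUcl := closed_gens_of_invariant ρ lam hUinv hUgr
        have hle : toA ρ lam U hUcl ≤ i.1 := fun x hx => hU hx
        rcases (hatom.le_iff).mp hle with h | h
        · left
          rw [eq_bot_iff]
          intro x hx
          have h1 : x ∈ toA ρ lam U hUcl := hx
          rw [h] at h1
          exact h1
        · right
          show U = fromA ρ lam (i : Submodule (AA ρ lam) ρ.carrier)
          refine le_antisymm hU' ?_
          intro x hx
          have h1 : x ∈ i.1 := hx
          rw [← h] at h1
          exact h1
    · intro i
      rw [Submodule.disjoint_def]
      intro x hxi hxsup
      have hsup_le : (⨆ j, ⨆ (_ : j ≠ i), fromA ρ lam (j : Submodule (AA ρ lam) ρ.carrier))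
          ≤ fromA ρ lam (⨆ j, ⨆ (_ : j ≠ i), (j : Submodule (AA ρ lam) ρ.carrier)) := by
        refine iSup₂_le fun j hj => ?_
        intro y hy
        exact (le_iSup₂ (f := fun (j : s) (_ : j ≠ i) =>
          (j : Submodule (AA ρ lam) ρ.carrier)) j hj) hy
      have h2 := hsup_le hxsup
      exact Submodule.disjoint_def.mp (hind i) x hxi h2
    · rw [eq_top_iff]
      intro v _
      have hv : v ∈ sSup s := by rw [hs_top]; trivial
      rw [sSup_eq_iSup'] at hv
      refine Submodule.iSup_induction _ (motive := fun x => x ∈ ⨆ i : s, fromA ρ lam i.1) hv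
        ?_ ?_ ?_
      · intro j x hx
        exact le_iSup (fun i : s => fromA ρ lam i.1) j hx
      · exact Submodule.zero_mem _
      · intro x y hx hy
        exact Submodule.add_mem _ hx hy

end FermProof

/-- **Statement 6** (Lemma 3.7).  Let `m ∈ ℤ_{≥0}` and let `V` be an `F_{[m]}`-module on
which `z` acts as a nonzero scalar `λ`.  Then `V` is completely reducible. -/
theorem statement6 (m : ℕ) (ρ : FmMod m) (lam : ℂ) (hlam : lam ≠ 0)
    (hz : ρ.z = lam • LinearMap.id) :
    ρ.IsCompletelyReducible := by
  exact FermProof.main m ρ lam hlam hz (fun hnt e he2 hanti W hW =>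
    haveI := hnt
    FermAux.exists_equivariant_proj e he2 hanti W hW)

end
end

section
/- Let V be a smooth F-module on which z acts as a scalar λ ∈ ℂ*. Then V is completely reducible (a direct sum of simple F-modules). -/
noncomputable section

/-- A module over the Fermion (super)algebra `F = F(0)`:  a `ℤ/2`-graded complex vector
space together with operators `ψ m` (odd, `m ∈ ℤ`) and `z` (even, central) satisfying
`[ψ m, ψ n] = δ_{m,-n} z` (super-bracket, i.e. anticommutator) and `[F, z] = 0`. -/
structure FMod : Type 1 where
  carrier : Type
  [isAddCommGroup : AddCommGroup carrier]
  [isModule : Module ℂ carrier]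
  ψ : ℤ → carrier →ₗ[ℂ] carrier
  z : carrier →ₗ[ℂ] carrier
  even : Submodule ℂ carrier
  odd : Submodule ℂ carrier
  isCompl_even_odd : IsCompl even odd
  ψ_maps_even : ∀ (m : ℤ), ∀ v ∈ even, ψ m v ∈ odd
  ψ_maps_odd : ∀ (m : ℤ), ∀ v ∈ odd, ψ m v ∈ even
  z_maps_even : ∀ v ∈ even, z v ∈ even
  z_maps_odd : ∀ v ∈ odd, z v ∈ odd
  anticomm : ∀ m n : ℤ, ψ m ∘ₗ ψ n + ψ n ∘ₗ ψ m = if m + n = 0 then z else 0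
  z_comm_ψ : ∀ m : ℤ, z ∘ₗ ψ m = ψ m ∘ₗ z

attribute [instance] FMod.isAddCommGroup FMod.isModule

/-- A submodule invariant under the action of `F`. -/
def FMod.Invariant (ρ : FMod) (W : Submodule ℂ ρ.carrier) : Prop :=
  (∀ (m : ℤ), ∀ v ∈ W, ρ.ψ m v ∈ W) ∧ (∀ v ∈ W, ρ.z v ∈ W)

/-- A `ℤ/2`-graded submodule. -/
def FMod.Graded (ρ : FMod) (W : Submodule ℂ ρ.carrier) : Prop :=
  W = (W ⊓ ρ.even) ⊔ (W ⊓ ρ.odd)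

/-- A simple `F`-module: nonzero, and the only graded `F`-invariant submodules
are `⊥` and `⊤`. -/
def FMod.IsSimple (ρ : FMod) : Prop :=
  (∃ v : ρ.carrier, v ≠ 0) ∧
    ∀ W : Submodule ℂ ρ.carrier, ρ.Invariant W → ρ.Graded W → W = ⊥ ∨ W = ⊤

/-- A smooth `F`-module: each vector is annihilated by `ψ i` for all sufficiently
large `i`. -/
def FMod.IsSmooth (ρ : FMod) : Prop :=
  ∀ v : ρ.carrier, ∃ n : ℕ, ∀ i : ℤ, (n : ℤ) < i → ρ.ψ i v = 0

/-- An isomorphism of `F`-modules (preserving the grading and all the actions). -/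
structure FIso (ρ σ : FMod) where
  e : ρ.carrier ≃ₗ[ℂ] σ.carrier
  map_even : ∀ v ∈ ρ.even, e v ∈ σ.even
  map_odd : ∀ v ∈ ρ.odd, e v ∈ σ.odd
  map_ψ : ∀ (m : ℤ) (v : ρ.carrier), e (ρ.ψ m v) = σ.ψ m (e v)
  map_z : ∀ v : ρ.carrier, e (ρ.z v) = σ.z (e v)

/-- A simple graded `F`-invariant submodule. -/
def FMod.IsSimpleSubmodule (ρ : FMod) (W : Submodule ℂ ρ.carrier) : Prop :=
  ρ.Invariant W ∧ ρ.Graded W ∧ W ≠ ⊥ ∧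
    ∀ U ≤ W, ρ.Invariant U → ρ.Graded U → U = ⊥ ∨ U = W

/-- Complete reducibility: the module is a direct sum of simple submodules. -/
def FMod.IsCompletelyReducible (ρ : FMod) : Prop :=
  ∃ (ι : Type) (W : ι → Submodule ℂ ρ.carrier),
    (∀ i, ρ.IsSimpleSubmodule (W i)) ∧ iSupIndep W ∧ (⨆ i, W i) = ⊤

namespace FModCR

variable {ρ : FMod} {lam : ℂ}

/-- pointwise anticommutator -/
theorem ac (hz : ρ.z = lam • LinearMap.id) (m n : ℤ) (v : ρ.carrier) :
    ρ.ψ m (ρ.ψ n v) + ρ.ψ n (ρ.ψ m v) = if m + n = 0 then lam • v else 0 := by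
  have h := congrArg (fun f : ρ.carrier →ₗ[ℂ] ρ.carrier => f v) (ρ.anticomm m n)
  simp only [LinearMap.add_apply, LinearMap.comp_apply] at h
  rw [h]
  split
  · simp [hz]
  · simp

theorem psi_sq (hz : ρ.z = lam • LinearMap.id) {m : ℤ} (hm : m ≠ 0) (v : ρ.carrier) :
    ρ.ψ m (ρ.ψ m v) = 0 := by
  have h := ac hz m m v
  rw [if_neg (by omega)] at h
  have : (2 : ℂ) • ρ.ψ m (ρ.ψ m v) = 0 := by rw [two_smul]; exact h
  simpa using this

theorem psi0_sq (hz : ρ.z = lam • LinearMap.id) (v : ρ.carrier) :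
    ρ.ψ 0 (ρ.ψ 0 v) = (lam / 2) • v := by
  have h := ac hz 0 0 v
  rw [if_pos (by norm_num)] at h
  have h2 : (2 : ℂ) • ρ.ψ 0 (ρ.ψ 0 v) = lam • v := by rw [two_smul]; exact h
  have := congrArg (fun w => (2 : ℂ)⁻¹ • w) h2
  simp only [smul_smul] at this
  rw [inv_mul_cancel₀ (by norm_num : (2:ℂ) ≠ 0), one_smul] at this
  rw [this]
  congr 1
  ring

theorem psi_opp (hz : ρ.z = lam • LinearMap.id) (m : ℤ) (v : ρ.carrier) :
    ρ.ψ m (ρ.ψ (-m) v) = lam • v - ρ.ψ (-m) (ρ.ψ m v) := by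
  have h := ac hz m (-m) v
  rw [if_pos (by omega)] at h
  linear_combination (norm := module) h

/-! ### Words of operators -/

def applyL (ρ : FMod) (L : List ℤ) (v : ρ.carrier) : ρ.carrier :=
  L.foldr (fun j w => ρ.ψ j w) v

@[simp] theorem applyL_nil (v : ρ.carrier) : applyL ρ [] v = v := rfl

@[simp] theorem applyL_cons (j : ℤ) (L : List ℤ) (v : ρ.carrier) :
    applyL ρ (j :: L) v = ρ.ψ j (applyL ρ L v) := rfl

theorem applyL_append (L M : List ℤ) (v : ρ.carrier) :
    applyL ρ (L ++ M) v = applyL ρ L (applyL ρ M v) := by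
  induction L with
  | nil => rfl
  | cons j L ih => simp [ih]

theorem applyL_add (L : List ℤ) (v w : ρ.carrier) :
    applyL ρ L (v + w) = applyL ρ L v + applyL ρ L w := by
  induction L with
  | nil => rfl
  | cons j L ih => simp [ih]

theorem applyL_smul (L : List ℤ) (c : ℂ) (v : ρ.carrier) :
    applyL ρ L (c • v) = c • applyL ρ L v := by
  induction L with
  | nil => rfl
  | cons j L ih => simp [ih]

theorem applyL_zero (L : List ℤ) : applyL ρ L (0 : ρ.carrier) = 0 := by
  induction L with
  | nil => rfl
  | cons j L ih => simp [ih]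

/-! ### Vacuum vectors and generated submodules -/

def IsVac (ρ : FMod) (v : ρ.carrier) : Prop := ∀ i : ℤ, 0 < i → ρ.ψ i v = 0

def gen (ρ : FMod) (ω : ρ.carrier) : Submodule ℂ ρ.carrier :=
  Submodule.span ℂ {x | ∃ L : List ℤ, (∀ j ∈ L, j ≤ 0) ∧ x = applyL ρ L ω}

theorem mem_gen_of_word {ω : ρ.carrier} {L : List ℤ} (hL : ∀ j ∈ L, j ≤ 0) :
    applyL ρ L ω ∈ gen ρ ω :=
  Submodule.subset_span ⟨L, hL, rfl⟩

theorem self_mem_gen (ω : ρ.carrier) : ω ∈ gen ρ ω :=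
  mem_gen_of_word (L := []) (by simp)

/-- `gen` is closed under nonpositive modes. -/
theorem psi_nonpos_gen {j : ℤ} (hj : j ≤ 0) {ω x : ρ.carrier} (hx : x ∈ gen ρ ω) :
    ρ.ψ j x ∈ gen ρ ω := by
  induction hx using Submodule.span_induction with
  | mem x hx =>
    obtain ⟨L, hL, rfl⟩ := hx
    exact mem_gen_of_word (L := j :: L) (by simp [hL, hj]; intro k hk; exact hL k hk)
  | zero => simp [Submodule.zero_mem]
  | add x y _ _ hx hy => rw [map_add]; exact Submodule.add_mem _ hx hy
  | smul c x _ hx => rw [map_smul]; exact Submodule.smul_mem _ _ hx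

/-- `gen ω` is closed under positive modes, for `ω` a vacuum vector. -/
theorem psi_pos_gen (hz : ρ.z = lam • LinearMap.id) {ω : ρ.carrier} (hω : IsVac ρ ω)
    {i : ℤ} (hi : 0 < i) {x : ρ.carrier} (hx : x ∈ gen ρ ω) :
    ρ.ψ i x ∈ gen ρ ω := by
  induction hx using Submodule.span_induction with
  | mem x hx =>
    obtain ⟨L, hL, rfl⟩ := hx
    induction L with
    | nil => simpa using (by rw [hω i hi] ; exact Submodule.zero_mem _ : ρ.ψ i ω ∈ gen ρ ω)
    | cons j L ih =>
      have hL' : ∀ k ∈ L, k ≤ 0 := fun k hk => hL k (List.mem_cons_of_mem _ hk)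
      have hj : j ≤ 0 := hL j (List.mem_cons_self)
      have key := ac hz i j (applyL ρ L ω)
      have h1 : ρ.ψ i (applyL ρ ((j :: L)) ω)
          = (if i + j = 0 then lam • applyL ρ L ω else 0) - ρ.ψ j (ρ.ψ i (applyL ρ L ω)) := by
        rw [applyL_cons]
        linear_combination (norm := module) key
      rw [h1]
      have hmem : ρ.ψ j (ρ.ψ i (applyL ρ L ω)) ∈ gen ρ ω :=
        psi_nonpos_gen hj (ih hL')
      refine Submodule.sub_mem _ ?_ hmem
      split
      · exact Submodule.smul_mem _ _ (mem_gen_of_word hL')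
      · exact Submodule.zero_mem _
  | zero => simp [Submodule.zero_mem]
  | add x y _ _ hx hy => rw [map_add]; exact Submodule.add_mem _ hx hy
  | smul c x _ hx => rw [map_smul]; exact Submodule.smul_mem _ _ hx

/-- membership in an invariant submodule is preserved by words -/
theorem applyL_mem_of_invariant {W : Submodule ℂ ρ.carrier} (hW : ∀ m : ℤ, ∀ v ∈ W, ρ.ψ m v ∈ W)
    (L : List ℤ) {x : ρ.carrier} (hx : x ∈ W) : applyL ρ L x ∈ W := by
  induction L with
  | nil => exact hx
  | cons j L ih => exact hW j _ ih

theorem gen_invariant (hz : ρ.z = lam • LinearMap.id) {ω : ρ.carrier} (hω : IsVac ρ ω) :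
    ρ.Invariant (gen ρ ω) := by
  constructor
  · intro m v hv
    rcases le_or_gt m 0 with hm | hm
    · exact psi_nonpos_gen hm hv
    · exact psi_pos_gen hz hω hm hv
  · intro v hv
    rw [hz]
    exact Submodule.smul_mem _ _ (by simpa using hv)

/-- `gen` is subadditive in the generating vector. -/
theorem gen_le_of_mem_span {S : Set ρ.carrier} {ω : ρ.carrier}
    (hω : ω ∈ Submodule.span ℂ S) :
    gen ρ ω ≤ ⨆ s : S, gen ρ (s : ρ.carrier) := by
  induction hω using Submodule.span_induction with
  | mem x hx =>
    exact le_iSup (fun s : S => gen ρ (s : ρ.carrier)) ⟨x, hx⟩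
  | zero =>
    rw [gen]
    refine Submodule.span_le.2 ?_
    rintro x ⟨L, hL, rfl⟩
    rw [applyL_zero]
    exact Submodule.zero_mem _
  | add x y _ _ hx hy =>
    rw [gen]
    refine Submodule.span_le.2 ?_
    rintro u ⟨L, hL, rfl⟩
    rw [applyL_add]
    exact Submodule.add_mem _ (hx (mem_gen_of_word hL)) (hy (mem_gen_of_word hL))
  | smul c x _ hx =>
    rw [gen]
    refine Submodule.span_le.2 ?_
    rintro u ⟨L, hL, rfl⟩
    rw [applyL_smul]
    exact Submodule.smul_mem _ _ (hx (mem_gen_of_word hL))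

/-- for an odd vacuum vector, `gen v ≤ gen (ψ₀ v)`. -/
theorem gen_le_gen_psi0 (hz : ρ.z = lam • LinearMap.id) (hlam : lam ≠ 0) (v : ρ.carrier) :
    gen ρ v ≤ gen ρ (ρ.ψ 0 v) := by
  refine Submodule.span_le.2 ?_
  rintro x ⟨L, hL, rfl⟩
  have h0 : applyL ρ (L ++ [0]) (ρ.ψ 0 v) = (lam / 2) • applyL ρ L v := by
    rw [applyL_append]
    simp [psi0_sq hz, applyL_smul]
  have hL0 : ∀ j ∈ L ++ [0], j ≤ 0 := by
    intro j hj
    rcases List.mem_append.1 hj with h | h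
    · exact hL j h
    · simp at h; omega
  have : applyL ρ L v = ((lam / 2)⁻¹ * (lam / 2)) • applyL ρ L v := by
    rw [inv_mul_cancel₀ (by simp [div_eq_zero_iff, hlam] : lam / 2 ≠ 0), one_smul]
  rw [this, ← smul_smul, ← h0]
  exact Submodule.smul_mem _ _ (mem_gen_of_word hL0)

/-! ### Parity projections -/

def pe (ρ : FMod) : ρ.carrier →ₗ[ℂ] ρ.carrier :=
  ρ.even.subtype ∘ₗ ρ.even.linearProjOfIsCompl ρ.odd ρ.isCompl_even_odd

def po (ρ : FMod) : ρ.carrier →ₗ[ℂ] ρ.carrier :=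
  ρ.odd.subtype ∘ₗ ρ.odd.linearProjOfIsCompl ρ.even ρ.isCompl_even_odd.symm

theorem pe_add_po (v : ρ.carrier) : pe ρ v + po ρ v = v :=
  Submodule.projection_add_projection_eq_self ρ.isCompl_even_odd v

theorem pe_mem_even (v : ρ.carrier) : pe ρ v ∈ ρ.even := (ρ.even.linearProjOfIsCompl ρ.odd ρ.isCompl_even_odd v).2

theorem po_mem_odd (v : ρ.carrier) : po ρ v ∈ ρ.odd := (ρ.odd.linearProjOfIsCompl ρ.even ρ.isCompl_even_odd.symm v).2

theorem pe_of_even {v : ρ.carrier} (hv : v ∈ ρ.even) : pe ρ v = v := by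
  have := Submodule.linearProjOfIsCompl_apply_left ρ.isCompl_even_odd (⟨v, hv⟩ : ρ.even)
  exact congrArg Subtype.val this

theorem pe_of_odd {v : ρ.carrier} (hv : v ∈ ρ.odd) : pe ρ v = 0 := by
  have := Submodule.linearProjOfIsCompl_apply_right' ρ.isCompl_even_odd hv
  exact congrArg Subtype.val this

theorem po_of_odd {v : ρ.carrier} (hv : v ∈ ρ.odd) : po ρ v = v := by
  have := Submodule.linearProjOfIsCompl_apply_left ρ.isCompl_even_odd.symm (⟨v, hv⟩ : ρ.odd)
  exact congrArg Subtype.val this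

theorem po_of_even {v : ρ.carrier} (hv : v ∈ ρ.even) : po ρ v = 0 := by
  have := Submodule.linearProjOfIsCompl_apply_right' ρ.isCompl_even_odd.symm hv
  exact congrArg Subtype.val this

/-- uniqueness of the even/odd decomposition -/
theorem pe_eq_of_decomp {v a b : ρ.carrier} (ha : a ∈ ρ.even) (hb : b ∈ ρ.odd)
    (h : v = a + b) : pe ρ v = a ∧ po ρ v = b := by
  constructor
  · rw [h, map_add, pe_of_even ha, pe_of_odd hb, add_zero]
  · rw [h, map_add, po_of_even ha, po_of_odd hb, zero_add]

theorem graded_pe_mem {W : Submodule ℂ ρ.carrier} (hW : ρ.Graded W) {w : ρ.carrier}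
    (hw : w ∈ W) : pe ρ w ∈ W ∧ po ρ w ∈ W := by
  rw [FMod.Graded] at hW
  rw [hW] at hw
  rcases Submodule.mem_sup.1 hw with ⟨a, ha, b, hb, hab⟩
  have hd := pe_eq_of_decomp (Submodule.mem_inf.1 ha).2 (Submodule.mem_inf.1 hb).2 hab.symm
  rw [hW]
  constructor
  · rw [hd.1]; exact Submodule.mem_sup_left ha
  · rw [hd.2]; exact Submodule.mem_sup_right hb

theorem graded_of_pe {W : Submodule ℂ ρ.carrier} (h : ∀ w ∈ W, pe ρ w ∈ W) :
    ρ.Graded W := by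
  rw [FMod.Graded]
  refine le_antisymm ?_ (sup_le inf_le_left inf_le_left)
  intro w hw
  have h1 : pe ρ w ∈ W ⊓ ρ.even := Submodule.mem_inf.2 ⟨h w hw, pe_mem_even w⟩
  have h2 : po ρ w ∈ W ⊓ ρ.odd := by
    refine Submodule.mem_inf.2 ⟨?_, po_mem_odd w⟩
    have : po ρ w = w - pe ρ w := by rw [eq_sub_iff_add_eq, add_comm, pe_add_po]
    rw [this]
    exact Submodule.sub_mem _ hw (h w hw)
  rw [← pe_add_po w]
  exact Submodule.add_mem _ (Submodule.mem_sup_left h1) (Submodule.mem_sup_right h2)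

/-- a submodule spanned by homogeneous vectors is graded -/
theorem graded_span {S : Set ρ.carrier} (hS : ∀ s ∈ S, s ∈ ρ.even ∨ s ∈ ρ.odd) :
    ρ.Graded (Submodule.span ℂ S) := by
  refine graded_of_pe (fun w hw => ?_)
  induction hw using Submodule.span_induction with
  | mem x hx =>
    rcases hS x hx with h | h
    · rw [pe_of_even h]; exact Submodule.subset_span hx
    · rw [pe_of_odd h]; exact Submodule.zero_mem _
  | zero => rw [map_zero]; exact Submodule.zero_mem _
  | add x y _ _ hx hy => rw [map_add]; exact Submodule.add_mem _ hx hy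
  | smul c x _ hx => rw [map_smul]; exact Submodule.smul_mem _ _ hx

/-- a word of length `L` applied to an even vector is homogeneous -/
theorem applyL_homog {ω : ρ.carrier} (hω : ω ∈ ρ.even) (L : List ℤ) :
    (Even L.length ∧ applyL ρ L ω ∈ ρ.even) ∨ (¬ Even L.length ∧ applyL ρ L ω ∈ ρ.odd) := by
  induction L with
  | nil => exact Or.inl ⟨by simp, hω⟩
  | cons j L ih =>
    rcases ih with ⟨h1, h2⟩ | ⟨h1, h2⟩
    · exact Or.inr ⟨by simp [Nat.even_add_one, h1], ρ.ψ_maps_even j _ h2⟩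
    · exact Or.inl ⟨by simp [Nat.even_add_one, h1], ρ.ψ_maps_odd j _ h2⟩

theorem gen_graded {ω : ρ.carrier} (hω : ω ∈ ρ.even) : ρ.Graded (gen ρ ω) := by
  refine graded_span ?_
  rintro x ⟨L, hL, rfl⟩
  rcases applyL_homog hω L with ⟨_, h⟩ | ⟨_, h⟩
  · exact Or.inl h
  · exact Or.inr h

/-! ### Support and vacuum extraction -/

/-- applying `ψ i` shrinks the positive support -/
theorem support_psi (hz : ρ.z = lam • LinearMap.id) {T : Finset ℤ} {u : ρ.carrier}
    (hu : ∀ j : ℤ, 0 < j → j ∉ T → ρ.ψ j u = 0) {i : ℤ} (hi : 0 < i) :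
    ∀ j : ℤ, 0 < j → j ∉ T.erase i → ρ.ψ j (ρ.ψ i u) = 0 := by
  intro j hj hjT
  rcases eq_or_ne j i with rfl | hne
  · exact psi_sq hz (by omega) u
  · have hjT' : j ∉ T := fun h => hjT (Finset.mem_erase.2 ⟨hne, h⟩)
    have key := ac hz j i u
    rw [if_neg (by omega), hu j hj hjT', map_zero] at key
    linear_combination (norm := module) key

theorem support_psi_opp (hz : ρ.z = lam • LinearMap.id) {T : Finset ℤ} {u : ρ.carrier}
    (hu : ∀ j : ℤ, 0 < j → j ∉ T → ρ.ψ j u = 0) {i : ℤ} (hi : 0 < i) :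
    ∀ j : ℤ, 0 < j → j ∉ T.erase i → ρ.ψ j (ρ.ψ i (ρ.ψ (-i) u)) = 0 := by
  intro j hj hjT
  rcases eq_or_ne j i with rfl | hne
  · exact psi_sq hz (by omega) _
  · have hjT' : j ∉ T := fun h => hjT (Finset.mem_erase.2 ⟨hne, h⟩)
    have k1 := ac hz j i (ρ.ψ (-i) u)
    rw [if_neg (by omega)] at k1
    have k2 := ac hz j (-i) u
    rw [if_neg (by omega), hu j hj hjT', map_zero] at k2
    have k2'' : ρ.ψ j (ρ.ψ (-i) u) = 0 := by simpa using k2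
    rw [k2'', map_zero] at k1
    linear_combination (norm := module) k1

/-- vacuum extraction: from a nonzero vector one reaches a nonzero vacuum vector
by applying finitely many positive modes -/
theorem extract_vacuum (hz : ρ.z = lam • LinearMap.id) :
    ∀ (n : ℕ) (T : Finset ℤ), T.card ≤ n → ∀ u : ρ.carrier, u ≠ 0 →
      (∀ j : ℤ, 0 < j → j ∉ T → ρ.ψ j u = 0) →
      ∃ L : List ℤ, (∀ i ∈ L, 0 < i) ∧ applyL ρ L u ≠ 0 ∧ IsVac ρ (applyL ρ L u) := by
  intro n
  induction n with
  | zero =>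
    intro T hT u hu hsupp
    refine ⟨[], by simp, by simpa using hu, ?_⟩
    intro i hi
    simp only [applyL_nil]
    refine hsupp i hi (fun h => ?_)
    have := Finset.card_pos.2 ⟨i, h⟩
    omega
  | succ n ih =>
    intro T hT u hu hsupp
    by_cases hvac : IsVac ρ u
    · exact ⟨[], by simp, by simpa using hu, by simpa using hvac⟩
    · unfold IsVac at hvac
      push_neg at hvac
      obtain ⟨i, hi, hne⟩ := hvac
      have hiT : i ∈ T := by
        by_contra h
        exact hne (hsupp i hi h)
      have hcard : (T.erase i).card ≤ n := by
        rw [Finset.card_erase_of_mem hiT]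
        omega
      obtain ⟨L, hL, hnz, hv⟩ := ih (T.erase i) hcard (ρ.ψ i u) hne
        (support_psi hz hsupp hi)
      refine ⟨L ++ [i], ?_, ?_, ?_⟩
      · intro j hj
        rcases List.mem_append.1 hj with h | h
        · exact hL j h
        · simp at h; omega
      · rwa [applyL_append, applyL_cons, applyL_nil]
      · rwa [applyL_append, applyL_cons, applyL_nil]

/-- generation: every vector of finite positive support lies in any subspace containing
all vacuum vectors and closed under nonpositive modes. -/
theorem mem_of_closure (hz : ρ.z = lam • LinearMap.id) (hlam : lam ≠ 0)
    (G : Submodule ℂ ρ.carrier)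
    (hvac : ∀ v : ρ.carrier, IsVac ρ v → v ∈ G)
    (hcl : ∀ j : ℤ, j ≤ 0 → ∀ v ∈ G, ρ.ψ j v ∈ G) :
    ∀ (n : ℕ) (T : Finset ℤ), T.card ≤ n → ∀ u : ρ.carrier,
      (∀ j : ℤ, 0 < j → j ∉ T → ρ.ψ j u = 0) → u ∈ G := by
  intro n
  induction n with
  | zero =>
    intro T hT u hsupp
    refine hvac u (fun i hi => hsupp i hi (fun h => ?_))
    have := Finset.card_pos.2 ⟨i, h⟩
    omega
  | succ n ih =>
    intro T hT u hsupp
    by_cases hvacu : IsVac ρ u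
    · exact hvac u hvacu
    · unfold IsVac at hvacu
      push_neg at hvacu
      obtain ⟨i, hi, hne⟩ := hvacu
      have hiT : i ∈ T := by
        by_contra h
        exact hne (hsupp i hi h)
      have hcard : (T.erase i).card ≤ n := by
        rw [Finset.card_erase_of_mem hiT]
        omega
      have h1 : ρ.ψ i u ∈ G := ih (T.erase i) hcard _ (support_psi hz hsupp hi)
      have h2 : ρ.ψ i (ρ.ψ (-i) u) ∈ G := ih (T.erase i) hcard _ (support_psi_opp hz hsupp hi)
      have key := ac hz i (-i) u
      rw [if_pos (by omega)] at key
      have hu_eq : u = lam⁻¹ • (ρ.ψ i (ρ.ψ (-i) u) + ρ.ψ (-i) (ρ.ψ i u)) := by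
        rw [key, smul_smul, inv_mul_cancel₀ hlam, one_smul]
      rw [hu_eq]
      exact Submodule.smul_mem _ _
        (Submodule.add_mem _ h2 (hcl (-i) (by omega) _ h1))

/-! ### The projection onto the vacuum space -/

def pproj (ρ : FMod) (lam : ℂ) (i : ℕ) : ρ.carrier →ₗ[ℂ] ρ.carrier :=
  LinearMap.id - lam⁻¹ • (ρ.ψ (-(i : ℤ)) ∘ₗ ρ.ψ (i : ℤ))

theorem pproj_apply (i : ℕ) (v : ρ.carrier) :
    pproj ρ lam i v = v - lam⁻¹ • ρ.ψ (-(i : ℤ)) (ρ.ψ (i : ℤ) v) := rfl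

theorem pproj_psi_neg (hz : ρ.z = lam • LinearMap.id) (hlam : lam ≠ 0) {i : ℕ} (hi : 1 ≤ i)
    (x : ρ.carrier) : pproj ρ lam i (ρ.ψ (-(i : ℤ)) x) = 0 := by
  rw [pproj_apply]
  have h1 : ρ.ψ (i : ℤ) (ρ.ψ (-(i : ℤ)) x) = lam • x - ρ.ψ (-(i : ℤ)) (ρ.ψ (i : ℤ) x) :=
    psi_opp hz _ x
  rw [h1, map_sub, map_smul, psi_sq hz (by omega : -(i : ℤ) ≠ 0), sub_zero,
    smul_smul, inv_mul_cancel₀ hlam, one_smul, sub_self]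

theorem pproj_comm (hz : ρ.z = lam • LinearMap.id) {i : ℕ} {j : ℤ}
    (h1 : j ≠ (i : ℤ)) (h2 : j ≠ -(i : ℤ)) (x : ρ.carrier) :
    pproj ρ lam i (ρ.ψ j x) = ρ.ψ j (pproj ρ lam i x) := by
  rw [pproj_apply, pproj_apply]
  have k1 := ac hz (i : ℤ) j x
  rw [if_neg (by omega)] at k1
  have k1' : ρ.ψ (i : ℤ) (ρ.ψ j x) = - ρ.ψ j (ρ.ψ (i : ℤ) x) := by
    linear_combination (norm := module) k1
  have k2 := ac hz (-(i : ℤ)) j (ρ.ψ (i : ℤ) x)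
  rw [if_neg (by omega)] at k2
  have k2' : ρ.ψ (-(i : ℤ)) (ρ.ψ j (ρ.ψ (i : ℤ) x))
      = - ρ.ψ j (ρ.ψ (-(i : ℤ)) (ρ.ψ (i : ℤ) x)) := by
    linear_combination (norm := module) k2
  rw [k1', map_neg, k2', map_sub, map_smul]
  module

theorem pproj_vac {u : ρ.carrier} (hu : IsVac ρ u) {i : ℕ} (hi : 1 ≤ i) :
    pproj ρ lam i u = u := by
  rw [pproj_apply, hu (i : ℤ) (by omega), map_zero, smul_zero, sub_zero]

def Q (ρ : FMod) (lam : ℂ) : ℕ → (ρ.carrier →ₗ[ℂ] ρ.carrier)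
  | 0 => LinearMap.id
  | (N + 1) => Q ρ lam N ∘ₗ pproj ρ lam (N + 1)

theorem Q_vac {u : ρ.carrier} (hu : IsVac ρ u) : ∀ N, Q ρ lam N u = u := by
  intro N
  induction N with
  | zero => rfl
  | succ N ih =>
    show Q ρ lam N (pproj ρ lam (N + 1) u) = u
    rw [pproj_vac hu (by omega), ih]

theorem Q_psi_neg (hz : ρ.z = lam • LinearMap.id) (hlam : lam ≠ 0) {j : ℤ} (hj : j < 0) :
    ∀ N : ℕ, -j ≤ (N : ℤ) → ∀ x : ρ.carrier, Q ρ lam N (ρ.ψ j x) = 0 := by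
  intro N
  induction N with
  | zero => intro h; omega
  | succ N ih =>
    intro hN x
    show Q ρ lam N (pproj ρ lam (N + 1) (ρ.ψ j x)) = 0
    rcases eq_or_ne (-j) ((N : ℤ) + 1) with he | hne
    · have hj' : j = -((N + 1 : ℕ) : ℤ) := by push_cast; omega
      rw [hj', pproj_psi_neg hz hlam (by omega), map_zero]
    · have h1 : j ≠ ((N + 1 : ℕ) : ℤ) := by omega
      have h2 : j ≠ -((N + 1 : ℕ) : ℤ) := by push_cast; omega
      rw [pproj_comm hz h1 h2, ih (by omega)]

theorem Q_psi0 (hz : ρ.z = lam • LinearMap.id) :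
    ∀ (N : ℕ) (x : ρ.carrier), Q ρ lam N (ρ.ψ 0 x) = ρ.ψ 0 (Q ρ lam N x) := by
  intro N
  induction N with
  | zero => intro x; rfl
  | succ N ih =>
    intro x
    show Q ρ lam N (pproj ρ lam (N + 1) (ρ.ψ 0 x)) = ρ.ψ 0 (Q ρ lam N (pproj ρ lam (N+1) x))
    rw [pproj_comm hz (by omega) (by omega), ih]

/-- the span of a vacuum vector and its `ψ 0` image -/
def SP (ρ : FMod) (ω : ρ.carrier) : Submodule ℂ ρ.carrier :=
  Submodule.span ℂ {ω, ρ.ψ 0 ω}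

theorem psi0_SP (hz : ρ.z = lam • LinearMap.id) {ω x : ρ.carrier} (hx : x ∈ SP ρ ω) :
    ρ.ψ 0 x ∈ SP ρ ω := by
  induction hx using Submodule.span_induction with
  | mem y hy =>
    rcases hy with rfl | hy
    · exact Submodule.subset_span (by simp)
    · simp only [Set.mem_singleton_iff] at hy
      subst hy
      rw [psi0_sq hz]
      exact Submodule.smul_mem _ _ (Submodule.subset_span (by simp))
  | zero => rw [map_zero]; exact Submodule.zero_mem _
  | add x y _ _ hx hy => rw [map_add]; exact Submodule.add_mem _ hx hy
  | smul c x _ hx => rw [map_smul]; exact Submodule.smul_mem _ _ hx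

theorem Q_word (hz : ρ.z = lam • LinearMap.id) (hlam : lam ≠ 0) {ω : ρ.carrier}
    (hω : IsVac ρ ω) (L : List ℤ) (hL : ∀ j ∈ L, j ≤ 0) :
    ∃ N₀ : ℕ, ∀ N ≥ N₀, Q ρ lam N (applyL ρ L ω) ∈ SP ρ ω := by
  induction L with
  | nil =>
    exact ⟨0, fun N _ => by
      rw [applyL_nil, Q_vac hω]
      exact Submodule.subset_span (by simp)⟩
  | cons j L ih =>
    have hL' : ∀ k ∈ L, k ≤ 0 := fun k hk => hL k (List.mem_cons_of_mem _ hk)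
    have hj : j ≤ 0 := hL j (List.mem_cons_self)
    rcases eq_or_lt_of_le hj with rfl | hj'
    · obtain ⟨N₀, hN₀⟩ := ih hL'
      exact ⟨N₀, fun N hN => by
        rw [applyL_cons, Q_psi0 hz]
        exact psi0_SP hz (hN₀ N hN)⟩
    · refine ⟨(-j).toNat, fun N hN => ?_⟩
      rw [applyL_cons, Q_psi_neg hz hlam hj' N (by omega)]
      exact Submodule.zero_mem _

/-- vectors whose `Q`-limit lies in a given subspace form a submodule -/
def GoodSub (ρ : FMod) (lam : ℂ) (T : Submodule ℂ ρ.carrier) : Submodule ℂ ρ.carrier where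
  carrier := {u | ∃ N₀ : ℕ, ∀ N ≥ N₀, Q ρ lam N u ∈ T}
  zero_mem' := ⟨0, fun N _ => by rw [map_zero]; exact Submodule.zero_mem _⟩
  add_mem' := by
    rintro a b ⟨Na, hNa⟩ ⟨Nb, hNb⟩
    exact ⟨max Na Nb, fun N hN => by
      rw [map_add]
      exact Submodule.add_mem _ (hNa N (le_trans (le_max_left _ _) hN))
        (hNb N (le_trans (le_max_right _ _) hN))⟩
  smul_mem' := by
    rintro c a ⟨Na, hNa⟩
    exact ⟨Na, fun N hN => by
      rw [map_smul]
      exact Submodule.smul_mem _ _ (hNa N hN)⟩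

theorem gen_le_GoodSub (hz : ρ.z = lam • LinearMap.id) (hlam : lam ≠ 0) {ω : ρ.carrier}
    (hω : IsVac ρ ω) {T : Submodule ℂ ρ.carrier} (hT : SP ρ ω ≤ T) :
    gen ρ ω ≤ GoodSub ρ lam T := by
  refine Submodule.span_le.2 ?_
  rintro x ⟨L, hL, rfl⟩
  obtain ⟨N₀, hN₀⟩ := Q_word hz hlam hω L hL
  exact ⟨N₀, fun N hN => hT (hN₀ N hN)⟩

/-- a vacuum vector in a (finite sup of) generated submodules lies in the span of the
generating vacua and their `ψ 0` images -/
theorem vac_mem_SP (hz : ρ.z = lam • LinearMap.id) (hlam : lam ≠ 0) {ω u : ρ.carrier}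
    (hω : IsVac ρ ω) (hu : IsVac ρ u) {T : Submodule ℂ ρ.carrier} (hT : SP ρ ω ≤ T)
    (hmem : u ∈ GoodSub ρ lam T) : u ∈ T := by
  obtain ⟨N₀, hN₀⟩ := hmem
  have := hN₀ N₀ le_rfl
  rwa [Q_vac hu] at this

/-! ### Simplicity of `gen ω` for a nonzero even vacuum vector -/

theorem support_finset (hsmooth : ρ.IsSmooth) (x : ρ.carrier) :
    ∃ T : Finset ℤ, ∀ j : ℤ, 0 < j → j ∉ T → ρ.ψ j x = 0 := by
  obtain ⟨n, hn⟩ := hsmooth x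
  refine ⟨Finset.Icc 1 (n : ℤ), fun j hj hjT => ?_⟩
  refine hn j ?_
  simp only [Finset.mem_Icc, not_and, not_le] at hjT
  omega

/-- an even vacuum vector belongs to any invariant graded submodule containing a vector
`a • ω + b • ψ 0 ω ≠ 0`. -/
theorem omega_mem_of_SP (hz : ρ.z = lam • LinearMap.id) (hlam : lam ≠ 0)
    {ω : ρ.carrier} (he : ω ∈ ρ.even) {U : Submodule ℂ ρ.carrier}
    (hU : ρ.Invariant U) (hUg : ρ.Graded U) {u : ρ.carrier} (hu : u ∈ U) (hune : u ≠ 0)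
    (hSP : u ∈ SP ρ ω) : ω ∈ U := by
  obtain ⟨a, b, hab⟩ := Submodule.mem_span_pair.1 hSP
  have hdecomp := pe_eq_of_decomp (Submodule.smul_mem _ a he)
    (Submodule.smul_mem _ b (ρ.ψ_maps_even 0 ω he)) hab.symm
  have hmem := graded_pe_mem hUg hu
  have hane : a ≠ 0 ∨ b ≠ 0 := by
    by_contra h
    push_neg at h
    rw [h.1, h.2, zero_smul, zero_smul, add_zero] at hab
    exact hune hab.symm
  rcases hane with ha | hb
  · have : a • ω ∈ U := hdecomp.1 ▸ hmem.1
    have := Submodule.smul_mem U a⁻¹ this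
    rwa [smul_smul, inv_mul_cancel₀ ha, one_smul] at this
  · have h1 : b • ρ.ψ 0 ω ∈ U := hdecomp.2 ▸ hmem.2
    have h2 : ρ.ψ 0 ω ∈ U := by
      have := Submodule.smul_mem U b⁻¹ h1
      rwa [smul_smul, inv_mul_cancel₀ hb, one_smul] at this
    have h3 : ρ.ψ 0 (ρ.ψ 0 ω) ∈ U := hU.1 0 _ h2
    rw [psi0_sq hz] at h3
    have := Submodule.smul_mem U (lam / 2)⁻¹ h3
    rwa [smul_smul, inv_mul_cancel₀ (by simp [div_eq_zero_iff, hlam] : lam / 2 ≠ 0),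
      one_smul] at this

theorem gen_simple (hsmooth : ρ.IsSmooth) (hz : ρ.z = lam • LinearMap.id) (hlam : lam ≠ 0)
    {ω : ρ.carrier} (hω : IsVac ρ ω) (he : ω ∈ ρ.even) (hne : ω ≠ 0) :
    ρ.IsSimpleSubmodule (gen ρ ω) := by
  refine ⟨gen_invariant hz hω, gen_graded he, ?_, ?_⟩
  · intro h
    exact hne (by simpa [h] using self_mem_gen (ρ := ρ) ω)
  · intro U hle hU hUg
    by_cases hbot : U = ⊥
    · exact Or.inl hbot
    right
    obtain ⟨x, hxU, hxne⟩ := Submodule.exists_mem_ne_zero_of_ne_bot hbot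
    obtain ⟨T, hT⟩ := support_finset hsmooth x
    obtain ⟨L, hLpos, hnz, hvac⟩ := extract_vacuum hz T.card T le_rfl x hxne hT
    set u := applyL ρ L x with hu_def
    have huU : u ∈ U := applyL_mem_of_invariant hU.1 L hxU
    have huGen : u ∈ gen ρ ω := hle huU
    have huSP : u ∈ SP ρ ω :=
      vac_mem_SP hz hlam hω hvac le_rfl (gen_le_GoodSub hz hlam hω le_rfl huGen)
    have hωU : ω ∈ U := omega_mem_of_SP hz hlam he hU hUg huU hnz huSP
    refine le_antisymm hle ?_
    refine Submodule.span_le.2 ?_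
    rintro y ⟨L', hL', rfl⟩
    exact applyL_mem_of_invariant hU.1 L' hωU

/-! ### Assembly -/

def VacSub (ρ : FMod) : Submodule ℂ ρ.carrier where
  carrier := {v | IsVac ρ v}
  zero_mem' := fun i _ => map_zero _
  add_mem' := by
    intro a b ha hb i hi
    rw [map_add, ha i hi, hb i hi, add_zero]
  smul_mem' := by
    intro c a ha i hi
    rw [map_smul, ha i hi, smul_zero]

/-- the parity components of a vacuum vector are vacuum vectors -/
theorem pe_po_vac {v : ρ.carrier} (hv : IsVac ρ v) : IsVac ρ (pe ρ v) ∧ IsVac ρ (po ρ v) := by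
  have key : ∀ i : ℤ, 0 < i → ρ.ψ i (pe ρ v) = 0 ∧ ρ.ψ i (po ρ v) = 0 := by
    intro i hi
    have hsum : ρ.ψ i (pe ρ v) + ρ.ψ i (po ρ v) = 0 := by
      rw [← map_add, pe_add_po, hv i hi]
    have h1 : ρ.ψ i (pe ρ v) ∈ ρ.odd := ρ.ψ_maps_even i _ (pe_mem_even v)
    have h2 : ρ.ψ i (po ρ v) ∈ ρ.even := ρ.ψ_maps_odd i _ (po_mem_odd v)
    have h3 : ρ.ψ i (pe ρ v) = - ρ.ψ i (po ρ v) := eq_neg_of_add_eq_zero_left hsum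
    have h4 : ρ.ψ i (pe ρ v) ∈ ρ.even := by
      rw [h3]; exact Submodule.neg_mem _ h2
    have h5 : ρ.ψ i (pe ρ v) = 0 := by
      have hd := ρ.isCompl_even_odd.disjoint
      rw [Submodule.disjoint_def] at hd
      exact hd _ h4 h1
    refine ⟨h5, ?_⟩
    rw [h5, zero_add] at hsum
    exact hsum
  exact ⟨fun i hi => (key i hi).1, fun i hi => (key i hi).2⟩

theorem psi0_vac (hz : ρ.z = lam • LinearMap.id) {v : ρ.carrier} (hv : IsVac ρ v) :
    IsVac ρ (ρ.ψ 0 v) := by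
  intro i hi
  have k := ac hz i 0 v
  rw [if_neg (by omega), hv i hi, map_zero] at k
  linear_combination (norm := module) k

theorem iSup_psi_closed {κ : Sort*} (f : κ → Submodule ℂ ρ.carrier)
    (h : ∀ k, ∀ m : ℤ, ∀ v ∈ f k, ρ.ψ m v ∈ f k) :
    ∀ m : ℤ, ∀ v ∈ ⨆ k, f k, ρ.ψ m v ∈ ⨆ k, f k := by
  intro m v hv
  have : (⨆ k, f k) ≤ Submodule.comap (ρ.ψ m) (⨆ k, f k) := by
    refine iSup_le fun k => ?_
    intro x hx
    exact Submodule.mem_comap.2 (Submodule.mem_iSup_of_mem k (h k m x hx))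
  exact this hv

theorem statement7_aux (ρ : FMod) (hsmooth : ρ.IsSmooth) (lam : ℂ) (hlam : lam ≠ 0)
    (hz : ρ.z = lam • LinearMap.id) :
    ρ.IsCompletelyReducible := by
  classical
  set Ωe : Submodule ℂ ρ.carrier := VacSub ρ ⊓ ρ.even with hΩe
  set ι := Module.Basis.ofVectorSpaceIndex ℂ Ωe with hι
  set B : Module.Basis ι ℂ Ωe := Module.Basis.ofVectorSpace ℂ Ωe with hB
  set w : ι → ρ.carrier := fun i => ((B i : Ωe) : ρ.carrier) with hw
  have hw_vac : ∀ i, IsVac ρ (w i) := fun i => ((B i).2 : _ ∧ _).1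
  have hw_even : ∀ i, w i ∈ ρ.even := fun i => ((B i).2 : _ ∧ _).2
  have hw_ne : ∀ i, w i ≠ 0 := by
    intro i h
    exact B.ne_zero i (Subtype.ext h)
  have hw_li : LinearIndependent ℂ w :=
    B.linearIndependent.map' Ωe.subtype (Submodule.ker_subtype _)
  set W : ι → Submodule ℂ ρ.carrier := fun i => gen ρ (w i) with hW
  have hW_simple : ∀ i, ρ.IsSimpleSubmodule (W i) := fun i =>
    gen_simple hsmooth hz hlam (hw_vac i) (hw_even i) (hw_ne i)
  -- any vacuum vector in `Ωe` generates inside the `iSup`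
  have hgen_le : ∀ η ∈ Ωe, gen ρ η ≤ ⨆ i, W i := by
    intro η hη
    have hmem : (⟨η, hη⟩ : Ωe) ∈ Submodule.span ℂ (Set.range B) := by
      rw [B.span_eq]; trivial
    have hmap : η ∈ Submodule.map Ωe.subtype (Submodule.span ℂ (Set.range B)) :=
      ⟨⟨η, hη⟩, hmem, rfl⟩
    rw [Submodule.map_span] at hmap
    have himg : ⇑Ωe.subtype '' Set.range ⇑B = Set.range w := by
      rw [← Set.range_comp]
      rfl
    rw [himg] at hmap
    refine le_trans (gen_le_of_mem_span hmap) ?_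
    refine iSup_le ?_
    rintro ⟨x, i, rfl⟩
    exact le_iSup W i
  -- the `iSup` is everything
  have htop : (⨆ i, W i) = ⊤ := by
    rw [eq_top_iff]
    intro v _
    obtain ⟨T, hT⟩ := support_finset hsmooth v
    refine mem_of_closure hz hlam _ ?_ ?_ T.card T le_rfl v hT
    · -- all vacuum vectors are in the iSup
      intro u hu
      have hue : pe ρ u ∈ Ωe := ⟨(pe_po_vac hu).1, pe_mem_even u⟩
      have huo0 : ρ.ψ 0 (po ρ u) ∈ Ωe :=
        ⟨psi0_vac hz (pe_po_vac hu).2, ρ.ψ_maps_odd 0 _ (po_mem_odd u)⟩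
      have h1 : pe ρ u ∈ ⨆ i, W i := hgen_le _ hue (self_mem_gen _)
      have h2 : po ρ u ∈ ⨆ i, W i := by
        refine hgen_le _ huo0 ?_
        exact gen_le_gen_psi0 hz hlam (po ρ u) (self_mem_gen _)
      rw [← pe_add_po u]
      exact Submodule.add_mem _ h1 h2
    · -- closed under nonpositive modes
      intro j hj v hv
      exact iSup_psi_closed W
        (fun k m x hx => (gen_invariant hz (hw_vac k)).1 m x hx) j v hv
  -- independence
  have hindep : iSupIndep W := by
    intro i
    rw [Submodule.disjoint_def]
    intro x hxW hxK
    by_contra hxne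
    set K := ⨆ (j) (_ : j ≠ i), W j with hK
    have hK' : K = ⨆ (j : {j : ι // j ≠ i}), W j.1 := by
      rw [hK, iSup_subtype']
    have hKpsi : ∀ m : ℤ, ∀ v ∈ K, ρ.ψ m v ∈ K := by
      rw [hK']
      exact iSup_psi_closed _ (fun k m x hx => (gen_invariant hz (hw_vac k.1)).1 m x hx)
    obtain ⟨T, hT⟩ := support_finset hsmooth x
    obtain ⟨L, hLpos, hnz, hvac⟩ := extract_vacuum hz T.card T le_rfl x hxne hT
    set u := applyL ρ L x with hu_def
    have huW : u ∈ W i :=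
      applyL_mem_of_invariant (gen_invariant hz (hw_vac i)).1 L hxW
    have huK : u ∈ K := applyL_mem_of_invariant hKpsi L hxK
    -- u is in the span of w i and ψ 0 (w i)
    have huSP : u ∈ SP ρ (w i) :=
      vac_mem_SP hz hlam (hw_vac i) hvac le_rfl
        (gen_le_GoodSub hz hlam (hw_vac i) le_rfl huW)
    -- u is in the span of the other generators
    rw [hK'] at huK
    obtain ⟨s, hs⟩ := Submodule.mem_iSup_iff_exists_finset.1 huK
    set Se : Set ι := Subtype.val '' (↑s : Set {j : ι // j ≠ i}) with hSe
    set TT : Submodule ℂ ρ.carrier :=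
      Submodule.span ℂ (w '' Se ∪ (fun j => ρ.ψ 0 (w j)) '' Se) with hTT
    have hsle : (⨆ j ∈ s, W (j : ι)) ≤ GoodSub ρ lam TT := by
      refine iSup_le fun j => iSup_le fun hjs => ?_
      refine gen_le_GoodSub hz hlam (hw_vac j.1) ?_
      rw [SP]
      refine Submodule.span_le.2 ?_
      intro y hy
      rcases hy with rfl | hy
      · exact Submodule.subset_span (Or.inl ⟨j.1, ⟨j, hjs, rfl⟩, rfl⟩)
      · simp only [Set.mem_singleton_iff] at hy
        subst hy
        exact Submodule.subset_span (Or.inr ⟨j.1, ⟨j, hjs, rfl⟩, rfl⟩)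
    have huTT : u ∈ TT := by
      obtain ⟨N₀, hN₀⟩ := hsle hs
      have := hN₀ N₀ le_rfl
      rwa [Q_vac hvac] at this
    -- compare parity components
    obtain ⟨a, b, hab⟩ := Submodule.mem_span_pair.1 huSP
    have hpe_u : pe ρ u = a • w i := by
      rw [← hab, map_add, map_smul, map_smul, pe_of_even (hw_even i),
        pe_of_odd (ρ.ψ_maps_even 0 _ (hw_even i)), smul_zero, add_zero]
    have hpo_u : po ρ u = b • ρ.ψ 0 (w i) := by
      rw [← hab, map_add, map_smul, map_smul, po_of_even (hw_even i),
        po_of_odd (ρ.ψ_maps_even 0 _ (hw_even i)), smul_zero, zero_add]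
    have hpeTT : pe ρ u ∈ Submodule.span ℂ (w '' Se) := by
      have : TT ≤ Submodule.comap (pe ρ) (Submodule.span ℂ (w '' Se)) := by
        rw [hTT]
        refine Submodule.span_le.2 ?_
        intro y hy
        rcases hy with ⟨j, hj, rfl⟩ | ⟨j, hj, rfl⟩
        · refine Submodule.mem_comap.2 ?_
          rw [pe_of_even (hw_even j)]
          exact Submodule.subset_span ⟨j, hj, rfl⟩
        · refine Submodule.mem_comap.2 ?_
          rw [pe_of_odd (ρ.ψ_maps_even 0 _ (hw_even j))]
          exact Submodule.zero_mem _
      exact this huTT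
    have hpoTT : po ρ u ∈ Submodule.span ℂ ((fun j => ρ.ψ 0 (w j)) '' Se) := by
      have : TT ≤ Submodule.comap (po ρ) (Submodule.span ℂ ((fun j => ρ.ψ 0 (w j)) '' Se)) := by
        rw [hTT]
        refine Submodule.span_le.2 ?_
        intro y hy
        rcases hy with ⟨j, hj, rfl⟩ | ⟨j, hj, rfl⟩
        · refine Submodule.mem_comap.2 ?_
          rw [po_of_even (hw_even j)]
          exact Submodule.zero_mem _
        · refine Submodule.mem_comap.2 ?_
          rw [po_of_odd (ρ.ψ_maps_even 0 _ (hw_even j))]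
          exact Submodule.subset_span ⟨j, hj, rfl⟩
      exact this huTT
    have hiSe : i ∉ Se := by
      rintro ⟨⟨j, hj⟩, -, hji⟩
      exact hj hji
    -- a = 0
    have ha : a = 0 := by
      by_contra ha
      have : w i ∈ Submodule.span ℂ (w '' Se) := by
        have := Submodule.smul_mem _ a⁻¹ (hpe_u ▸ hpeTT)
        rwa [smul_smul, inv_mul_cancel₀ ha, one_smul] at this
      exact hw_li.notMem_span_image hiSe this
    -- b = 0
    have hψ0w_li : LinearIndependent ℂ (fun j => ρ.ψ 0 (w j)) := by
      have hker : LinearMap.ker (ρ.ψ 0) = ⊥ := by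
        rw [LinearMap.ker_eq_bot']
        intro m hm
        have := psi0_sq hz m
        rw [hm, map_zero] at this
        have h2 : (lam / 2) • m = 0 := this.symm
        rcases smul_eq_zero.1 h2 with h | h
        · exact absurd h (by simp [div_eq_zero_iff, hlam])
        · exact h
      exact hw_li.map' (ρ.ψ 0) hker
    have hb : b = 0 := by
      by_contra hb
      have : ρ.ψ 0 (w i) ∈ Submodule.span ℂ ((fun j => ρ.ψ 0 (w j)) '' Se) := by
        have := Submodule.smul_mem _ b⁻¹ (hpo_u ▸ hpoTT)
        rwa [smul_smul, inv_mul_cancel₀ hb, one_smul] at this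
      exact hψ0w_li.notMem_span_image hiSe this
    have : u = 0 := by
      rw [← pe_add_po u, hpe_u, hpo_u, ha, hb, zero_smul, zero_smul, add_zero]
    exact hnz this
  exact ⟨ι, W, hW_simple, hindep, htop⟩

end FModCR

/-- **Statement 7** (Lemma 3.8).  Let `V` be a smooth `F`-module on which `z` acts as a
nonzero scalar `λ`.  Then `V` is completely reducible. -/
theorem statement7 (ρ : FMod) (hsmooth : ρ.IsSmooth) (lam : ℂ) (hlam : lam ≠ 0)
    (hz : ρ.z = lam • LinearMap.id) :
    ρ.IsCompletelyReducible :=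
  FModCR.statement7_aux ρ hsmooth lam hlam hz

end
end

section
/- Every simple Harish-Chandra S-module is either a highest weight module, a lowest weight module, or a bounded module. -/
noncomputable section

/-- A module over the Fermion–Virasoro algebra `S = S(0)`:  a `ℤ/2`-graded complex
vector space with even operators `L m` (`m ∈ ℤ`), odd operators `ψ n` (`n ∈ ℤ`) and
even central operators `c`, `z`, subject to the defining relations of `S`. -/
structure SMod : Type 1 where
  carrier : Type
  [isAddCommGroup : AddCommGroup carrier]
  [isModule : Module ℂ carrier]
  L : ℤ → carrier →ₗ[ℂ] carrier
  ψ : ℤ → carrier →ₗ[ℂ] carrier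
  c : carrier →ₗ[ℂ] carrier
  z : carrier →ₗ[ℂ] carrier
  even : Submodule ℂ carrier
  odd : Submodule ℂ carrier
  isCompl_even_odd : IsCompl even odd
  L_maps_even : ∀ (m : ℤ), ∀ v ∈ even, L m v ∈ even
  L_maps_odd : ∀ (m : ℤ), ∀ v ∈ odd, L m v ∈ odd
  ψ_maps_even : ∀ (n : ℤ), ∀ v ∈ even, ψ n v ∈ odd
  ψ_maps_odd : ∀ (n : ℤ), ∀ v ∈ odd, ψ n v ∈ even
  c_maps_even : ∀ v ∈ even, c v ∈ even
  c_maps_odd : ∀ v ∈ odd, c v ∈ odd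
  z_maps_even : ∀ v ∈ even, z v ∈ even
  z_maps_odd : ∀ v ∈ odd, z v ∈ odd
  rel_LL : ∀ m n : ℤ, L m ∘ₗ L n - L n ∘ₗ L m =
    ((m : ℂ) - (n : ℂ)) • L (m + n) +
      (if m + n = 0 then (((m : ℂ) ^ 3 - (m : ℂ)) / 12) • c else 0)
  rel_Lψ : ∀ m n : ℤ, L m ∘ₗ ψ n - ψ n ∘ₗ L m = (-(n : ℂ) - (m : ℂ) / 2) • ψ (m + n)
  rel_ψψ : ∀ m n : ℤ, ψ m ∘ₗ ψ n + ψ n ∘ₗ ψ m = if m + n = 0 then z else 0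
  c_comm_L : ∀ m : ℤ, c ∘ₗ L m = L m ∘ₗ c
  c_comm_ψ : ∀ n : ℤ, c ∘ₗ ψ n = ψ n ∘ₗ c
  z_comm_L : ∀ m : ℤ, z ∘ₗ L m = L m ∘ₗ z
  z_comm_ψ : ∀ n : ℤ, z ∘ₗ ψ n = ψ n ∘ₗ z
  c_comm_z : c ∘ₗ z = z ∘ₗ c

attribute [instance] SMod.isAddCommGroup SMod.isModule

/-- A submodule invariant under the action of `S`. -/
def SMod.Invariant (ρ : SMod) (W : Submodule ℂ ρ.carrier) : Prop :=
  (∀ (m : ℤ), ∀ v ∈ W, ρ.L m v ∈ W) ∧ (∀ (n : ℤ), ∀ v ∈ W, ρ.ψ n v ∈ W) ∧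
    (∀ v ∈ W, ρ.c v ∈ W) ∧ (∀ v ∈ W, ρ.z v ∈ W)

/-- A `ℤ/2`-graded submodule. -/
def SMod.Graded (ρ : SMod) (W : Submodule ℂ ρ.carrier) : Prop :=
  W = (W ⊓ ρ.even) ⊔ (W ⊓ ρ.odd)

/-- A simple `S`-module: nonzero, and the only graded invariant submodules are `⊥`, `⊤`. -/
def SMod.IsSimple (ρ : SMod) : Prop :=
  (∃ v : ρ.carrier, v ≠ 0) ∧
    ∀ W : Submodule ℂ ρ.carrier, ρ.Invariant W → ρ.Graded W → W = ⊥ ∨ W = ⊤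

/-- A smooth `S`-module: each vector is annihilated by `L i` and `ψ i` for all
sufficiently large `i`. -/
def SMod.IsSmooth (ρ : SMod) : Prop :=
  ∀ v : ρ.carrier, ∃ n : ℕ, ∀ i : ℤ, (n : ℤ) < i → ρ.L i v = 0 ∧ ρ.ψ i v = 0

/-- An isomorphism of `S`-modules. -/
structure SIso (ρ σ : SMod) where
  e : ρ.carrier ≃ₗ[ℂ] σ.carrier
  map_even : ∀ v ∈ ρ.even, e v ∈ σ.even
  map_odd : ∀ v ∈ ρ.odd, e v ∈ σ.odd
  map_L : ∀ (m : ℤ) (v : ρ.carrier), e (ρ.L m v) = σ.L m (e v)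
  map_ψ : ∀ (n : ℤ) (v : ρ.carrier), e (ρ.ψ n v) = σ.ψ n (e v)
  map_c : ∀ v : ρ.carrier, e (ρ.c v) = σ.c (e v)
  map_z : ∀ v : ρ.carrier, e (ρ.z v) = σ.z (e v)
/-- A module over the Virasoro algebra `Vir = span{c, L_i : i ∈ ℤ}`. -/
structure VirMod : Type 1 where
  carrier : Type
  [isAddCommGroup : AddCommGroup carrier]
  [isModule : Module ℂ carrier]
  L : ℤ → carrier →ₗ[ℂ] carrier
  c : carrier →ₗ[ℂ] carrier
  rel_LL : ∀ m n : ℤ, L m ∘ₗ L n - L n ∘ₗ L m =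
    ((m : ℂ) - (n : ℂ)) • L (m + n) +
      (if m + n = 0 then (((m : ℂ) ^ 3 - (m : ℂ)) / 12) • c else 0)
  c_comm_L : ∀ m : ℤ, c ∘ₗ L m = L m ∘ₗ c

attribute [instance] VirMod.isAddCommGroup VirMod.isModule

/-- A submodule invariant under the action of `Vir`. -/
def VirMod.Invariant (σ : VirMod) (W : Submodule ℂ σ.carrier) : Prop :=
  (∀ (m : ℤ), ∀ v ∈ W, σ.L m v ∈ W) ∧ (∀ v ∈ W, σ.c v ∈ W)

/-- A simple `Vir`-module. -/
def VirMod.IsSimple (σ : VirMod) : Prop :=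
  (∃ v : σ.carrier, v ≠ 0) ∧
    ∀ W : Submodule ℂ σ.carrier, σ.Invariant W → W = ⊥ ∨ W = ⊤

/-- A smooth `Vir`-module. -/
def VirMod.IsSmooth (σ : VirMod) : Prop :=
  ∀ v : σ.carrier, ∃ n : ℕ, ∀ i : ℤ, (n : ℤ) < i → σ.L i v = 0
/-- The weight space `V_α = {v ∈ V : L_0 v = α v}` of an `S`-module. -/
def SMod.wtSpace (ρ : SMod) (α : ℂ) : Submodule ℂ ρ.carrier where
  carrier := {v | ρ.L 0 v = α • v}
  zero_mem' := by simp
  add_mem' := by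
    intro a b ha hb
    simp only [Set.mem_setOf_eq] at *
    rw [map_add, ha, hb, smul_add]
  smul_mem' := by
    intro t v hv
    simp only [Set.mem_setOf_eq] at *
    rw [map_smul, hv, smul_comm]

/-- A weight `S`-module: `L_0` acts diagonally, i.e. `V = ⊕_{α ∈ ℂ} V_α`. -/
def SMod.IsWeight (ρ : SMod) : Prop :=
  iSupIndep ρ.wtSpace ∧ (⨆ α : ℂ, ρ.wtSpace α) = ⊤

/-- A highest weight `S`-module: a weight module with `Supp(V) ⊆ α + ℤ_{≥0}`. -/
def SMod.IsHighestWeight (ρ : SMod) : Prop :=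
  ρ.IsWeight ∧ ∃ α : ℂ, ∀ β : ℂ, ρ.wtSpace β ≠ ⊥ → ∃ n : ℕ, β = α + n

/-- A lowest weight `S`-module: a weight module with `Supp(V) ⊆ α - ℤ_{≥0}`. -/
def SMod.IsLowestWeight (ρ : SMod) : Prop :=
  ρ.IsWeight ∧ ∃ α : ℂ, ∀ β : ℂ, ρ.wtSpace β ≠ ⊥ → ∃ n : ℕ, β = α - n

/-- A Harish-Chandra `S`-module: a weight module with finite-dimensional weight spaces. -/
def SMod.IsHarishChandra (ρ : SMod) : Prop :=
  ρ.IsWeight ∧ ∀ α : ℂ, FiniteDimensional ℂ (ρ.wtSpace α)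

/-- A bounded `S`-module: a weight module whose weight space dimensions are uniformly
bounded. -/
def SMod.IsBounded (ρ : SMod) : Prop :=
  ρ.IsWeight ∧ ∃ N : ℕ, ∀ α : ℂ,
    FiniteDimensional ℂ (ρ.wtSpace α) ∧ Module.finrank ℂ (ρ.wtSpace α) ≤ N

/-- The weight space `V_α` of a `Vir`-module. -/
def VirMod.wtSpace (σ : VirMod) (α : ℂ) : Submodule ℂ σ.carrier where
  carrier := {v | σ.L 0 v = α • v}
  zero_mem' := by simp
  add_mem' := by
    intro a b ha hb
    simp only [Set.mem_setOf_eq] at *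
    rw [map_add, ha, hb, smul_add]
  smul_mem' := by
    intro t v hv
    simp only [Set.mem_setOf_eq] at *
    rw [map_smul, hv, smul_comm]

/-- A weight `Vir`-module. -/
def VirMod.IsWeight (σ : VirMod) : Prop :=
  iSupIndep σ.wtSpace ∧ (⨆ α : ℂ, σ.wtSpace α) = ⊤

/-- A highest weight `Vir`-module. -/
def VirMod.IsHighestWeight (σ : VirMod) : Prop :=
  σ.IsWeight ∧ ∃ α : ℂ, ∀ β : ℂ, σ.wtSpace β ≠ ⊥ → ∃ n : ℕ, β = α + n

/-- A Harish-Chandra `Vir`-module. -/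
def VirMod.IsHarishChandra (σ : VirMod) : Prop :=
  σ.IsWeight ∧ ∀ α : ℂ, FiniteDimensional ℂ (σ.wtSpace α)

/-- The `Vir`-module underlying an `S`-module (restriction to the Virasoro subalgebra). -/
def SMod.toVir (ρ : SMod) : VirMod where
  carrier := ρ.carrier
  L := ρ.L
  c := ρ.c
  rel_LL := ρ.rel_LL
  c_comm_L := ρ.c_comm_L

namespace SMod

variable {ρ : SMod}

lemma mem_wt {β : ℂ} {v : ρ.carrier} : v ∈ ρ.wtSpace β ↔ ρ.L 0 v = β • v := Iff.rfl

lemma pLL (m n : ℤ) (v : ρ.carrier) :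
    ρ.L m (ρ.L n v) - ρ.L n (ρ.L m v) = ((m : ℂ) - n) • ρ.L (m + n) v +
      (if m + n = 0 then (((m : ℂ) ^ 3 - m) / 12) • ρ.c v else 0) := by
  have h := LinearMap.ext_iff.1 (ρ.rel_LL m n) v
  simp only [LinearMap.sub_apply, LinearMap.comp_apply, LinearMap.add_apply,
    LinearMap.smul_apply] at h
  rw [apply_ite (fun g : ρ.carrier →ₗ[ℂ] ρ.carrier => g v)] at h
  simpa using h

lemma pLL' {m n : ℤ} (hmn : m + n ≠ 0) (v : ρ.carrier) :
    ρ.L m (ρ.L n v) - ρ.L n (ρ.L m v) = ((m : ℂ) - n) • ρ.L (m + n) v := by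
  have h := ρ.pLL m n v
  rwa [if_neg hmn, add_zero] at h

lemma pLψ (m n : ℤ) (v : ρ.carrier) :
    ρ.L m (ρ.ψ n v) - ρ.ψ n (ρ.L m v) = (-(n : ℂ) - m / 2) • ρ.ψ (m + n) v := by
  have h := LinearMap.ext_iff.1 (ρ.rel_Lψ m n) v
  simpa using h

lemma pψψ (m n : ℤ) (v : ρ.carrier) :
    ρ.ψ m (ρ.ψ n v) + ρ.ψ n (ρ.ψ m v) = if m + n = 0 then ρ.z v else 0 := by
  have h := LinearMap.ext_iff.1 (ρ.rel_ψψ m n) v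
  rw [apply_ite (fun g : ρ.carrier →ₗ[ℂ] ρ.carrier => g v)] at h
  simpa using h

lemma pψψ' {m n : ℤ} (hmn : m + n ≠ 0) (v : ρ.carrier) :
    ρ.ψ m (ρ.ψ n v) = - ρ.ψ n (ρ.ψ m v) := by
  have h := ρ.pψψ m n v
  rw [if_neg hmn] at h
  exact eq_neg_of_add_eq_zero_left h

lemma pψψ_same {m : ℤ} (hm : m ≠ 0) (v : ρ.carrier) : ρ.ψ m (ρ.ψ m v) = 0 := by
  have h := ρ.pψψ m m v
  rw [if_neg (by omega)] at h
  rw [← two_smul ℂ] at h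
  simpa using h

lemma pcL (m : ℤ) (v : ρ.carrier) : ρ.c (ρ.L m v) = ρ.L m (ρ.c v) :=
  LinearMap.ext_iff.1 (ρ.c_comm_L m) v

lemma pcψ (n : ℤ) (v : ρ.carrier) : ρ.c (ρ.ψ n v) = ρ.ψ n (ρ.c v) :=
  LinearMap.ext_iff.1 (ρ.c_comm_ψ n) v

lemma pzL (m : ℤ) (v : ρ.carrier) : ρ.z (ρ.L m v) = ρ.L m (ρ.z v) :=
  LinearMap.ext_iff.1 (ρ.z_comm_L m) v

lemma pzψ (n : ℤ) (v : ρ.carrier) : ρ.z (ρ.ψ n v) = ρ.ψ n (ρ.z v) :=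
  LinearMap.ext_iff.1 (ρ.z_comm_ψ n) v

lemma pcz (v : ρ.carrier) : ρ.c (ρ.z v) = ρ.z (ρ.c v) :=
  LinearMap.ext_iff.1 ρ.c_comm_z v

lemma wt_L {β : ℂ} (m : ℤ) {v : ρ.carrier} (hv : v ∈ ρ.wtSpace β) :
    ρ.L m v ∈ ρ.wtSpace (β - m) := by
  rw [mem_wt] at hv ⊢
  have h := ρ.pLL 0 m v
  rw [sub_eq_iff_eq_add] at h
  norm_num at h
  rw [h, hv, map_smul]
  module

lemma wt_ψ {β : ℂ} (n : ℤ) {v : ρ.carrier} (hv : v ∈ ρ.wtSpace β) :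
    ρ.ψ n v ∈ ρ.wtSpace (β - n) := by
  rw [mem_wt] at hv ⊢
  have h := ρ.pLψ 0 n v
  rw [sub_eq_iff_eq_add] at h
  rw [zero_add] at h
  rw [h, hv, map_smul]
  push_cast
  module

lemma wt_c {β : ℂ} {v : ρ.carrier} (hv : v ∈ ρ.wtSpace β) : ρ.c v ∈ ρ.wtSpace β := by
  rw [mem_wt] at hv ⊢
  rw [← ρ.pcL 0 v, hv, map_smul]

lemma wt_z {β : ℂ} {v : ρ.carrier} (hv : v ∈ ρ.wtSpace β) : ρ.z v ∈ ρ.wtSpace β := by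
  rw [mem_wt] at hv ⊢
  rw [← ρ.pzL 0 v, hv, map_smul]

end SMod
namespace SMod

variable {ρ : SMod}

/-- `v` is annihilated by `L (ε m)` and `ψ (ε m)` for all `m ≥ K`. -/
def Van (ρ : SMod) (ε K : ℤ) (v : ρ.carrier) : Prop :=
  ∀ m : ℤ, K ≤ m → ρ.L (ε * m) v = 0 ∧ ρ.ψ (ε * m) v = 0

lemma van_mono {ε K K' : ℤ} (h : K ≤ K') {v : ρ.carrier} (hv : ρ.Van ε K v) :
    ρ.Van ε K' v := fun m hm => hv m (le_trans h hm)

lemma addL {ε : ℤ} (hε : ε ≠ 0) {a b : ℤ} (hab : a ≠ b) (hs : a + b ≠ 0) {v : ρ.carrier}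
    (ha : ρ.L (ε * a) v = 0) (hb : ρ.L (ε * b) v = 0) : ρ.L (ε * (a + b)) v = 0 := by
  have h := ρ.pLL' (m := ε * a) (n := ε * b)
    (show ε * a + ε * b ≠ 0 by rw [← mul_add]; exact mul_ne_zero hε hs) v
  rw [hb, map_zero, ha, map_zero, sub_zero] at h
  have hc : ((ε * a : ℤ) : ℂ) - ((ε * b : ℤ) : ℂ) ≠ 0 := by
    rw [← Int.cast_sub, Int.cast_ne_zero, ← mul_sub]
    exact mul_ne_zero hε (sub_ne_zero.2 hab)
  have h2 := (smul_eq_zero.1 h.symm).resolve_left hc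
  rwa [show ε * a + ε * b = ε * (a + b) by ring] at h2

lemma addψ {ε : ℤ} (hε : ε ≠ 0) {a b : ℤ} (hs : a + 2 * b ≠ 0) {v : ρ.carrier}
    (ha : ρ.L (ε * a) v = 0) (hb : ρ.ψ (ε * b) v = 0) : ρ.ψ (ε * (a + b)) v = 0 := by
  have h := ρ.pLψ (ε * a) (ε * b) v
  rw [hb, map_zero, ha, map_zero, sub_zero] at h
  have hc : (-((ε * b : ℤ) : ℂ) - ((ε * a : ℤ) : ℂ) / 2) ≠ 0 := by
    have heq : (-((ε * b : ℤ) : ℂ) - ((ε * a : ℤ) : ℂ) / 2) = -((ε * (a + 2 * b) : ℤ) : ℂ) / 2 := by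
      push_cast; ring
    rw [heq]
    simp only [neg_div, ne_eq, neg_eq_zero, div_eq_zero_iff]
    push_neg
    refine ⟨?_, by norm_num⟩
    exact_mod_cast mul_ne_zero hε hs
  have h2 := (smul_eq_zero.1 h.symm).resolve_left hc
  rwa [show ε * a + ε * b = ε * (a + b) by ring] at h2

lemma arith_rep (N m : ℕ) (hN : 2 ≤ N) (hm : N ^ 2 ≤ m) :
    ∃ x y : ℕ, (m : ℤ) = (N : ℤ) + ((x : ℤ) + 1) * ((N : ℤ) - 1) + (y : ℤ) * N := by
  have hNm : N ≤ m := le_trans (by nlinarith) hm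
  set m' := m - N with hm'
  have hm'c : (m' : ℤ) = (m : ℤ) - N := by omega
  set q := m' / (N - 1) with hq
  set r := m' % (N - 1) with hr
  have hdm : (N - 1) * q + r = m' := Nat.div_add_mod m' (N - 1)
  have hrlt : r < N - 1 := Nat.mod_lt _ (by omega)
  have hNc : (2 : ℤ) ≤ (N : ℤ) := by exact_mod_cast hN
  have h0 : ((N - 1 : ℕ) : ℤ) = (N : ℤ) - 1 := by omega
  have hdmc : ((N : ℤ) - 1) * q + r = (m' : ℤ) := by rw [← h0]; exact_mod_cast hdm
  have hrc : (r : ℤ) ≤ (N : ℤ) - 2 := by omega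
  have hmc : (N : ℤ) ^ 2 ≤ (m : ℤ) := by exact_mod_cast hm
  have hqr : (r : ℤ) + 1 ≤ (q : ℤ) := by
    by_contra hcon
    push_neg at hcon
    have h1 : ((N : ℤ) - 1) * q ≤ ((N : ℤ) - 1) * r :=
      mul_le_mul_of_nonneg_left (by omega) (by omega)
    have h2 : ((N : ℤ) - 1) * r ≤ ((N : ℤ) - 1) * ((N : ℤ) - 2) :=
      mul_le_mul_of_nonneg_left hrc (by omega)
    nlinarith
  have hqrn : r + 1 ≤ q := by exact_mod_cast hqr
  refine ⟨q - r - 1, r, ?_⟩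
  have hx : ((q - r - 1 : ℕ) : ℤ) = (q : ℤ) - r - 1 := by omega
  rw [hx]
  linear_combination -hdmc - hm'c

lemma van_of_four {ε : ℤ} (hε : ε ≠ 0) (N : ℕ) (hN : 2 ≤ N) {v : ρ.carrier}
    (hL1 : ρ.L (ε * ((N : ℤ) - 1)) v = 0) (hL2 : ρ.L (ε * N) v = 0)
    (hψ1 : ρ.ψ (ε * ((N : ℤ) - 1)) v = 0) (hψ2 : ρ.ψ (ε * N) v = 0) :
    ρ.Van ε ((N : ℤ) ^ 2 + N) v := by
  have hNc : (2 : ℤ) ≤ (N : ℤ) := by exact_mod_cast hN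
  -- chain 1 : L (ε (N + t (N-1))) v = 0
  have c1 : ∀ t : ℕ, ρ.L (ε * ((N : ℤ) + t * ((N : ℤ) - 1))) v = 0 := by
    intro t
    induction t with
    | zero => simpa using hL2
    | succ t ih =>
      have htc : (0 : ℤ) ≤ (t : ℤ) := Int.natCast_nonneg t
      have h := ρ.addL hε (a := (N : ℤ) + t * ((N : ℤ) - 1)) (b := (N : ℤ) - 1)
        (by nlinarith) (by nlinarith) ih hL1
      convert h using 3
      push_cast; ring
  -- chain 2 : L (ε (N + (x+1)(N-1) + y N)) v = 0
  have c2 : ∀ x y : ℕ, ρ.L (ε * ((N : ℤ) + ((x : ℤ) + 1) * ((N : ℤ) - 1) + (y : ℤ) * N)) v = 0 := by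
    intro x y
    induction y with
    | zero =>
      have h := c1 (x + 1)
      convert h using 3
      push_cast; ring
    | succ y ih =>
      have hxc : (0 : ℤ) ≤ (x : ℤ) := Int.natCast_nonneg x
      have hyc : (0 : ℤ) ≤ (y : ℤ) := Int.natCast_nonneg y
      have h := ρ.addL hε (a := (N : ℤ) + ((x : ℤ) + 1) * ((N : ℤ) - 1) + (y : ℤ) * N)
        (b := (N : ℤ)) (by nlinarith) (by nlinarith) ih hL2
      convert h using 3
      push_cast; ring
  -- all L-modes ≥ N²
  have cL : ∀ m : ℕ, N ^ 2 ≤ m → ρ.L (ε * m) v = 0 := by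
    intro m hm
    obtain ⟨x, y, hxy⟩ := arith_rep N m hN hm
    rw [hxy]
    exact c2 x y
  -- all ψ-modes ≥ N² + N
  have cψ : ∀ m : ℕ, N ^ 2 + N ≤ m → ρ.ψ (ε * m) v = 0 := by
    intro m hm
    have hsub : N ^ 2 + 1 ≤ m - (N - 1) := by omega
    have ha := cL (m - (N - 1)) (by omega)
    have h := ρ.addψ hε (a := ((m - (N - 1) : ℕ) : ℤ)) (b := (N : ℤ) - 1)
      (by omega) ha hψ1
    rwa [show ((m - (N - 1) : ℕ) : ℤ) + ((N : ℤ) - 1) = (m : ℤ) by omega] at h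
  -- conclude
  intro m hm
  have hsq : (0 : ℤ) ≤ (N : ℤ) ^ 2 := sq_nonneg _
  have hm0 : (0 : ℤ) ≤ m := by linarith [Int.natCast_nonneg N]
  have hmt : ((m.toNat : ℕ) : ℤ) = m := Int.toNat_of_nonneg hm0
  constructor
  · have hA : ((N ^ 2 : ℕ) : ℤ) ≤ (m.toNat : ℤ) := by
      rw [hmt]; push_cast; linarith [Int.natCast_nonneg N]
    have h := cL m.toNat (by exact_mod_cast hA)
    rwa [hmt] at h
  · have hB : ((N ^ 2 + N : ℕ) : ℤ) ≤ (m.toNat : ℤ) := by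
      rw [hmt]; push_cast; linarith
    have h := cψ m.toNat (by exact_mod_cast hB)
    rwa [hmt] at h

end SMod
namespace SMod

variable {ρ : SMod}

/-- Every vector is a finite sum of weight vectors. -/
lemma exists_wt_rep (hw : ρ.IsWeight) (x : ρ.carrier) :
    ∃ (s : Finset ℂ) (g : ℂ → ρ.carrier), (∀ α ∈ s, g α ∈ ρ.wtSpace α) ∧
      x = ∑ α ∈ s, g α := by
  classical
  have hx : x ∈ ⨆ α, ρ.wtSpace α := by rw [hw.2]; trivial
  refine Submodule.iSup_induction (motive := fun y => ∃ (s : Finset ℂ) (g : ℂ → ρ.carrier),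
    (∀ α ∈ s, g α ∈ ρ.wtSpace α) ∧ y = ∑ α ∈ s, g α) _ hx ?_ ?_ ?_
  · intro α y hy
    refine ⟨{α}, fun β => if β = α then y else 0, ?_, by simp⟩
    intro β hβ
    simp only [Finset.mem_singleton] at hβ
    subst hβ
    simpa using hy
  · exact ⟨∅, fun _ => 0, by simp, by simp⟩
  · rintro y z ⟨s, g, hg, rfl⟩ ⟨t, k, hk, rfl⟩
    refine ⟨s ∪ t, fun α => (if α ∈ s then g α else 0) + (if α ∈ t then k α else 0), ?_, ?_⟩
    · intro α _
      apply Submodule.add_mem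
      · split
        · exact hg _ ‹_›
        · exact Submodule.zero_mem _
      · split
        · exact hk _ ‹_›
        · exact Submodule.zero_mem _
    · rw [Finset.sum_add_distrib, Finset.sum_ite_mem, Finset.sum_ite_mem,
        Finset.union_inter_cancel_left, Finset.union_inter_cancel_right]

/-- Components (w.r.t. independent weight spaces) of `0` vanish. -/
lemma indep_kill (hw : ρ.IsWeight) (s : Finset ℂ) (w : ℂ → ℂ) (hinj : Set.InjOn w s)
    (g : ℂ → ρ.carrier) (hg : ∀ α ∈ s, g α ∈ ρ.wtSpace (w α))
    (hsum : ∑ α ∈ s, g α = 0) : ∀ α ∈ s, g α = 0 := by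
  intro α hα
  have h1 : g α = - ∑ β ∈ s.erase α, g β := by
    have := Finset.add_sum_erase s g hα
    rw [hsum] at this
    exact eq_neg_of_add_eq_zero_left this
  have hmem2 : g α ∈ ⨆ γ, ⨆ (_ : γ ≠ w α), ρ.wtSpace γ := by
    rw [h1]
    apply Submodule.neg_mem
    apply Submodule.sum_mem
    intro β hβ
    have hβs := Finset.mem_of_mem_erase hβ
    have hne : w β ≠ w α := fun hEq =>
      (Finset.ne_of_mem_erase hβ) (hinj hβs hα hEq)
    exact Submodule.mem_iSup_of_mem (w β) (Submodule.mem_iSup_of_mem hne (hg β hβs))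
  exact (Submodule.disjoint_def.1 (hw.1 (w α)) _ (hg α hα) hmem2)

/-- A sum of an even and odd vector vanishes iff both do. -/
lemma parity_zero {x y : ρ.carrier} (he : x ∈ ρ.even) (ho : y ∈ ρ.odd) (h : x + y = 0) :
    x = 0 ∧ y = 0 := by
  have hxy : x = -y := eq_neg_of_add_eq_zero_left h
  have hx0 : x = 0 := Submodule.disjoint_def.1 ρ.isCompl_even_odd.disjoint x he
    (hxy ▸ Submodule.neg_mem _ ho)
  exact ⟨hx0, by rw [hx0, zero_add] at h; exact h⟩

/-- `v` is annihilated by all modes `≥ K`. -/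
def SmoothAt (ρ : SMod) (K : ℤ) (v : ρ.carrier) : Prop :=
  ∀ m : ℤ, K ≤ m → ρ.L m v = 0 ∧ ρ.ψ m v = 0

lemma smoothAt_mono {K K' : ℤ} (h : K ≤ K') {v : ρ.carrier} (hv : ρ.SmoothAt K v) :
    ρ.SmoothAt K' v := fun m hm => hv m (by omega)

lemma van_one_iff {K : ℤ} {v : ρ.carrier} : ρ.Van 1 K v ↔ ρ.SmoothAt K v := by
  constructor <;> intro h m hm
  · have := h m hm; rwa [one_mul] at this
  · have := h m hm; rwa [one_mul]

lemma smooth_stab {K : ℤ} (hK : 2 ≤ K) {x : ρ.carrier} (hx : ρ.SmoothAt K x) :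
    ρ.SmoothAt K (ρ.L (K - 1) x) := by
  intro m hm
  constructor
  · have h := ρ.pLL m (K - 1) x
    rw [if_neg (by omega), add_zero, (hx m hm).1, map_zero, sub_zero,
      (hx (m + (K - 1)) (by omega)).1, smul_zero] at h
    exact h
  · have h := ρ.pLψ (K - 1) m x
    rw [(hx m hm).2, map_zero, (hx ((K - 1) + m) (by omega)).2, smul_zero, zero_sub,
      neg_eq_zero] at h
    exact h

lemma gem {K : ℤ} (hK : 2 ≤ K) (hmin : ∀ w, ρ.SmoothAt (K - 1) w → w = 0) {x : ρ.carrier}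
    (hx : ρ.SmoothAt K x) (hLx : ρ.L (K - 1) x = 0) : x = 0 := by
  have hy : ρ.SmoothAt (K - 1) (ρ.ψ (K - 1) x) := by
    intro m hm
    constructor
    · have h := ρ.pLψ m (K - 1) x
      have h1 : ρ.L m x = 0 := by
        rcases eq_or_lt_of_le hm with heq | hlt
        · rw [← heq]; exact hLx
        · exact (hx m (by omega)).1
      have h2 : ρ.ψ (m + (K - 1)) x = 0 := (hx _ (by omega)).2
      rw [h1, map_zero, h2, smul_zero] at h
      simpa using h
    · rcases eq_or_lt_of_le hm with heq | hlt
      · rw [← heq]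
        exact ρ.pψψ_same (by omega) x
      · have h := ρ.pψψ m (K - 1) x
        rw [if_neg (by omega)] at h
        rw [(hx m (by omega)).2, map_zero, add_zero] at h
        exact h
  have hy0 := hmin _ hy
  apply hmin
  intro m hm
  rcases eq_or_lt_of_le hm with heq | hlt
  · exact ⟨by rw [← heq]; exact hLx, by rw [← heq]; exact hy0⟩
  · exact hx m (by omega)

end SMod
namespace SMod

variable {ρ : SMod}

lemma no_gap (hHC : ρ.IsHarishChandra) {K : ℤ} (hK : 2 ≤ K)
    (hmin : ∀ w, ρ.SmoothAt (K - 1) w → w = 0) {u : ρ.carrier} (hu0 : u ≠ 0)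
    (hu : ρ.SmoothAt K u) : False := by
  classical
  -- 1. get a nonzero smooth weight vector
  obtain ⟨s, g, hg, hrep⟩ := exists_wt_rep hHC.1 u
  have hcomp : ∀ α ∈ s, ρ.SmoothAt K (g α) := by
    intro α hα m hm
    constructor
    · have hs0 : ∑ β ∈ s, ρ.L m (g β) = 0 := by
        rw [← map_sum, ← hrep]; exact (hu m hm).1
      exact indep_kill hHC.1 s (fun β => β - m) (fun a _ b _ hab => by
        simpa using hab) (fun β => ρ.L m (g β)) (fun β hβ => ρ.wt_L m (hg β hβ)) hs0 α hα
    · have hs0 : ∑ β ∈ s, ρ.ψ m (g β) = 0 := by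
        rw [← map_sum, ← hrep]; exact (hu m hm).2
      exact indep_kill hHC.1 s (fun β => β - m) (fun a _ b _ hab => by
        simpa using hab) (fun β => ρ.ψ m (g β)) (fun β hβ => ρ.wt_ψ m (hg β hβ)) hs0 α hα
  have hex : ∃ α ∈ s, g α ≠ 0 := by
    by_contra hcon
    push_neg at hcon
    apply hu0
    rw [hrep]
    exact Finset.sum_eq_zero hcon
  obtain ⟨γ, hγs, hgγ⟩ := hex
  set u' := g γ with hu'def
  have hu'wt : u' ∈ ρ.wtSpace γ := hg γ hγs
  have hu'sm : ρ.SmoothAt K u' := hcomp γ hγs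
  -- 2. the L_{K-1}-iterates
  set f : ρ.carrier → ρ.carrier := fun x => ρ.L (K - 1) x with hfdef
  set us : ℕ → ρ.carrier := fun n => f^[n] u' with husdef
  have hussucc : ∀ n : ℕ, us (n + 1) = ρ.L (K - 1) (us n) := by
    intro n
    simp only [husdef, Function.iterate_succ_apply']
    rfl
  have hus : ∀ n : ℕ, us n ≠ 0 ∧ ρ.SmoothAt K (us n) ∧
      us n ∈ ρ.wtSpace (γ - (n : ℂ) * (((K : ℤ) : ℂ) - 1)) := by
    intro n
    induction n with
    | zero =>
      refine ⟨hgγ, hu'sm, ?_⟩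
      simpa [husdef] using hu'wt
    | succ n ih =>
      obtain ⟨ih0, ihsm, ihwt⟩ := ih
      rw [hussucc n]
      refine ⟨fun h0 => ih0 (ρ.gem hK hmin ihsm h0), ρ.smooth_stab hK ihsm, ?_⟩
      have := ρ.wt_L (K - 1) ihwt
      convert this using 2
      push_cast
      ring
  -- 3. the independent family in the weight space γ + 1
  set vs : ℕ → ρ.carrier := fun n => ρ.L (-((n : ℤ) * (K - 1) + 1)) (us n) with hvsdef
  have hvswt : ∀ n : ℕ, vs n ∈ ρ.wtSpace (γ + 1) := by
    intro n
    have := ρ.wt_L (-((n : ℤ) * (K - 1) + 1)) (hus n).2.2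
    convert this using 2
    push_cast
    ring
  -- 4. the probe
  have probe : ∀ S n : ℕ, n ≤ S →
      ρ.L (((S : ℤ) + 1) * (K - 1) + 1) (vs n) =
        ((((S : ℤ) + 1) * (K - 1) + 1 + ((n : ℤ) * (K - 1) + 1) : ℤ) : ℂ) •
          ρ.L ((((S : ℤ) + 1 - n) * (K - 1))) (us n) := by
    intro S n hn
    have hnS : (n : ℤ) ≤ (S : ℤ) := by exact_mod_cast hn
    have h := ρ.pLL (((S : ℤ) + 1) * (K - 1) + 1) (-((n : ℤ) * (K - 1) + 1)) (us n)
    rw [show (((S : ℤ) + 1) * (K - 1) + 1 + -((n : ℤ) * (K - 1) + 1))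
      = ((S : ℤ) + 1 - n) * (K - 1) by ring] at h
    have hne : ((S : ℤ) + 1 - n) * (K - 1) ≠ 0 :=
      ne_of_gt (mul_pos (by omega) (by omega))
    rw [if_neg hne, add_zero] at h
    have hKle : K - 1 ≤ ((S : ℤ) + 1) * (K - 1) :=
      le_mul_of_one_le_left (by omega) (by omega)
    have hz : ρ.L (((S : ℤ) + 1) * (K - 1) + 1) (us n) = 0 :=
      ((hus n).2.1 _ (by omega)).1
    rw [hz, map_zero, sub_zero] at h
    show ρ.L (((S : ℤ) + 1) * (K - 1) + 1) (ρ.L (-((n : ℤ) * (K - 1) + 1)) (us n)) = _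
    rw [h]
    congr 1
    push_cast
    ring
  have probe_lt : ∀ S n : ℕ, n < S → ρ.L (((S : ℤ) + 1) * (K - 1) + 1) (vs n) = 0 := by
    intro S n hn
    have hnS : (n : ℤ) + 1 ≤ (S : ℤ) := by exact_mod_cast hn
    have h2 : 2 * (K - 1) ≤ ((S : ℤ) + 1 - n) * (K - 1) :=
      mul_le_mul_of_nonneg_right (by omega) (by omega)
    rw [probe S n (le_of_lt hn), ((hus n).2.1 _ (by omega)).1, smul_zero]
  have probe_eq : ∀ S : ℕ, ρ.L (((S : ℤ) + 1) * (K - 1) + 1) (vs S) =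
      ((((S : ℤ) + 1) * (K - 1) + 1 + ((S : ℤ) * (K - 1) + 1) : ℤ) : ℂ) • us (S + 1) := by
    intro S
    rw [probe S S le_rfl, show ((S : ℤ) + 1 - S) * (K - 1) = K - 1 by ring, ← hussucc S]
  -- 5. finite relations vanish
  have rel_zero : ∀ S : ℕ, ∀ q : ℕ → ℂ,
      (∑ n ∈ Finset.range (S + 1), q n • vs n) = 0 → ∀ n ≤ S, q n = 0 := by
    intro S
    induction S with
    | zero =>
      intro q hq n hn
      interval_cases n
      have h0 := congrArg (ρ.L ((((0 : ℕ) : ℤ) + 1) * (K - 1) + 1)) hq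
      rw [map_sum, map_zero] at h0
      simp only [zero_add, Finset.sum_range_one, map_smul] at h0
      rw [probe_eq 0] at h0
      have hc : (((((0 : ℕ) : ℤ) + 1) * (K - 1) + 1 + (((0 : ℕ) : ℤ) * (K - 1) + 1) : ℤ) : ℂ) ≠ 0 := by
        rw [Int.cast_ne_zero]; push_cast; omega
      rcases smul_eq_zero.1 h0 with h | h
      · exact h
      · exact absurd ((smul_eq_zero.1 h).resolve_left hc) (hus 1).1
    | succ S ih =>
      intro q hq n hn
      have htop : q (S + 1) = 0 := by
        have h0 := congrArg (ρ.L ((((S + 1 : ℕ) : ℤ) + 1) * (K - 1) + 1)) hq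
        rw [map_sum, map_zero] at h0
        have hsplit : ∀ x ∈ Finset.range (S + 1), ρ.L ((((S + 1 : ℕ) : ℤ) + 1) * (K - 1) + 1)
            (q x • vs x) = 0 := by
          intro x hx
          rw [map_smul, probe_lt (S + 1) x (by
            simp only [Finset.mem_range] at hx; omega), smul_zero]
        rw [Finset.sum_range_succ, Finset.sum_eq_zero hsplit, zero_add, map_smul,
          probe_eq (S + 1)] at h0
        have hc : (((((S + 1 : ℕ) : ℤ) + 1) * (K - 1) + 1 + (((S + 1 : ℕ) : ℤ) * (K - 1) + 1) : ℤ) : ℂ) ≠ 0 := by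
          rw [Int.cast_ne_zero]
          have : (0 : ℤ) ≤ ((S + 1 : ℕ) : ℤ) := Int.natCast_nonneg _
          nlinarith
        rcases smul_eq_zero.1 h0 with h | h
        · exact h
        · exact absurd ((smul_eq_zero.1 h).resolve_left hc) (hus (S + 2)).1
      rcases eq_or_lt_of_le hn with heq | hlt
      · rw [heq]; exact htop
      · apply ih q ?_ n (by omega)
        rw [Finset.sum_range_succ, htop, zero_smul, add_zero] at hq
        exact hq
  -- 6. contradiction with finite-dimensionality
  haveI := hHC.2 (γ + 1)
  set d := Module.finrank ℂ (ρ.wtSpace (γ + 1)) with hd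
  set vs' : Fin (d + 1) → ρ.wtSpace (γ + 1) := fun i => ⟨vs i, hvswt i⟩ with hvs'
  have hli : LinearIndependent ℂ vs' := by
    rw [Fintype.linearIndependent_iff]
    intro q hq
    have hq' : ∑ i : Fin (d + 1), q i • vs (i : ℕ) = 0 := by
      have h := congrArg (Subtype.val) hq
      push_cast [hvs'] at h
      exact h
    set Q : ℕ → ℂ := fun n => if h : n < d + 1 then q ⟨n, h⟩ else 0 with hQ
    have hsum : ∑ n ∈ Finset.range (d + 1), Q n • vs n = 0 := by
      rw [← Fin.sum_univ_eq_sum_range (fun n => Q n • vs n) (d + 1), ← hq']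
      apply Finset.sum_congr rfl
      intro i _
      simp only [hQ, i.isLt, dif_pos]
    intro i
    have := rel_zero d Q hsum i (by omega)
    simpa only [hQ, i.isLt, dif_pos] using this
  have hcard := hli.fintype_card_le_finrank
  simp only [Fintype.card_fin] at hcard
  omega

end SMod
namespace SMod

variable {ρ : SMod}

lemma exists_hw_vector (hHC : ρ.IsHarishChandra)
    (hs : ∃ (K : ℤ) (v : ρ.carrier), v ≠ 0 ∧ ρ.SmoothAt K v) :
    ∃ v, v ≠ 0 ∧ ρ.SmoothAt 1 v := by
  classical
  obtain ⟨K, v, hv0, hv⟩ := hs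
  have hQ : ∃ k : ℕ, ∃ w : ρ.carrier, w ≠ 0 ∧ ρ.SmoothAt ((k : ℤ) + 1) w :=
    ⟨(K - 1).toNat, v, hv0, ρ.smoothAt_mono (by omega) hv⟩
  obtain ⟨w, hw0, hw⟩ := Nat.find_spec hQ
  set k0 := Nat.find hQ with hk0
  rcases Nat.eq_zero_or_pos k0 with h0 | hpos
  · rw [h0] at hw
    exact ⟨w, hw0, by simpa using hw⟩
  · exfalso
    have hmin' := Nat.find_min hQ (m := k0 - 1) (show k0 - 1 < k0 by omega)
    refine ρ.no_gap hHC (K := (k0 : ℤ) + 1) (by omega) ?_ hw0 hw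
    intro x hx
    by_contra hne
    refine hmin' ⟨x, hne, ?_⟩
    have heq : ((k0 - 1 : ℕ) : ℤ) + 1 = (k0 : ℤ) + 1 - 1 := by omega
    rw [heq]
    exact hx

/-- From a smooth vector, get a nonzero homogeneous weight vector killed by
all positive modes. -/
lemma exists_hw_vector' (hHC : ρ.IsHarishChandra)
    (hs : ∃ (K : ℤ) (v : ρ.carrier), v ≠ 0 ∧ ρ.SmoothAt K v) :
    ∃ (γ : ℂ) (v : ρ.carrier), v ≠ 0 ∧ v ∈ ρ.wtSpace γ ∧
      (v ∈ ρ.even ∨ v ∈ ρ.odd) ∧ ρ.SmoothAt 1 v := by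
  classical
  obtain ⟨v, hv0, hv⟩ := ρ.exists_hw_vector hHC hs
  -- weight component
  obtain ⟨s, g, hg, hrep⟩ := exists_wt_rep hHC.1 v
  have hcomp : ∀ α ∈ s, ρ.SmoothAt 1 (g α) := by
    intro α hα m hm
    constructor
    · have hs0 : ∑ β ∈ s, ρ.L m (g β) = 0 := by
        rw [← map_sum, ← hrep]; exact (hv m hm).1
      exact indep_kill hHC.1 s (fun β => β - m) (fun a _ b _ hab => by
        simpa using hab) (fun β => ρ.L m (g β)) (fun β hβ => ρ.wt_L m (hg β hβ)) hs0 α hα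
    · have hs0 : ∑ β ∈ s, ρ.ψ m (g β) = 0 := by
        rw [← map_sum, ← hrep]; exact (hv m hm).2
      exact indep_kill hHC.1 s (fun β => β - m) (fun a _ b _ hab => by
        simpa using hab) (fun β => ρ.ψ m (g β)) (fun β hβ => ρ.wt_ψ m (hg β hβ)) hs0 α hα
  have hex : ∃ α ∈ s, g α ≠ 0 := by
    by_contra hcon
    push_neg at hcon
    exact hv0 (by rw [hrep]; exact Finset.sum_eq_zero hcon)
  obtain ⟨γ, hγs, hgγ⟩ := hex
  have hu'wt : g γ ∈ ρ.wtSpace γ := hg γ hγs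
  have hu'sm : ρ.SmoothAt 1 (g γ) := hcomp γ hγs
  -- parity components
  obtain ⟨e, o, he, ho, heo⟩ :=
    Submodule.codisjoint_iff_exists_add_eq.mp ρ.isCompl_even_odd.codisjoint (g γ)
  have hewt : e ∈ ρ.wtSpace γ ∧ o ∈ ρ.wtSpace γ := by
    have h0 : ρ.L 0 (g γ) = γ • g γ := hu'wt
    have hsplit : (ρ.L 0 e - γ • e) + (ρ.L 0 o - γ • o) = 0 := by
      have hh : ρ.L 0 e + ρ.L 0 o = γ • e + γ • o := by
        rw [← map_add, heo, ← smul_add, heo]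
        exact h0
      rw [sub_add_sub_comm, hh, sub_self]
    obtain ⟨h1, h2⟩ := parity_zero (Submodule.sub_mem _ (ρ.L_maps_even 0 e he)
      (Submodule.smul_mem _ _ he)) (Submodule.sub_mem _ (ρ.L_maps_odd 0 o ho)
      (Submodule.smul_mem _ _ ho)) hsplit
    exact ⟨sub_eq_zero.1 h1, sub_eq_zero.1 h2⟩
  have hesm : ρ.SmoothAt 1 e ∧ ρ.SmoothAt 1 o := by
    constructor <;> intro m hm <;> constructor
    · have h : ρ.L m e + ρ.L m o = 0 := by
        rw [← map_add, heo]; exact (hu'sm m hm).1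
      exact (parity_zero (ρ.L_maps_even m e he) (ρ.L_maps_odd m o ho) h).1
    · have h : ρ.ψ m o + ρ.ψ m e = 0 := by
        rw [← map_add]
        rw [show o + e = g γ by rw [add_comm]; exact heo]
        exact (hu'sm m hm).2
      exact (parity_zero (ρ.ψ_maps_odd m o ho) (ρ.ψ_maps_even m e he) h).2
    · have h : ρ.L m e + ρ.L m o = 0 := by
        rw [← map_add, heo]; exact (hu'sm m hm).1
      exact (parity_zero (ρ.L_maps_even m e he) (ρ.L_maps_odd m o ho) h).2
    · have h : ρ.ψ m o + ρ.ψ m e = 0 := by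
        rw [← map_add]
        rw [show o + e = g γ by rw [add_comm]; exact heo]
        exact (hu'sm m hm).2
      exact (parity_zero (ρ.ψ_maps_odd m o ho) (ρ.ψ_maps_even m e he) h).1
  rcases eq_or_ne e 0 with he0 | he0
  · refine ⟨γ, o, ?_, hewt.2, Or.inr ho, hesm.2⟩
    intro ho0
    apply hgγ
    rw [← heo, he0, ho0, add_zero]
  · exact ⟨γ, e, he0, hewt.1, Or.inl he, hesm.1⟩

end SMod
/-- Alphabet of operators of the algebra `S`. -/
inductive SGen
  | l (m : ℤ)
  | p (m : ℤ)
  | cc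
  | zz

namespace SGen

/-- The mode index of a generator. -/
def index : SGen → ℤ
  | l m => m
  | p m => m
  | cc => 0
  | zz => 0

end SGen

namespace SMod

variable {ρ : SMod}

/-- Action of a generator. -/
def act (ρ : SMod) : SGen → (ρ.carrier →ₗ[ℂ] ρ.carrier)
  | SGen.l m => ρ.L m
  | SGen.p m => ρ.ψ m
  | SGen.cc => ρ.c
  | SGen.zz => ρ.z

/-- Action of a word. -/
def wa (ρ : SMod) : List SGen → (ρ.carrier →ₗ[ℂ] ρ.carrier)
  | [] => LinearMap.id
  | g :: w => (ρ.act g) ∘ₗ (ρ.wa w)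

lemma wa_nil (v : ρ.carrier) : ρ.wa [] v = v := rfl

lemma wa_cons (g : SGen) (w : List SGen) (v : ρ.carrier) :
    ρ.wa (g :: w) v = ρ.act g (ρ.wa w v) := rfl

lemma wa_append (w₁ w₂ : List SGen) (v : ρ.carrier) :
    ρ.wa (w₁ ++ w₂) v = ρ.wa w₁ (ρ.wa w₂ v) := by
  induction w₁ with
  | nil => simp [wa_nil]
  | cons g w ih => rw [List.cons_append, wa_cons, wa_cons, ih]

/-- Total mode index of a word. -/
def net (w : List SGen) : ℤ := (w.map SGen.index).sum

lemma net_nil : net ([] : List SGen) = 0 := rfl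

lemma net_cons (g : SGen) (w : List SGen) : net (g :: w) = g.index + net w := by
  simp [net]

lemma net_append (w₁ w₂ : List SGen) : net (w₁ ++ w₂) = net w₁ + net w₂ := by
  simp [net]

lemma net_nonpos {w : List SGen} (h : ∀ g ∈ w, SGen.index g ≤ 0) : net w ≤ 0 := by
  induction w with
  | nil => simp [net_nil]
  | cons g t ih =>
    rw [net_cons]
    have h1 := h g (by simp)
    have h2 := ih (fun x hx => h x (by simp [hx]))
    omega

/-- The fundamental swap relation. -/
lemma swap_ex (g h : SGen) : ∃ (ε c₁ c₂ : ℂ) (G₁ G₂ : SGen),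
    (∀ x : ρ.carrier, ρ.act g (ρ.act h x) =
      ε • ρ.act h (ρ.act g x) + c₁ • ρ.act G₁ x + c₂ • ρ.act G₂ x) ∧
    (c₁ ≠ 0 → G₁.index = g.index + h.index) ∧
    (c₂ ≠ 0 → G₂.index = g.index + h.index) := by
  cases g with
  | l m =>
    cases h with
    | l n =>
      refine ⟨1, (m : ℂ) - n, if m + n = 0 then ((m : ℂ) ^ 3 - m) / 12 else 0,
        SGen.l (m + n), SGen.cc, ?_, fun _ => rfl, ?_⟩
      · intro x
        simp only [act]
        have hh := ρ.pLL m n x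
        rw [sub_eq_iff_eq_add] at hh
        rw [hh]
        split_ifs with hP <;> module
      · intro hc
        rcases eq_or_ne (m + n) 0 with hP | hP
        · show (0 : ℤ) = m + n; omega
        · rw [if_neg hP] at hc; exact absurd rfl hc
    | p n =>
      refine ⟨1, -(n : ℂ) - m / 2, 0, SGen.p (m + n), SGen.cc, ?_, fun _ => rfl,
        fun hc => absurd rfl hc⟩
      intro x
      simp only [act]
      have hh := ρ.pLψ m n x
      rw [sub_eq_iff_eq_add] at hh
      rw [hh]
      module
    | cc =>
      refine ⟨1, 0, 0, SGen.cc, SGen.cc, ?_, fun hc => absurd rfl hc, fun hc => absurd rfl hc⟩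
      intro x
      simp only [act]
      rw [← ρ.pcL m x]
      module
    | zz =>
      refine ⟨1, 0, 0, SGen.cc, SGen.cc, ?_, fun hc => absurd rfl hc, fun hc => absurd rfl hc⟩
      intro x
      simp only [act]
      rw [← ρ.pzL m x]
      module
  | p m =>
    cases h with
    | l n =>
      refine ⟨1, (m : ℂ) + n / 2, 0, SGen.p (n + m), SGen.cc, ?_, ?_, fun hc => absurd rfl hc⟩
      · intro x
        simp only [act]
        have hh2 : ρ.ψ m (ρ.L n x) = ρ.L n (ρ.ψ m x) - (-(m : ℂ) - n / 2) • ρ.ψ (n + m) x := by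
          rw [eq_sub_iff_add_eq, ← eq_sub_iff_add_eq']
          exact (ρ.pLψ n m x).symm
        rw [hh2]
        module
      · intro _
        show (n + m : ℤ) = m + n
        omega
    | p n =>
      refine ⟨-1, if m + n = 0 then 1 else 0, 0, SGen.zz, SGen.cc, ?_, ?_,
        fun hc => absurd rfl hc⟩
      · intro x
        simp only [act]
        have hh := ρ.pψψ m n x
        rw [← eq_sub_iff_add_eq] at hh
        rw [hh]
        split_ifs with hP <;> module
      · intro hc
        rcases eq_or_ne (m + n) 0 with hP | hP
        · show (0 : ℤ) = m + n; omega
        · rw [if_neg hP] at hc; exact absurd rfl hc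
    | cc =>
      refine ⟨1, 0, 0, SGen.cc, SGen.cc, ?_, fun hc => absurd rfl hc, fun hc => absurd rfl hc⟩
      intro x
      simp only [act]
      rw [ρ.pcψ m x]
      module
    | zz =>
      refine ⟨1, 0, 0, SGen.cc, SGen.cc, ?_, fun hc => absurd rfl hc, fun hc => absurd rfl hc⟩
      intro x
      simp only [act]
      rw [ρ.pzψ m x]
      module
  | cc =>
    cases h with
    | l n =>
      refine ⟨1, 0, 0, SGen.cc, SGen.cc, ?_, fun hc => absurd rfl hc, fun hc => absurd rfl hc⟩
      intro x
      simp only [act]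
      rw [ρ.pcL n x]
      module
    | p n =>
      refine ⟨1, 0, 0, SGen.cc, SGen.cc, ?_, fun hc => absurd rfl hc, fun hc => absurd rfl hc⟩
      intro x
      simp only [act]
      rw [ρ.pcψ n x]
      module
    | cc =>
      refine ⟨1, 0, 0, SGen.cc, SGen.cc, ?_, fun hc => absurd rfl hc, fun hc => absurd rfl hc⟩
      intro x
      simp only [act]
      module
    | zz =>
      refine ⟨1, 0, 0, SGen.cc, SGen.cc, ?_, fun hc => absurd rfl hc, fun hc => absurd rfl hc⟩
      intro x
      simp only [act]
      rw [ρ.pcz x]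
      module
  | zz =>
    cases h with
    | l n =>
      refine ⟨1, 0, 0, SGen.cc, SGen.cc, ?_, fun hc => absurd rfl hc, fun hc => absurd rfl hc⟩
      intro x
      simp only [act]
      rw [ρ.pzL n x]
      module
    | p n =>
      refine ⟨1, 0, 0, SGen.cc, SGen.cc, ?_, fun hc => absurd rfl hc, fun hc => absurd rfl hc⟩
      intro x
      simp only [act]
      rw [ρ.pzψ n x]
      module
    | cc =>
      refine ⟨1, 0, 0, SGen.cc, SGen.cc, ?_, fun hc => absurd rfl hc, fun hc => absurd rfl hc⟩
      intro x
      simp only [act]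
      rw [← ρ.pcz x]
      module
    | zz =>
      refine ⟨1, 0, 0, SGen.cc, SGen.cc, ?_, fun hc => absurd rfl hc, fun hc => absurd rfl hc⟩
      intro x
      simp only [act]
      module

end SMod
namespace SMod

variable {ρ : SMod}

lemma exists_last_pos {w : List SGen} (hw : ∃ g ∈ w, 1 ≤ SGen.index g) :
    ∃ w₁ g w₂, w = w₁ ++ g :: w₂ ∧ 1 ≤ SGen.index g ∧ ∀ h ∈ w₂, SGen.index h ≤ 0 := by
  induction w with
  | nil => simp at hw
  | cons a t ih =>
    by_cases ht : ∃ g ∈ t, 1 ≤ SGen.index g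
    · obtain ⟨w₁, g, w₂, heq, hg, hw₂⟩ := ih ht
      exact ⟨a :: w₁, g, w₂, by rw [heq, List.cons_append], hg, hw₂⟩
    · push_neg at ht
      obtain ⟨g, hgmem, hg⟩ := hw
      rcases List.mem_cons.1 hgmem with rfl | hmem
      · exact ⟨[], g, t, rfl, hg, fun x hx => by have := ht x hx; omega⟩
      · exact absurd hg (by have := ht g hmem; omega)

/-- Straightening: a word of positive total index kills a vector annihilated by
all positive modes. -/
theorem straighten {v : ρ.carrier} (hv : ρ.SmoothAt 1 v) :
    ∀ w : List SGen, 0 < net w → ρ.wa w v = 0 := by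
  suffices H : ∀ L : ℕ, ∀ w : List SGen, w.length ≤ L → 0 < net w → ρ.wa w v = 0 by
    intro w hw
    exact H w.length w le_rfl hw
  intro L
  induction L with
  | zero =>
    intro w hw hnet
    have hnil : w = [] := List.length_eq_zero_iff.1 (by omega)
    subst hnil
    simp [net_nil] at hnet
  | succ L ihL =>
    have inner : ∀ J : ℕ, ∀ (w₁ : List SGen) (g : SGen) (w₂ : List SGen),
        (w₁ ++ g :: w₂).length ≤ L + 1 → 0 < net (w₁ ++ g :: w₂) → 1 ≤ g.index →
        (∀ h ∈ w₂, SGen.index h ≤ 0) → w₂.length = J →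
        ρ.wa (w₁ ++ g :: w₂) v = 0 := by
      intro J
      induction J with
      | zero =>
        intro w₁ g w₂ hlen hnet hg hw₂ hJ
        have hnil : w₂ = [] := List.length_eq_zero_iff.1 hJ
        subst hnil
        have hgv : ρ.act g v = 0 := by
          cases g with
          | l m => exact (hv m (by simpa [SGen.index] using hg)).1
          | p m => exact (hv m (by simpa [SGen.index] using hg)).2
          | cc => simp [SGen.index] at hg
          | zz => simp [SGen.index] at hg
        rw [wa_append, wa_cons, wa_nil, hgv, map_zero]
      | succ J ihJ =>
        intro w₁ g w₂ hlen hnet hg hw₂ hJ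
        obtain ⟨h, w₂', rfl⟩ : ∃ h w₂', w₂ = h :: w₂' := by
          cases w₂ with
          | nil => simp at hJ
          | cons h t => exact ⟨h, t, rfl⟩
        obtain ⟨ε, c₁, c₂, G₁, G₂, hsw, hi₁, hi₂⟩ := ρ.swap_ex g h
        have hexp : ρ.wa (w₁ ++ g :: h :: w₂') v =
            ε • ρ.wa (w₁ ++ h :: g :: w₂') v + c₁ • ρ.wa (w₁ ++ G₁ :: w₂') v +
              c₂ • ρ.wa (w₁ ++ G₂ :: w₂') v := by
          rw [wa_append, wa_append, wa_append, wa_append, wa_cons, wa_cons, wa_cons, wa_cons,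
            wa_cons, wa_cons, hsw (ρ.wa w₂' v), map_add, map_add, map_smul, map_smul, map_smul]
        have hnet' : net (w₁ ++ h :: g :: w₂') = net (w₁ ++ g :: h :: w₂') := by
          simp only [net_append, net_cons]
          ring
        have hlen2 : ((w₁ ++ [h]) ++ g :: w₂').length ≤ L + 1 := by
          simp only [List.length_append, List.length_cons, List.length_nil] at hlen ⊢
          omega
        have hnet2 : 0 < net ((w₁ ++ [h]) ++ g :: w₂') := by
          rw [List.append_assoc, List.singleton_append, hnet']
          exact hnet
        have h1 : ρ.wa (w₁ ++ h :: g :: w₂') v = 0 := by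
          have hres := ihJ (w₁ ++ [h]) g w₂' hlen2 hnet2 hg
            (fun x hx => hw₂ x (List.mem_cons_of_mem h hx)) (Nat.succ.inj hJ)
          rwa [List.append_assoc, List.singleton_append] at hres
        have hbr : ∀ G : SGen, SGen.index G = g.index + h.index →
            ρ.wa (w₁ ++ G :: w₂') v = 0 := by
          intro G hG
          apply ihL
          · simp only [List.length_append, List.length_cons] at hlen ⊢
            omega
          · rw [net_append, net_cons, hG]
            rw [net_append, net_cons, net_cons] at hnet
            omega
        have t1 : c₁ • ρ.wa (w₁ ++ G₁ :: w₂') v = 0 := by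
          rcases eq_or_ne c₁ 0 with hc | hc
          · rw [hc, zero_smul]
          · rw [hbr G₁ (hi₁ hc), smul_zero]
        have t2 : c₂ • ρ.wa (w₁ ++ G₂ :: w₂') v = 0 := by
          rcases eq_or_ne c₂ 0 with hc | hc
          · rw [hc, zero_smul]
          · rw [hbr G₂ (hi₂ hc), smul_zero]
        rw [hexp, h1, smul_zero, t1, t2, add_zero, add_zero]
    intro w hlen hnet
    have hex : ∃ g ∈ w, 1 ≤ SGen.index g := by
      by_contra hcon
      push_neg at hcon
      have := net_nonpos (w := w) (fun g hg => by have := hcon g hg; omega)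
      omega
    obtain ⟨w₁, g, w₂, rfl, hg, hw₂⟩ := exists_last_pos hex
    exact inner w₂.length w₁ g w₂ hlen hnet hg hw₂ rfl

end SMod
namespace SMod

variable {ρ : SMod}

lemma wa_wt {γ : ℂ} (w : List SGen) {v : ρ.carrier} (hv : v ∈ ρ.wtSpace γ) :
    ρ.wa w v ∈ ρ.wtSpace (γ - (net w : ℂ)) := by
  induction w with
  | nil => simpa [wa_nil, net_nil] using hv
  | cons g t ih =>
    rw [wa_cons, net_cons]
    cases g with
    | l m =>
      simp only [act, SGen.index]
      have hh := ρ.wt_L m ih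
      convert hh using 2
      push_cast
      ring
    | p m =>
      simp only [act, SGen.index]
      have hh := ρ.wt_ψ m ih
      convert hh using 2
      push_cast
      ring
    | cc =>
      simp only [act, SGen.index]
      rw [zero_add]
      exact ρ.wt_c ih
    | zz =>
      simp only [act, SGen.index]
      rw [zero_add]
      exact ρ.wt_z ih

lemma wa_homog (w : List SGen) {v : ρ.carrier} (hv : v ∈ ρ.even ∨ v ∈ ρ.odd) :
    ρ.wa w v ∈ ρ.even ∨ ρ.wa w v ∈ ρ.odd := by
  induction w with
  | nil => simpa [wa_nil] using hv
  | cons g t ih =>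
    rw [wa_cons]
    cases g with
    | l m =>
      rcases ih with h | h
      · exact Or.inl (ρ.L_maps_even m _ h)
      · exact Or.inr (ρ.L_maps_odd m _ h)
    | p m =>
      rcases ih with h | h
      · exact Or.inr (ρ.ψ_maps_even m _ h)
      · exact Or.inl (ρ.ψ_maps_odd m _ h)
    | cc =>
      rcases ih with h | h
      · exact Or.inl (ρ.c_maps_even _ h)
      · exact Or.inr (ρ.c_maps_odd _ h)
    | zz =>
      rcases ih with h | h
      · exact Or.inl (ρ.z_maps_even _ h)
      · exact Or.inr (ρ.z_maps_odd _ h)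

/-- Case 1: a simple Harish-Chandra module with a smooth vector is a highest
weight module. -/
theorem case_smooth (hsimple : ρ.IsSimple) (hHC : ρ.IsHarishChandra)
    (hs : ∃ (K : ℤ) (v : ρ.carrier), v ≠ 0 ∧ ρ.SmoothAt K v) : ρ.IsHighestWeight := by
  classical
  obtain ⟨γ₀, v, hv0, hvwt, hvhom, hvsm⟩ := ρ.exists_hw_vector' hHC hs
  set S : Set ρ.carrier := {x | ∃ w : List SGen, x = ρ.wa w v} with hSdef
  set W := Submodule.span ℂ S with hWdef
  have hgen : ∀ (f : ρ.carrier →ₗ[ℂ] ρ.carrier), (∀ w : List SGen, f (ρ.wa w v) ∈ W) →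
      ∀ x ∈ W, f x ∈ W := by
    intro f hf x hx
    refine Submodule.span_induction ?_ ?_ ?_ ?_ hx
    · rintro y ⟨w, rfl⟩
      exact hf w
    · simpa using W.zero_mem
    · intro a b _ _ ha hb
      rw [map_add]
      exact W.add_mem ha hb
    · intro r a _ ha
      rw [map_smul]
      exact W.smul_mem r ha
  have hWinv : ρ.Invariant W := by
    refine ⟨fun m x hx => hgen (ρ.L m) (fun w => ?_) x hx,
      fun n x hx => hgen (ρ.ψ n) (fun w => ?_) x hx,
      fun x hx => hgen ρ.c (fun w => ?_) x hx,
      fun x hx => hgen ρ.z (fun w => ?_) x hx⟩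
    · exact Submodule.subset_span ⟨SGen.l m :: w, rfl⟩
    · exact Submodule.subset_span ⟨SGen.p n :: w, rfl⟩
    · exact Submodule.subset_span ⟨SGen.cc :: w, rfl⟩
    · exact Submodule.subset_span ⟨SGen.zz :: w, rfl⟩
  have hWgr : ρ.Graded W := by
    refine le_antisymm ?_ (sup_le inf_le_left inf_le_left)
    rw [hWdef]
    refine Submodule.span_le.2 ?_
    rintro x ⟨w, rfl⟩
    rcases ρ.wa_homog w hvhom with h | h
    · exact Submodule.mem_sup_left (Submodule.mem_inf.2 ⟨Submodule.subset_span ⟨w, rfl⟩, h⟩)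
    · exact Submodule.mem_sup_right (Submodule.mem_inf.2 ⟨Submodule.subset_span ⟨w, rfl⟩, h⟩)
  have hvW : v ∈ W := Submodule.subset_span ⟨[], rfl⟩
  have hWne : W ≠ ⊥ := by
    intro hbot
    rw [hbot] at hvW
    exact hv0 (by simpa using hvW)
  have hWtop : W = ⊤ := (hsimple.2 W hWinv hWgr).resolve_left hWne
  refine ⟨hHC.1, γ₀, fun β hβ => ?_⟩
  by_contra hno
  push_neg at hno
  apply hβ
  have hle1 : W ≤ ⨆ n : ℕ, ρ.wtSpace (γ₀ + n) := by
    rw [hWdef]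
    refine Submodule.span_le.2 ?_
    rintro x ⟨w, rfl⟩
    rcases le_or_gt (net w) 0 with hn | hn
    · have hmem := ρ.wa_wt w hvwt
      have hnat : (((-net w).toNat : ℕ) : ℤ) = -net w := Int.toNat_of_nonneg (by omega)
      have hcast : γ₀ - (net w : ℂ) = γ₀ + (((-net w).toNat : ℕ) : ℂ) := by
        have h2 : ((((-net w).toNat : ℕ)) : ℂ) = (((-net w : ℤ)) : ℂ) := by
          rw [← hnat]
          exact (Int.cast_natCast _).symm
        rw [h2]
        push_cast
        ring
      exact Submodule.mem_iSup_of_mem ((-net w).toNat) (by rw [← hcast]; exact hmem)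
    · rw [ρ.straighten hvsm w hn]
      exact Submodule.zero_mem _
  have hle : ρ.wtSpace β ≤ ⨆ γ, ⨆ (_ : γ ≠ β), ρ.wtSpace γ := by
    calc ρ.wtSpace β ≤ ⊤ := le_top
    _ = W := hWtop.symm
    _ ≤ ⨆ n : ℕ, ρ.wtSpace (γ₀ + n) := hle1
    _ ≤ ⨆ γ, ⨆ (_ : γ ≠ β), ρ.wtSpace γ := by
        refine iSup_le fun n => ?_
        exact le_iSup₂ (f := fun γ (_ : γ ≠ β) => ρ.wtSpace γ) (γ₀ + n)
          (fun hEq => hno n hEq.symm)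
  exact (hHC.1.1 β).eq_bot_of_le hle

end SMod
namespace SMod

/-- The flipped module: `L'_m = -L_{-m}`, `ψ'_n = ψ_{-n}`, `c' = -c`, `z' = z`. -/
def flip (ρ : SMod) : SMod where
  carrier := ρ.carrier
  isAddCommGroup := ρ.isAddCommGroup
  isModule := ρ.isModule
  L := fun m => -ρ.L (-m)
  ψ := fun n => ρ.ψ (-n)
  c := -ρ.c
  z := ρ.z
  even := ρ.even
  odd := ρ.odd
  isCompl_even_odd := ρ.isCompl_even_odd
  L_maps_even := fun m v hv => by
    simpa using Submodule.neg_mem _ (ρ.L_maps_even (-m) v hv)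
  L_maps_odd := fun m v hv => by
    simpa using Submodule.neg_mem _ (ρ.L_maps_odd (-m) v hv)
  ψ_maps_even := fun n v hv => ρ.ψ_maps_even (-n) v hv
  ψ_maps_odd := fun n v hv => ρ.ψ_maps_odd (-n) v hv
  c_maps_even := fun v hv => by
    simpa using Submodule.neg_mem _ (ρ.c_maps_even v hv)
  c_maps_odd := fun v hv => by
    simpa using Submodule.neg_mem _ (ρ.c_maps_odd v hv)
  z_maps_even := ρ.z_maps_even
  z_maps_odd := ρ.z_maps_odd
  rel_LL := by
    intro m n
    ext v
    have h := ρ.pLL (-m) (-n) v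
    rw [show (-m) + (-n) = -(m + n) by ring] at h
    simp only [LinearMap.sub_apply, LinearMap.comp_apply, LinearMap.add_apply,
      LinearMap.smul_apply, LinearMap.neg_apply, map_neg, neg_neg]
    rw [apply_ite (fun g : ρ.carrier →ₗ[ℂ] ρ.carrier => g v)]
    rw [sub_eq_iff_eq_add] at h
    rw [h]
    simp only [LinearMap.zero_apply, LinearMap.smul_apply, LinearMap.neg_apply,
      neg_eq_zero]
    split_ifs with hP <;> push_cast <;> module
  rel_Lψ := by
    intro m n
    ext v
    have h := ρ.pLψ (-m) (-n) v
    rw [show (-m) + (-n) = -(m + n) by ring] at h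
    simp only [LinearMap.sub_apply, LinearMap.comp_apply, LinearMap.smul_apply,
      LinearMap.neg_apply, map_neg]
    rw [sub_eq_iff_eq_add] at h
    rw [h]
    push_cast
    module
  rel_ψψ := by
    intro m n
    ext v
    have h := ρ.pψψ (-m) (-n) v
    rw [show (-m) + (-n) = -(m + n) by ring] at h
    simp only [LinearMap.add_apply, LinearMap.comp_apply]
    rw [apply_ite (fun g : ρ.carrier →ₗ[ℂ] ρ.carrier => g v)]
    rw [h]
    simp only [LinearMap.zero_apply, neg_eq_zero]
  c_comm_L := by
    intro m
    ext v
    simp only [LinearMap.comp_apply, LinearMap.neg_apply, map_neg, neg_neg]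
    exact ρ.pcL (-m) v
  c_comm_ψ := by
    intro n
    ext v
    simp only [LinearMap.comp_apply, LinearMap.neg_apply, map_neg]
    rw [ρ.pcψ (-n) v]
  z_comm_L := by
    intro m
    ext v
    simp only [LinearMap.comp_apply, LinearMap.neg_apply, map_neg]
    rw [ρ.pzL (-m) v]
  z_comm_ψ := by
    intro n
    ext v
    exact ρ.pzψ (-n) v
  c_comm_z := by
    ext v
    simp only [LinearMap.comp_apply, LinearMap.neg_apply, map_neg]
    rw [ρ.pcz v]

variable {ρ : SMod}

lemma flip_wt (α : ℂ) : ρ.flip.wtSpace α = ρ.wtSpace (-α) := by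
  ext v
  show ρ.flip.L 0 v = α • v ↔ ρ.L 0 v = (-α) • v
  have hL : ρ.flip.L 0 v = -(ρ.L 0 v) := by
    show (-ρ.L (-0)) v = _
    rw [neg_zero]
    rfl
  rw [hL]
  constructor <;> intro h
  · rw [show ρ.L 0 v = -(-(ρ.L 0 v)) by rw [neg_neg], h]; exact (neg_smul α (v : ρ.carrier)).symm
  · rw [h]; exact (by rw [neg_smul, neg_neg] : -((-α) • (v : ρ.carrier)) = α • (v : ρ.carrier))

lemma flip_isSimple (h : ρ.IsSimple) : ρ.flip.IsSimple := by
  refine ⟨h.1, fun W hinv hgr => ?_⟩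
  refine h.2 W ⟨?_, ?_, ?_, ?_⟩ hgr
  · intro m v hv
    have := hinv.1 (-m) v hv
    have h2 : ρ.flip.L (-m) v = -(ρ.L m v) := by
      show (-ρ.L (-(-m))) v = _
      rw [neg_neg]
      rfl
    rw [h2] at this
    have h3 : - -(ρ.L m v) ∈ W := W.neg_mem this
    rwa [neg_neg] at h3
  · intro n v hv
    have := hinv.2.1 (-n) v hv
    have h2 : ρ.flip.ψ (-n) v = ρ.ψ n v := by
      show ρ.ψ (-(-n)) v = _
      rw [neg_neg]
    rwa [h2] at this
  · intro v hv
    have := hinv.2.2.1 v hv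
    have h2 : ρ.flip.c v = -(ρ.c v) := rfl
    rw [h2] at this
    have h3 : - -(ρ.c v) ∈ W := W.neg_mem this
    rwa [neg_neg] at h3
  · exact hinv.2.2.2

lemma flip_isWeight (h : ρ.IsWeight) : ρ.flip.IsWeight := by
  constructor
  · intro α
    rw [flip_wt]
    refine Disjoint.mono_right ?_ (h.1 (-α))
    refine iSup_le fun β => iSup_le fun hβ => ?_
    rw [flip_wt]
    exact le_iSup₂ (f := fun γ (_ : γ ≠ -α) => ρ.wtSpace γ) (-β)
      (fun hEq => hβ (by rw [← neg_neg β, hEq, neg_neg]))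
  · refine eq_top_iff.2 (le_trans (le_of_eq h.2.symm) ?_)
    refine iSup_le fun γ => ?_
    have : ρ.wtSpace γ = ρ.flip.wtSpace (-γ) := by rw [flip_wt, neg_neg]
    rw [this]
    exact le_iSup _ (-γ)

lemma flip_isHC (h : ρ.IsHarishChandra) : ρ.flip.IsHarishChandra := by
  refine ⟨flip_isWeight h.1, fun α => ?_⟩
  rw [flip_wt]
  exact h.2 (-α)

lemma flip_HW_to_LW (h : ρ.flip.IsHighestWeight) (hw : ρ.IsWeight) : ρ.IsLowestWeight := by
  obtain ⟨_, α, hα⟩ := h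
  refine ⟨hw, -α, fun β hβ => ?_⟩
  have hne : ρ.flip.wtSpace (-β) ≠ ⊥ := by
    rw [flip_wt, neg_neg]
    exact hβ
  obtain ⟨n, hn⟩ := hα (-β) hne
  exact ⟨n, by linear_combination -hn⟩

end SMod
namespace SMod

variable {ρ : SMod}

/-- Parity decomposition of a weight vector within its weight space. -/
lemma wt_parity_decomp {γ : ℂ} {y : ρ.carrier} (hy : y ∈ ρ.wtSpace γ) :
    ∃ e o, e ∈ ρ.even ∧ o ∈ ρ.odd ∧ e ∈ ρ.wtSpace γ ∧ o ∈ ρ.wtSpace γ ∧ e + o = y := by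
  obtain ⟨e, o, he, ho, heo⟩ :=
    Submodule.codisjoint_iff_exists_add_eq.mp ρ.isCompl_even_odd.codisjoint y
  have h0 : ρ.L 0 y = γ • y := hy
  have hsplit : (ρ.L 0 e - γ • e) + (ρ.L 0 o - γ • o) = 0 := by
    have hh : ρ.L 0 e + ρ.L 0 o = γ • e + γ • o := by
      rw [← map_add, heo, ← smul_add, heo]
      exact h0
    rw [sub_add_sub_comm, hh, sub_self]
  obtain ⟨h1, h2⟩ := parity_zero (Submodule.sub_mem _ (ρ.L_maps_even 0 e he)
    (Submodule.smul_mem _ _ he)) (Submodule.sub_mem _ (ρ.L_maps_odd 0 o ho)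
    (Submodule.smul_mem _ _ ho)) hsplit
  exact ⟨e, o, he, ho, sub_eq_zero.1 h1, sub_eq_zero.1 h2, heo⟩

/-- The support of a simple module lies in a single coset `λ₀ + ℤ`. -/
lemma coset (hsimple : ρ.IsSimple) (hHC : ρ.IsHarishChandra) {l₀ : ℂ}
    (hl : ρ.wtSpace l₀ ≠ ⊥) :
    ∀ β : ℂ, (∀ n : ℤ, β ≠ l₀ + n) → ρ.wtSpace β = ⊥ := by
  classical
  set U := ⨆ n : ℤ, ρ.wtSpace (l₀ + n) with hUdef
  have hstab : ∀ (f : ρ.carrier →ₗ[ℂ] ρ.carrier) (d : ℤ),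
      (∀ (γ : ℂ) (x : ρ.carrier), x ∈ ρ.wtSpace γ → f x ∈ ρ.wtSpace (γ - (d : ℂ))) →
      ∀ x ∈ U, f x ∈ U := by
    intro f d hf x hx
    refine Submodule.iSup_induction (motive := fun y => f y ∈ U) _ hx ?_ (by simp) ?_
    · intro n y hy
      have h1 := hf _ _ hy
      have hmem : f y ∈ ρ.wtSpace (l₀ + ((n - d : ℤ) : ℂ)) := by
        convert h1 using 2
        push_cast
        ring
      exact Submodule.mem_iSup_of_mem (n - d) hmem
    · intro a b ha hb
      rw [map_add]
      exact U.add_mem ha hb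
  have hUinv : ρ.Invariant U := by
    refine ⟨fun m x hx => hstab (ρ.L m) m (fun γ x hx => ρ.wt_L m hx) x hx,
      fun n x hx => hstab (ρ.ψ n) n (fun γ x hx => ρ.wt_ψ n hx) x hx,
      fun x hx => hstab ρ.c 0 (fun γ x hx => by simpa using ρ.wt_c hx) x hx,
      fun x hx => hstab ρ.z 0 (fun γ x hx => by simpa using ρ.wt_z hx) x hx⟩
  have hUgr : ρ.Graded U := by
    refine le_antisymm ?_ (sup_le inf_le_left inf_le_left)
    intro x hx
    refine Submodule.iSup_induction
      (motive := fun y => y ∈ (U ⊓ ρ.even) ⊔ (U ⊓ ρ.odd)) _ hx ?_ (Submodule.zero_mem _) ?_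
    · intro n y hy
      obtain ⟨e, o, he, ho, hewt, howt, heo⟩ := ρ.wt_parity_decomp hy
      have heU : e ∈ U := Submodule.mem_iSup_of_mem n hewt
      have hoU : o ∈ U := Submodule.mem_iSup_of_mem n howt
      rw [← heo]
      exact Submodule.add_mem _ (Submodule.mem_sup_left (Submodule.mem_inf.2 ⟨heU, he⟩))
        (Submodule.mem_sup_right (Submodule.mem_inf.2 ⟨hoU, ho⟩))
    · intro a b ha hb
      exact Submodule.add_mem _ ha hb
  have hUne : U ≠ ⊥ := by
    intro hbot
    apply hl
    rw [eq_bot_iff]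
    intro x hx
    have : x ∈ U := Submodule.mem_iSup_of_mem 0 (by simpa using hx)
    rw [hbot] at this
    exact this
  have hUtop : U = ⊤ := (hsimple.2 U hUinv hUgr).resolve_left hUne
  intro β hβ
  have hle : ρ.wtSpace β ≤ ⨆ γ, ⨆ (_ : γ ≠ β), ρ.wtSpace γ := by
    calc ρ.wtSpace β ≤ ⊤ := le_top
    _ = U := hUtop.symm
    _ ≤ ⨆ γ, ⨆ (_ : γ ≠ β), ρ.wtSpace γ := by
        refine iSup_le fun n => ?_
        exact le_iSup₂ (f := fun γ (_ : γ ≠ β) => ρ.wtSpace γ) (l₀ + n)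
          (fun hEq => hβ n hEq.symm)
  exact (hHC.1.1 β).eq_bot_of_le hle

end SMod
namespace SMod

variable {ρ : SMod}

lemma dim_le {β τ₁ τ₂ : ℂ} {a b : ℤ} (h₁ : β - (a : ℂ) = τ₁) (h₂ : β - (b : ℂ) = τ₂)
    [FiniteDimensional ℂ (ρ.wtSpace τ₁)] [FiniteDimensional ℂ (ρ.wtSpace τ₂)]
    (hker : ∀ v, v ∈ ρ.wtSpace β → ρ.L a v = 0 → ρ.L b v = 0 → ρ.ψ a v = 0 →
      ρ.ψ b v = 0 → v = 0) :
    Module.finrank ℂ (ρ.wtSpace β) ≤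
      2 * (Module.finrank ℂ (ρ.wtSpace τ₁) + Module.finrank ℂ (ρ.wtSpace τ₂)) := by
  have m1 : ∀ v : ρ.wtSpace β, ρ.L a (v : ρ.carrier) ∈ ρ.wtSpace τ₁ := fun v =>
    h₁ ▸ ρ.wt_L a v.2
  have m2 : ∀ v : ρ.wtSpace β, ρ.L b (v : ρ.carrier) ∈ ρ.wtSpace τ₂ := fun v =>
    h₂ ▸ ρ.wt_L b v.2
  have m3 : ∀ v : ρ.wtSpace β, ρ.ψ a (v : ρ.carrier) ∈ ρ.wtSpace τ₁ := fun v =>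
    h₁ ▸ ρ.wt_ψ a v.2
  have m4 : ∀ v : ρ.wtSpace β, ρ.ψ b (v : ρ.carrier) ∈ ρ.wtSpace τ₂ := fun v =>
    h₂ ▸ ρ.wt_ψ b v.2
  set f1 : ρ.wtSpace β →ₗ[ℂ] ρ.wtSpace τ₁ :=
    LinearMap.codRestrict (ρ.wtSpace τ₁) ((ρ.L a).comp (ρ.wtSpace β).subtype) m1 with hf1
  set f2 : ρ.wtSpace β →ₗ[ℂ] ρ.wtSpace τ₂ :=
    LinearMap.codRestrict (ρ.wtSpace τ₂) ((ρ.L b).comp (ρ.wtSpace β).subtype) m2 with hf2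
  set f3 : ρ.wtSpace β →ₗ[ℂ] ρ.wtSpace τ₁ :=
    LinearMap.codRestrict (ρ.wtSpace τ₁) ((ρ.ψ a).comp (ρ.wtSpace β).subtype) m3 with hf3
  set f4 : ρ.wtSpace β →ₗ[ℂ] ρ.wtSpace τ₂ :=
    LinearMap.codRestrict (ρ.wtSpace τ₂) ((ρ.ψ b).comp (ρ.wtSpace β).subtype) m4 with hf4
  set F := (f1.prod f2).prod (f3.prod f4) with hF
  have hinj : Function.Injective F := by
    rw [← LinearMap.ker_eq_bot, eq_bot_iff]
    intro v hv
    rw [LinearMap.mem_ker] at hv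
    have e1 : ρ.L a (v : ρ.carrier) = 0 := by
      have := congrArg (fun t : (ρ.wtSpace τ₁ × ρ.wtSpace τ₂) ×
        (ρ.wtSpace τ₁ × ρ.wtSpace τ₂) => (t.1.1 : ρ.carrier)) hv
      exact this
    have e2 : ρ.L b (v : ρ.carrier) = 0 := by
      have := congrArg (fun t : (ρ.wtSpace τ₁ × ρ.wtSpace τ₂) ×
        (ρ.wtSpace τ₁ × ρ.wtSpace τ₂) => (t.1.2 : ρ.carrier)) hv
      exact this
    have e3 : ρ.ψ a (v : ρ.carrier) = 0 := by
      have := congrArg (fun t : (ρ.wtSpace τ₁ × ρ.wtSpace τ₂) ×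
        (ρ.wtSpace τ₁ × ρ.wtSpace τ₂) => (t.2.1 : ρ.carrier)) hv
      exact this
    have e4 : ρ.ψ b (v : ρ.carrier) = 0 := by
      have := congrArg (fun t : (ρ.wtSpace τ₁ × ρ.wtSpace τ₂) ×
        (ρ.wtSpace τ₁ × ρ.wtSpace τ₂) => (t.2.2 : ρ.carrier)) hv
      exact this
    have hv0 : (v : ρ.carrier) = 0 := hker v v.2 e1 e2 e3 e4
    rw [Submodule.mem_bot]
    exact Subtype.ext hv0
  have hstep : Module.finrank ℂ (ρ.wtSpace β) ≤
      Module.finrank ℂ ((ρ.wtSpace τ₁ × ρ.wtSpace τ₂) × (ρ.wtSpace τ₁ × ρ.wtSpace τ₂)) :=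
    LinearMap.finrank_le_finrank_of_injective hinj
  have heq : Module.finrank ℂ ((ρ.wtSpace τ₁ × ρ.wtSpace τ₂) × (ρ.wtSpace τ₁ × ρ.wtSpace τ₂))
      = 2 * (Module.finrank ℂ (ρ.wtSpace τ₁) + Module.finrank ℂ (ρ.wtSpace τ₂)) := by
    rw [Module.finrank_prod, Module.finrank_prod]
    ring
  rw [heq] at hstep
  exact hstep

theorem case_bounded (hsimple : ρ.IsSimple) (hHC : ρ.IsHarishChandra)
    (h1 : ¬∃ (K : ℤ) (v : ρ.carrier), v ≠ 0 ∧ ρ.Van 1 K v)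
    (h2 : ¬∃ (K : ℤ) (v : ρ.carrier), v ≠ 0 ∧ ρ.Van (-1) K v) : ρ.IsBounded := by
  classical
  haveI : ∀ α : ℂ, FiniteDimensional ℂ (ρ.wtSpace α) := hHC.2
  obtain ⟨x, hx0⟩ := hsimple.1
  obtain ⟨s, g, hg, hrep⟩ := exists_wt_rep hHC.1 x
  have hex : ∃ α ∈ s, g α ≠ 0 := by
    by_contra hcon
    push_neg at hcon
    exact hx0 (by rw [hrep]; exact Finset.sum_eq_zero hcon)
  obtain ⟨l₀, hls, hgl⟩ := hex
  have hl : ρ.wtSpace l₀ ≠ ⊥ := by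
    intro hbot
    apply hgl
    have hm := hg l₀ hls
    rw [hbot] at hm
    simpa using hm
  refine ⟨hHC.1, 2 * (Module.finrank ℂ (ρ.wtSpace (l₀ + 1)) + Module.finrank ℂ (ρ.wtSpace l₀))
    + 2 * (Module.finrank ℂ (ρ.wtSpace (l₀ - 1)) + Module.finrank ℂ (ρ.wtSpace l₀))
    + (Module.finrank ℂ (ρ.wtSpace l₀) + Module.finrank ℂ (ρ.wtSpace (l₀ + 1))
      + Module.finrank ℂ (ρ.wtSpace (l₀ - 1))), fun α => ⟨hHC.2 α, ?_⟩⟩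
  by_cases hcos : ∃ n : ℤ, α = l₀ + n
  · obtain ⟨n, rfl⟩ := hcos
    rcases le_or_gt 2 n with hn2 | hn2
    · -- n ≥ 2 : map down to l₀ + 1 and l₀ with positive modes n-1, n
      have hb := ρ.dim_le (β := l₀ + n) (a := n - 1) (b := n) (τ₁ := l₀ + 1) (τ₂ := l₀)
        (by push_cast; ring) (by push_cast; ring) ?_
      · omega
      · intro v hv hLa hLb hψa hψb
        by_contra hv0
        refine h1 ⟨(n.toNat : ℤ) ^ 2 + n.toNat, v, hv0, ?_⟩
        have hcast : (n.toNat : ℤ) = n := Int.toNat_of_nonneg (by omega)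
        refine ρ.van_of_four (ε := 1) (by norm_num) n.toNat (by omega) ?_ ?_ ?_ ?_
        · rw [one_mul, hcast]; exact hLa
        · rw [one_mul, hcast]; exact hLb
        · rw [one_mul, hcast]; exact hψa
        · rw [one_mul, hcast]; exact hψb
    · rcases le_or_gt n (-2) with hn3 | hn3
      · -- n ≤ -2 : map up to l₀ - 1 and l₀ with negative modes n+1, n
        have hb := ρ.dim_le (β := l₀ + n) (a := n + 1) (b := n) (τ₁ := l₀ - 1) (τ₂ := l₀)
          (by push_cast; ring) (by push_cast; ring) ?_
        · omega
        · intro v hv hLa hLb hψa hψb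
          by_contra hv0
          refine h2 ⟨((-n).toNat : ℤ) ^ 2 + (-n).toNat, v, hv0, ?_⟩
          have hcast : ((-n).toNat : ℤ) = -n := Int.toNat_of_nonneg (by omega)
          refine ρ.van_of_four (ε := -1) (by norm_num) (-n).toNat (by omega) ?_ ?_ ?_ ?_
          · rw [show (-1 : ℤ) * (((-n).toNat : ℤ) - 1) = n + 1 by omega]; exact hLa
          · rw [show (-1 : ℤ) * ((-n).toNat : ℤ) = n by omega]; exact hLb
          · rw [show (-1 : ℤ) * (((-n).toNat : ℤ) - 1) = n + 1 by omega]; exact hψa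
          · rw [show (-1 : ℤ) * ((-n).toNat : ℤ) = n by omega]; exact hψb
      · -- -1 ≤ n ≤ 1
        interval_cases n
        · rw [show l₀ + ((-1 : ℤ) : ℂ) = l₀ - 1 by push_cast; ring]
          omega
        · rw [show l₀ + ((0 : ℤ) : ℂ) = l₀ by push_cast; ring]
          omega
        · rw [show l₀ + ((1 : ℤ) : ℂ) = l₀ + 1 by push_cast; ring]
          omega
  · push_neg at hcos
    rw [ρ.coset hsimple hHC hl α hcos]
    simp

end SMod
/-- **Statement 14** (Lemma 5.1).  Every simple Harish-Chandra `S`-module is a highest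
weight module, a lowest weight module, or a bounded module. -/
theorem statement14 (ρ : SMod) (hsimple : ρ.IsSimple) (hHC : ρ.IsHarishChandra) :
    ρ.IsHighestWeight ∨ ρ.IsLowestWeight ∨ ρ.IsBounded := by
  classical
  by_cases h1 : ∃ (K : ℤ) (v : ρ.carrier), v ≠ 0 ∧ ρ.Van 1 K v
  · left
    obtain ⟨K, v, hv0, hv⟩ := h1
    exact ρ.case_smooth hsimple hHC ⟨K, v, hv0, SMod.van_one_iff.1 hv⟩
  · by_cases h2 : ∃ (K : ℤ) (v : ρ.carrier), v ≠ 0 ∧ ρ.Van (-1) K v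
    · right; left
      obtain ⟨K, v, hv0, hv⟩ := h2
      have hsm : ρ.flip.SmoothAt K v := by
        intro m hm
        obtain ⟨hL, hψ⟩ := hv m hm
        rw [show (-1 : ℤ) * m = -m by ring] at hL hψ
        constructor
        · show (-ρ.L (-m)) v = 0
          simp [hL]
        · show ρ.ψ (-m) v = 0
          exact hψ
      have hHW := SMod.case_smooth (ρ := ρ.flip) (SMod.flip_isSimple hsimple)
        (SMod.flip_isHC hHC) ⟨K, v, hv0, hsm⟩
      exact SMod.flip_HW_to_LW hHW hHC.1
    · right; right
      exact ρ.case_bounded hsimple hHC h1 h2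

end
end
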